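/- arXiv:2402.07308 — 9 statements merged into one kernel-verified Lean document; each statement's English description precedes it below -/
import Mathlib

section
/- Let B and Y be Banach spaces that are subspaces of a common vector space, and let X ⊂ B be a compactly gauged cone in B. Assume there is no sequence in B ∩ Y converging in Y to 0 and in B to some nonzero vector. Then for each η > 0 there exists c > 0 such that ‖u − v‖_B ≤ η([u]_X + [v]_X) + c·|u − v|_Y for all u, v ∈ X. -/
/-!
Normalising by `[u]_X + [v]_X` puts `u` and `v` in the gauge ball `K = {x ∈ X | [x]_X ≤ 1}`,
whose closure is compact, so it suffices to bound `‖s‖_B ≤ η + c |w|_Y` uniformly for `s`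
in the compact set `K̄ - K̄` with `s = w` in the ambient space. If no `c` works, some
`sₙ` with `‖sₙ‖ > η + n |wₙ|` has `wₙ → 0` (as `‖sₙ‖` is bounded) and a convergent
subsequence, whose limit must be `0` by the hypothesis on sequences yet has norm `≥ η`.
-/

open Filter Topology

theorem exists_norm_le_add_mul_norm_of_isCompact
    {B Y V : Type*} [NormedAddCommGroup B] [NormedAddCommGroup Y]
    (iB : B → V) (iY : Y → V)
    (hseq : ∀ (u : ℕ → B) (w : ℕ → Y) (b : B),
      (∀ n, iB (u n) = iY (w n)) → Tendsto w atTop (𝓝 0) → Tendsto u atTop (𝓝 b) → b = 0)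
    {S : Set B} (hS : IsCompact S) {η : ℝ} (hη : 0 < η) :
    ∃ c > 0, ∀ s ∈ S, ∀ w : Y, iB s = iY w → ‖s‖ ≤ η + c * ‖w‖ := by
  by_contra! hcon
  choose s hsS w hsw hlt using fun n : ℕ => hcon ((n : ℝ) + 1) (by positivity)
  obtain ⟨M, hM⟩ := isBounded_iff_forall_norm_le.1 hS.isBounded
  have hw_le : ∀ n : ℕ, ‖w n‖ ≤ M / ((n : ℝ) + 1) := fun n => by
    rw [le_div_iff₀ (by positivity)]
    linarith [hM _ (hsS n), hlt n]
  have hw : Tendsto w atTop (𝓝 0) := by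
    refine tendsto_zero_iff_norm_tendsto_zero.2 (squeeze_zero (fun _ => norm_nonneg _) hw_le ?_)
    exact tendsto_const_nhds.div_atTop
      (tendsto_atTop_add_const_right _ 1 tendsto_natCast_atTop_atTop)
  obtain ⟨b, -, φ, hφ, hsb⟩ := hS.tendsto_subseq hsS
  have hb : b = 0 := hseq (s ∘ φ) (w ∘ φ) b (fun n => hsw _) (hw.comp hφ.tendsto_atTop) hsb
  have hη_le : η ≤ ‖b‖ := ge_of_tendsto' hsb.norm fun n => by
    have := hlt (φ n)
    have : 0 ≤ ((φ n : ℝ) + 1) * ‖w (φ n)‖ := by positivity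
    simp only [Function.comp_apply]
    linarith
  rw [hb, norm_zero] at hη_le
  linarith

theorem inv_smul_mem_gaugeBall {B : Type*} [AddCommGroup B] [Module ℝ B]
    {X : Set B} (hcone : ∀ a : ℝ, 0 ≤ a → ∀ x ∈ X, a • x ∈ X)
    {g : B → ℝ} (hgh : ∀ a : ℝ, 0 ≤ a → ∀ x ∈ X, g (a • x) = a * g x)
    {x : B} (hx : x ∈ X) {d : ℝ} (hd : 0 < d) (hxd : g x ≤ d) :
    d⁻¹ • x ∈ {x ∈ X | g x ≤ 1} := by
  have hd' : 0 ≤ d⁻¹ := inv_nonneg.2 hd.le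
  refine ⟨hcone _ hd' x hx, ?_⟩
  rw [hgh _ hd' x hx, inv_mul_le_iff₀ hd, mul_one]
  exact hxd

theorem cone_ehrling_general
    {B Y V : Type*} [NormedAddCommGroup B] [NormedSpace ℝ B] [CompleteSpace B]
    [NormedAddCommGroup Y] [NormedSpace ℝ Y]
    [AddCommGroup V] [Module ℝ V]
    (iB : B →ₗ[ℝ] V) (iY : Y →ₗ[ℝ] V)
    (hseq : ∀ (u : ℕ → B) (w : ℕ → Y) (b : B),
      (∀ n, iB (u n) = iY (w n)) →
      Filter.Tendsto w Filter.atTop (nhds 0) →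
      Filter.Tendsto u Filter.atTop (nhds b) → b = 0)
    (X : Set B)
    (hcone : ∀ a : ℝ, 0 ≤ a → ∀ x ∈ X, a • x ∈ X)
    (g : B → ℝ)
    (hg0 : ∀ x ∈ X, 0 ≤ g x)
    (hgh : ∀ a : ℝ, 0 ≤ a → ∀ x ∈ X, g (a • x) = a * g x)
    (hgz : ∀ x ∈ X, (g x = 0 ↔ x = 0))
    (hcpt : TotallyBounded {x ∈ X | g x ≤ 1}) :
    ∀ η > 0, ∃ c > 0, ∀ u ∈ X, ∀ v ∈ X, ∀ yu yv : Y,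
      iY yu = iB u → iY yv = iB v →
      ‖u - v‖ ≤ η * (g u + g v) + c * ‖yu - yv‖ := by
  intro η hη
  set K := closure {x ∈ X | g x ≤ 1}
  have hK : IsCompact K := hcpt.closure.isCompact_of_isClosed isClosed_closure
  obtain ⟨c, hc, hbound⟩ := exists_norm_le_add_mul_norm_of_isCompact iB iY hseq
    ((hK.prod hK).image continuous_sub) hη
  refine ⟨c, hc, fun u hu v hv yu yv hyu hyv => ?_⟩
  have hgu := hg0 u hu
  have hgv := hg0 v hv
  rcases (add_nonneg hgu hgv).eq_or_lt with hd | hd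
  · obtain rfl : u = 0 := (hgz u hu).1 (by linarith)
    obtain rfl : v = 0 := (hgz v hv).1 (by linarith)
    rw [sub_self, norm_zero, ← hd, mul_zero, zero_add]
    positivity
  set d := g u + g v
  have hmem : d⁻¹ • u - d⁻¹ • v ∈ (fun p : B × B => p.1 - p.2) '' K ×ˢ K :=
    ⟨(d⁻¹ • u, d⁻¹ • v),
      ⟨subset_closure (inv_smul_mem_gaugeBall hcone hgh hu hd (by linarith)),
        subset_closure (inv_smul_mem_gaugeBall hcone hgh hv hd (by linarith))⟩, rfl⟩
  have h := hbound _ hmem (d⁻¹ • (yu - yv)) <| by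
    simp only [map_sub, map_smul, hyu, hyv, smul_sub]
  rw [← smul_sub, norm_smul, norm_smul, Real.norm_of_nonneg (inv_nonneg.2 hd.le)] at h
  calc ‖u - v‖ = d * (d⁻¹ * ‖u - v‖) := (mul_inv_cancel_left₀ hd.ne' _).symm
    _ ≤ d * (η + c * (d⁻¹ * ‖yu - yv‖)) := mul_le_mul_of_nonneg_left h hd.le
    _ = η * d + c * ‖yu - yv‖ := by field_simp

/-- Cone version of Ehrling's lemma (Chen–Jüngel–Liu, Lemma 4): `B` and `Y` are Banach
spaces realized as subspaces of a common vector space `V` via injective linear maps,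
`X ⊂ B` is a compactly gauged cone, and no sequence in `B ∩ Y` converges to `0` in `Y`
and to a nonzero vector in `B`. -/
theorem cone_ehrling
    {B Y V : Type*} [NormedAddCommGroup B] [NormedSpace ℝ B] [CompleteSpace B]
    [NormedAddCommGroup Y] [NormedSpace ℝ Y] [CompleteSpace Y]
    [AddCommGroup V] [Module ℝ V]
    (iB : B →ₗ[ℝ] V) (iY : Y →ₗ[ℝ] V)
    (hiB : Function.Injective iB) (hiY : Function.Injective iY)
    (hseq : ∀ (u : ℕ → B) (w : ℕ → Y) (b : B),
      (∀ n, iB (u n) = iY (w n)) →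
      Filter.Tendsto w Filter.atTop (nhds 0) →
      Filter.Tendsto u Filter.atTop (nhds b) → b = 0)
    (X : Set B)
    (hcone : ∀ a : ℝ, 0 ≤ a → ∀ x ∈ X, a • x ∈ X)
    (g : B → ℝ)
    (hg0 : ∀ x ∈ X, 0 ≤ g x)
    (hgh : ∀ a : ℝ, 0 ≤ a → ∀ x ∈ X, g (a • x) = a * g x)
    (hgz : ∀ x ∈ X, (g x = 0 ↔ x = 0))
    (hcpt : TotallyBounded {x ∈ X | g x ≤ 1}) :
    ∀ η > 0, ∃ c > 0, ∀ u ∈ X, ∀ v ∈ X, ∀ yu yv : Y,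
      iY yu = iB u → iY yv = iB v →
      ‖u - v‖ ≤ η * (g u + g v) + c * ‖yu - yv‖ :=
  cone_ehrling_general iB iY hseq X hcone g hg0 hgh hgz hcpt
end

section
/- Let B and Y be Banach spaces subspaces of a common vector space, with the property that no sequence in B ∩ Y converges in Y to 0 and in B to a nonzero vector. Then every nonzero x ∈ B has a neighborhood U in B such that the Y-norm has a positive lower bound on U ∩ Y; consequently, for any compact set K ⊂ B \ {0}, the Y-norm has a positive lower bound on K ∩ Y. -/
/-!
The sequence condition says exactly that no point `(0, x)` with `x ≠ 0` lies in the
(sequential, hence topological) closure of `{(y, b) | iY y = iB b}` in `Y × B`. A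
neighbourhood of `(0, x)` avoiding this set contains a box `ball 0 m × U`, which is the
local lower bound; for compact `K` the tube lemma makes `m` uniform along `{0} × K`.
-/

open Filter Topology

section LowerBound

variable {X Y : Type*} [TopologicalSpace X] [SeminormedAddCommGroup Y] {R : Y → X → Prop}

theorem exists_nhds_forall_le_norm_of_eventually {x : X}
    (h : ∀ᶠ p in 𝓝 ((0 : Y), x), ¬R p.1 p.2) :
    ∃ U ∈ 𝓝 x, ∃ m > (0 : ℝ), ∀ b ∈ U, ∀ y, R y b → m ≤ ‖y‖ := by
  rw [nhds_prod_eq, Metric.eventually_nhds_prod_iff] at h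
  obtain ⟨m, hm, U, hU, hR⟩ := h
  refine ⟨{b | U b}, hU, m, hm, fun b hb y hy => ?_⟩
  by_contra! hlt
  exact hR (by rwa [dist_zero_right]) hb hy

theorem IsCompact.exists_forall_le_norm_of_eventually {K : Set X} (hK : IsCompact K)
    (h : ∀ x ∈ K, ∀ᶠ p in 𝓝 ((0 : Y), x), ¬R p.1 p.2) :
    ∃ m > (0 : ℝ), ∀ b ∈ K, ∀ y, R y b → m ≤ ‖y‖ := by
  obtain ⟨m, hm, hR⟩ := Metric.eventually_nhds_iff.1
    (hK.eventually_forall_of_forall_eventually (P := fun y b => ¬R y b) h)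
  refine ⟨m, hm, fun b hb y hy => ?_⟩
  by_contra! hlt
  exact hR (by rwa [dist_zero_right]) b hb hy

end LowerBound

theorem eventually_not_of_forall_seq_tendsto {X Y : Type*} [TopologicalSpace X]
    [TopologicalSpace Y] [FrechetUrysohnSpace (Y × X)] {R : Y → X → Prop} {y : Y} {x : X}
    (h : ∀ (w : ℕ → Y) (u : ℕ → X), (∀ n, R (w n) (u n)) →
      Tendsto w atTop (𝓝 y) → Tendsto u atTop (𝓝 x) → False) :
    ∀ᶠ p in 𝓝 (y, x), ¬R p.1 p.2 := by
  refine not_frequently.1 fun hfreq => ?_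
  obtain ⟨p, hpR, hp⟩ := mem_closure_iff_seq_limit.1 (mem_closure_iff_frequently.2 hfreq)
  exact h (Prod.fst ∘ p) (Prod.snd ∘ p) hpR hp.fst_nhds hp.snd_nhds

theorem sequence_condition_reformulation_general
    {B Y V : Type*} [NormedAddCommGroup B] [NormedSpace ℝ B]
    [NormedAddCommGroup Y] [NormedSpace ℝ Y]
    [AddCommGroup V] [Module ℝ V]
    (iB : B →ₗ[ℝ] V) (iY : Y →ₗ[ℝ] V)
    (hseq : ∀ (u : ℕ → B) (w : ℕ → Y) (b : B),
      (∀ n, iB (u n) = iY (w n)) →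
      Filter.Tendsto w Filter.atTop (nhds 0) →
      Filter.Tendsto u Filter.atTop (nhds b) → b = 0) :
    (∀ x : B, x ≠ 0 → ∃ U ∈ nhds x, ∃ m > (0:ℝ),
      ∀ b ∈ U, ∀ y : Y, iY y = iB b → m ≤ ‖y‖) ∧
    (∀ K : Set B, IsCompact K → (0:B) ∉ K → ∃ m > (0:ℝ),
      ∀ b ∈ K, ∀ y : Y, iY y = iB b → m ≤ ‖y‖) := by
  have off_graph : ∀ x : B, x ≠ 0 → ∀ᶠ p in 𝓝 ((0 : Y), x), ¬iY p.1 = iB p.2 :=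
    fun x hx => eventually_not_of_forall_seq_tendsto (R := fun y b => iY y = iB b)
      fun w u hwu hw hu => hx (hseq u w x (fun n => (hwu n).symm) hw hu)
  exact ⟨fun x hx => exists_nhds_forall_le_norm_of_eventually (off_graph x hx),
    fun K hK hK0 => hK.exists_forall_le_norm_of_eventually fun x hx =>
      off_graph x (ne_of_mem_of_not_mem hx hK0)⟩

/-- Reformulation of the sequence condition: every nonzero `x ∈ B` has a neighborhood `U`
on which the `Y`-norm has a positive lower bound on `U ∩ Y`; consequently the same holds
on `K ∩ Y` for every compact `K ⊂ B \ {0}`. -/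
theorem sequence_condition_reformulation
    {B Y V : Type*} [NormedAddCommGroup B] [NormedSpace ℝ B] [CompleteSpace B]
    [NormedAddCommGroup Y] [NormedSpace ℝ Y] [CompleteSpace Y]
    [AddCommGroup V] [Module ℝ V]
    (iB : B →ₗ[ℝ] V) (iY : Y →ₗ[ℝ] V)
    (hiB : Function.Injective iB) (hiY : Function.Injective iY)
    (hseq : ∀ (u : ℕ → B) (w : ℕ → Y) (b : B),
      (∀ n, iB (u n) = iY (w n)) →
      Filter.Tendsto w Filter.atTop (nhds 0) →
      Filter.Tendsto u Filter.atTop (nhds b) → b = 0) :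
    (∀ x : B, x ≠ 0 → ∃ U ∈ nhds x, ∃ m > (0:ℝ),
      ∀ b ∈ U, ∀ y : Y, iY y = iB b → m ≤ ‖y‖) ∧
    (∀ K : Set B, IsCompact K → (0:B) ∉ K → ∃ m > (0:ℝ),
      ∀ b ∈ K, ∀ y : Y, iY y = iB b → m ≤ ‖y‖) :=
  sequence_condition_reformulation_general iB iY hseq
end

section
/- Let B be a Banach space, 1 ≤ p < ∞, and F ⊂ L^p(ℝ^d; B) be bounded in norm, L^p-equivanishing, and L^p-equicontinuous. Then F is uniformly L^p-integrable. -/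
open MeasureTheory Set
open scoped ENNReal NNReal

/-- A bounded, `Lᵖ`-equivanishing and `Lᵖ`-equicontinuous family `F ⊂ Lᵖ(ℝᵈ; B)`
is uniformly `Lᵖ`-integrable. -/
theorem uniformly_lp_integrable_of_bounded_equivanishing_equicontinuous
    {d : ℕ} {B : Type*} [NormedAddCommGroup B] [NormedSpace ℝ B] [CompleteSpace B]
    (p : ℝ) (hp : 1 ≤ p) (F : Set (EuclideanSpace ℝ (Fin d) → B))
    (hF : ∀ f ∈ F, MemLp f (ENNReal.ofReal p) volume)
    (hbdd : ∃ M : ℝ, ∀ f ∈ F, eLpNorm f (ENNReal.ofReal p) volume ≤ ENNReal.ofReal M)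
    (hvan : ∀ ε > (0:ℝ), ∃ r : ℝ, ∀ f ∈ F,
      eLpNorm f (ENNReal.ofReal p) (volume.restrict {x | r < ‖x‖}) < ENNReal.ofReal ε)
    (hcont : ∀ ε > (0:ℝ), ∃ δ > (0:ℝ), ∀ h : EuclideanSpace ℝ (Fin d), ‖h‖ < δ →
      ∀ f ∈ F, eLpNorm (fun x => f (x + h) - f x) (ENNReal.ofReal p) volume
        < ENNReal.ofReal ε) :
    ∀ ε > (0:ℝ), ∃ r > (0:ℝ), ∀ f ∈ F,
      ∫⁻ x in {x : EuclideanSpace ℝ (Fin d) | r < ‖f x‖}, (‖f x‖₊ : ℝ≥0∞) ^ p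
        < ENNReal.ofReal ε := by
  classical
  obtain ⟨M, hM⟩ := hbdd
  intro ε hε
  set E := EuclideanSpace ℝ (Fin d) with hEdef
  have hp0 : (0:ℝ) < p := lt_of_lt_of_le one_pos hp
  set q : ℝ≥0∞ := ENNReal.ofReal p with hqdef
  have hq0 : q ≠ 0 := by simp [hqdef, ENNReal.ofReal_eq_zero, not_le, hp0]
  have hqt : q ≠ ⊤ := ENNReal.ofReal_ne_top
  have hqr : q.toReal = p := ENNReal.toReal_ofReal hp0.le
  -- choose ε'
  have h2p : (0:ℝ) < 2 ^ (p+1) := Real.rpow_pos_of_pos two_pos _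
  set ε' : ℝ := min 1 (ε / (4 * 2 ^ (p+1))) with hε'def
  have hε'0 : 0 < ε' := lt_min one_pos (by positivity)
  have hε'1 : ε' ≤ 1 := min_le_left _ _
  obtain ⟨δ, hδ0, hδ⟩ := hcont ε' hε'0
  set V : ℝ≥0∞ := volume (Metric.ball (0:E) δ) with hVdef
  have hV0 : V ≠ 0 := (Metric.measure_ball_pos _ _ hδ0).ne'
  have hVt : V ≠ ⊤ := measure_ball_lt_top.ne
  set v : ℝ := V.toReal with hvdef
  have hv0 : 0 < v := ENNReal.toReal_pos hV0 hVt
  -- the constant C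
  have h2t : ((2:ℝ≥0∞)) ^ p ≠ ⊤ := by
    exact (ENNReal.rpow_lt_top_of_nonneg hp0.le (by norm_num)).ne
  have h2n0 : ((2:ℝ≥0∞)) ^ p ≠ 0 := (ENNReal.rpow_pos (by norm_num) (by norm_num)).ne'
  set C : ℝ≥0∞ := (V / 2) * (((2:ℝ≥0∞)) ^ p)⁻¹ with hCdef
  have hC0 : C ≠ 0 := by
    apply mul_ne_zero
    · simp [ENNReal.div_eq_zero_iff, hV0]
    · simp [ENNReal.inv_ne_zero, h2t]
  have hCt : C ≠ ⊤ := by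
    apply ENNReal.mul_ne_top
    · exact (ENNReal.div_lt_top hVt (by norm_num)).ne
    · simp [ENNReal.inv_ne_top, h2n0]
  -- choose s
  set M' : ℝ := max M 0 with hM'def
  have hM'0 : 0 ≤ M' := le_max_right _ _
  set s : ℝ := (2 * M' ^ p / v) ^ (1/p) + 1 with hsdef
  have hbase0 : (0:ℝ) ≤ 2 * M' ^ p / v := by positivity
  have hs1 : (1:ℝ) ≤ s := le_add_of_nonneg_left (Real.rpow_nonneg hbase0 _)
  have hs0 : (0:ℝ) < s := lt_of_lt_of_le one_pos hs1
  have hsp : 2 * M' ^ p / v ≤ s ^ p := by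
    calc 2 * M' ^ p / v = ((2 * M' ^ p / v) ^ (1/p)) ^ p := by
          rw [← Real.rpow_mul hbase0, one_div, inv_mul_cancel₀ hp0.ne', Real.rpow_one]
      _ ≤ s ^ p := Real.rpow_le_rpow (Real.rpow_nonneg hbase0 _)
          (le_add_of_nonneg_right one_pos.le) hp0.le
  refine ⟨2 * s, by positivity, ?_⟩
  intro f hf
  have hmem := hF f hf
  set g : E → B := hmem.1.mk f with hgdef
  have hgm : StronglyMeasurable g := hmem.1.stronglyMeasurable_mk
  have hfg : f =ᵐ[volume] g := hmem.1.ae_eq_mk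
  have hgm1 : Measurable fun y : E => ((‖g y‖₊ : ℝ≥0∞)) ^ p := hgm.enorm.pow_const p
  -- transfer goal from f to g
  set S : Set E := {x : E | 2*s < ‖g x‖} with hSdef
  have hSm : MeasurableSet S := measurableSet_lt measurable_const hgm.norm.measurable
  have hSet : {x : E | 2*s < ‖f x‖} =ᵐ[volume] S := by
    rw [Filter.eventuallyEq_set]
    filter_upwards [hfg] with x hx
    simp [hSdef, Set.mem_setOf_eq, show f x = g x from hx]
  have hgoal : ∫⁻ x in {x : E | 2*s < ‖f x‖}, (‖f x‖₊:ℝ≥0∞)^p ∂volume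
      = ∫⁻ x in S, (‖g x‖₊:ℝ≥0∞)^p ∂volume := by
    rw [Measure.restrict_congr_set hSet]
    exact lintegral_congr_ae (ae_restrict_of_ae (hfg.mono fun x hx => by simp only [hx]))
  -- the Lᵖ integral of g
  have hIg : ∫⁻ x, (‖g x‖₊:ℝ≥0∞)^p ∂volume = (eLpNorm g q volume) ^ p := by
    rw [eLpNorm_eq_lintegral_rpow_enorm_toReal hq0 hqt, hqr, ← ENNReal.rpow_mul,
      one_div, inv_mul_cancel₀ hp0.ne', ENNReal.rpow_one]
    rfl
  have hIle : ∫⁻ x, (‖g x‖₊:ℝ≥0∞)^p ∂volume ≤ ENNReal.ofReal (M' ^ p) := by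
    rw [hIg, ← ENNReal.ofReal_rpow_of_nonneg hM'0 hp0.le]
    refine ENNReal.rpow_le_rpow ?_ hp0.le
    calc eLpNorm g q volume = eLpNorm f q volume := eLpNorm_congr_ae hfg.symm
      _ ≤ ENNReal.ofReal M := hM f hf
      _ ≤ ENNReal.ofReal M' := ENNReal.ofReal_le_ofReal (le_max_left _ _)
  -- Chebyshev
  set T : Set E := {y : E | ENNReal.ofReal (s ^ p) ≤ (‖g y‖₊:ℝ≥0∞)^p} with hTdef
  have hTmeas : MeasurableSet T := hgm1 measurableSet_Ici
  have hsp0 : ENNReal.ofReal (s^p) ≠ 0 := by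
    simp only [ne_eq, ENNReal.ofReal_eq_zero, not_le]
    positivity
  have hcheb : volume T ≤ V / 2 := by
    have h1 : ENNReal.ofReal (s^p) * volume T ≤ ∫⁻ x, (‖g x‖₊:ℝ≥0∞)^p ∂volume :=
      mul_meas_ge_le_lintegral₀ hgm1.aemeasurable _
    have hreal : M' ^ p ≤ s ^ p * (v/2) := by
      have h3 := (div_le_iff₀ hv0).1 hsp
      nlinarith
    have h2 : ENNReal.ofReal (M'^p) ≤ ENNReal.ofReal (s^p) * (V/2) := by
      calc ENNReal.ofReal (M'^p) ≤ ENNReal.ofReal (s^p * (v/2)) := ENNReal.ofReal_le_ofReal hreal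
        _ = ENNReal.ofReal (s^p) * ENNReal.ofReal (v/2) := ENNReal.ofReal_mul (by positivity)
        _ = ENNReal.ofReal (s^p) * (V/2) := by
            rw [ENNReal.ofReal_div_of_pos two_pos, hvdef, ENNReal.ofReal_toReal hVt]
            norm_num
    exact (ENNReal.mul_le_mul_iff_right hsp0 ENNReal.ofReal_ne_top).1 (h1.trans (hIle.trans h2))
  -- pointwise/inner estimate
  have key : ∀ x : E, x ∈ S →
      C * (‖g x‖₊:ℝ≥0∞)^p ≤ ∫⁻ h in Metric.ball (0:E) δ, (‖g (x+h) - g x‖₊:ℝ≥0∞)^p ∂volume := by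
    intro x hx
    have hx' : 2*s < ‖g x‖ := hx
    set Bad : Set E := (fun h : E => x + h) ⁻¹' T with hBaddef
    have hBadm : MeasurableSet Bad := (measurable_const_add x) hTmeas
    have hBadvol : volume Bad = volume T :=
      (measurePreserving_add_left volume x).measure_preimage hTmeas.nullMeasurableSet
    set G : Set E := Metric.ball (0:E) δ \ Bad with hGdef
    have hGvol : V / 2 ≤ volume G := by
      have hsub : Metric.ball (0:E) δ ⊆ G ∪ Bad := fun h hh => by
        by_cases hb : h ∈ Bad
        · exact Or.inr hb
        · exact Or.inl ⟨hh, hb⟩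
      have h2 : V ≤ volume G + V/2 :=
        ((measure_mono hsub).trans (measure_union_le _ _)).trans
          (add_le_add_right (hBadvol ▸ hcheb) _)
      have h3 := tsub_le_iff_right.2 h2
      rwa [ENNReal.sub_half hVt] at h3
    have hpt : ∀ h ∈ G, ((‖g x‖₊ : ℝ≥0∞)/2) ^ p ≤ ((‖g (x+h) - g x‖₊ : ℝ≥0∞)) ^ p := by
      intro h hh
      obtain ⟨hball, hnb⟩ := hh
      have hsmall : ‖g (x+h)‖ < s := by
        by_contra hc
        push_neg at hc
        refine hnb ?_
        show ENNReal.ofReal (s^p) ≤ (‖g (x+h)‖₊:ℝ≥0∞)^p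
        rw [← ENNReal.ofReal_rpow_of_nonneg hs0.le hp0.le, ← (ofReal_norm (g (x+h))).trans (enorm_eq_nnnorm _)]
        exact ENNReal.rpow_le_rpow (ENNReal.ofReal_le_ofReal hc) hp0.le
      have hnorm : ‖g x‖/2 ≤ ‖g (x+h) - g x‖ := by
        have h1 : ‖g x‖ - ‖g (x+h)‖ ≤ ‖g (x+h) - g x‖ :=
          (norm_sub_norm_le (g x) (g (x+h))).trans_eq (norm_sub_rev _ _)
        linarith
      refine ENNReal.rpow_le_rpow ?_ hp0.le
      have h2 : ENNReal.ofReal (‖g x‖/2) ≤ ENNReal.ofReal ‖g (x+h) - g x‖ :=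
        ENNReal.ofReal_le_ofReal hnorm
      rw [ENNReal.ofReal_div_of_pos two_pos, ofReal_norm, ofReal_norm] at h2
      simpa [enorm_eq_nnnorm] using h2
    have hFm : Measurable fun h : E => ((‖g (x+h) - g x‖₊ : ℝ≥0∞)) ^ p :=
      (((hgm.comp_measurable (measurable_const_add x)).sub stronglyMeasurable_const).enorm).pow_const p
    calc C * (‖g x‖₊:ℝ≥0∞)^p = ((‖g x‖₊:ℝ≥0∞)/2)^p * (V/2) := by
          rw [ENNReal.div_rpow_of_nonneg _ _ hp0.le, hCdef]
          simp only [div_eq_mul_inv]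
          ring_nf
      _ ≤ ((‖g x‖₊:ℝ≥0∞)/2)^p * volume G := mul_le_mul_right hGvol _
      _ = ∫⁻ _ in G, ((‖g x‖₊:ℝ≥0∞)/2)^p ∂volume := (setLIntegral_const _ _).symm
      _ ≤ ∫⁻ h in G, ((‖g (x+h) - g x‖₊ : ℝ≥0∞)) ^ p ∂volume := setLIntegral_mono hFm hpt
      _ ≤ ∫⁻ h in Metric.ball (0:E) δ, ((‖g (x+h) - g x‖₊ : ℝ≥0∞)) ^ p ∂volume :=
          lintegral_mono_set diff_subset
  -- product measurability
  have hprodm : Measurable fun z : E × E => ((‖g (z.1 + z.2) - g z.1‖₊ : ℝ≥0∞)) ^ p := by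
    have h1 : StronglyMeasurable fun z : E × E => g (z.1 + z.2) :=
      hgm.comp_measurable (measurable_fst.add measurable_snd)
    have h2 : StronglyMeasurable fun z : E × E => g z.1 := hgm.comp_measurable measurable_fst
    exact ((h1.sub h2).enorm).pow_const p
  have houter : Measurable fun x : E =>
      ∫⁻ h in Metric.ball (0:E) δ, ((‖g (x+h) - g x‖₊ : ℝ≥0∞)) ^ p ∂volume :=
    hprodm.lintegral_prod_right'
  -- main chain
  have main : C * ∫⁻ x in S, (‖g x‖₊:ℝ≥0∞)^p ∂volume ≤ V * ENNReal.ofReal (ε' ^ p) := by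
    calc C * ∫⁻ x in S, (‖g x‖₊:ℝ≥0∞)^p ∂volume
        = ∫⁻ x in S, C * (‖g x‖₊:ℝ≥0∞)^p ∂volume := (lintegral_const_mul' _ _ hCt).symm
      _ ≤ ∫⁻ x in S, (∫⁻ h in Metric.ball (0:E) δ, ((‖g (x+h) - g x‖₊ : ℝ≥0∞)) ^ p ∂volume) ∂volume :=
          setLIntegral_mono houter key
      _ ≤ ∫⁻ x, (∫⁻ h in Metric.ball (0:E) δ, ((‖g (x+h) - g x‖₊ : ℝ≥0∞)) ^ p ∂volume) ∂volume :=
          setLIntegral_le_lintegral _ _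
      _ = ∫⁻ h in Metric.ball (0:E) δ, (∫⁻ x, ((‖g (x+h) - g x‖₊ : ℝ≥0∞)) ^ p ∂volume) ∂volume :=
          lintegral_lintegral_swap hprodm.aemeasurable
      _ ≤ ∫⁻ _ in Metric.ball (0:E) δ, ENNReal.ofReal (ε' ^ p) ∂volume := by
          refine setLIntegral_mono measurable_const ?_
          intro h hh
          have hhδ : ‖h‖ < δ := by simpa [mem_ball_zero_iff] using hh
          have hcong : eLpNorm (fun x => g (x+h) - g x) q volume
              = eLpNorm (fun x => f (x+h) - f x) q volume := by
            refine eLpNorm_congr_ae ?_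
            have htr : (fun x : E => g (x+h)) =ᵐ[volume] (fun x : E => f (x+h)) :=
              (measurePreserving_add_right volume h).quasiMeasurePreserving.ae_eq_comp hfg.symm
            filter_upwards [hfg, htr] with x h1 h2
            simp [show f x = g x from h1, h2]
          have hlt : eLpNorm (fun x => g (x+h) - g x) q volume ≤ ENNReal.ofReal ε' := by
            rw [hcong]; exact (hδ h hhδ f hf).le
          have heq : ∫⁻ x, (‖g (x+h) - g x‖₊:ℝ≥0∞)^p ∂volume
              = (eLpNorm (fun x => g (x+h) - g x) q volume)^p := by
            rw [eLpNorm_eq_lintegral_rpow_enorm_toReal hq0 hqt, hqr, ← ENNReal.rpow_mul,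
              one_div, inv_mul_cancel₀ hp0.ne', ENNReal.rpow_one]
            rfl
          rw [heq, ← ENNReal.ofReal_rpow_of_nonneg hε'0.le hp0.le]
          exact ENNReal.rpow_le_rpow hlt hp0.le
      _ = ENNReal.ofReal (ε' ^ p) * V := setLIntegral_const _ _
      _ = V * ENNReal.ofReal (ε' ^ p) := mul_comm _ _
  -- numerical comparison
  have hCV : C * (((2:ℝ≥0∞))^p * 2) = V := by
    rw [hCdef, div_eq_mul_inv]
    calc V * 2⁻¹ * ((2:ℝ≥0∞)^p)⁻¹ * ((2:ℝ≥0∞)^p * 2)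
        = V * (((2:ℝ≥0∞)^p)⁻¹ * (2:ℝ≥0∞)^p) * (2⁻¹ * 2) := by ring_nf
      _ = V := by
          rw [ENNReal.inv_mul_cancel h2n0 h2t,
            ENNReal.inv_mul_cancel (by norm_num) (by norm_num), mul_one, mul_one]
  have hfinal : V * ENNReal.ofReal (ε' ^ p) < C * ENNReal.ofReal ε := by
    have step : ENNReal.ofReal (ε' ^ p) * (((2:ℝ≥0∞))^p * 2) < ENNReal.ofReal ε := by
      have h2e : (((2:ℝ≥0∞))^p * 2) = ENNReal.ofReal (2 ^ p * 2) := by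
        rw [ENNReal.ofReal_mul (by positivity), ← ENNReal.ofReal_rpow_of_pos two_pos]
        norm_num
      rw [h2e, ← ENNReal.ofReal_mul (by positivity)]
      refine (ENNReal.ofReal_lt_ofReal_iff hε).2 ?_
      have h1 : ε' ^ p ≤ ε' := by
        calc ε' ^ p ≤ ε' ^ (1:ℝ) := Real.rpow_le_rpow_of_exponent_ge hε'0 hε'1 hp
          _ = ε' := Real.rpow_one _
      have h2 : ε' ≤ ε / (4 * 2 ^ (p+1)) := min_le_right _ _
      have h3 : (2:ℝ) ^ (p+1) = 2 ^ p * 2 := by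
        rw [Real.rpow_add two_pos, Real.rpow_one]
      have h4 : (0:ℝ) < 2 ^ p := Real.rpow_pos_of_pos two_pos _
      have h5 : ε' * (2 ^ p * 2) ≤ ε / 4 := by
        rw [← h3]
        calc ε' * 2 ^ (p+1) ≤ (ε / (4 * 2 ^ (p+1))) * 2 ^ (p+1) :=
              mul_le_mul_of_nonneg_right h2 h2p.le
          _ = ε / 4 := by field_simp
      have h6 : ε' ^ p * (2 ^ p * 2) ≤ ε' * (2 ^ p * 2) :=
        mul_le_mul_of_nonneg_right h1 (by positivity)
      linarith
    calc V * ENNReal.ofReal (ε' ^ p) = C * (ENNReal.ofReal (ε' ^ p) * (((2:ℝ≥0∞))^p * 2)) := by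
          rw [← mul_assoc, mul_comm C (ENNReal.ofReal (ε' ^ p)), mul_assoc, hCV, mul_comm]
      _ < C * ENNReal.ofReal ε := by
          exact (ENNReal.mul_lt_mul_iff_right hC0 hCt).2 step
  -- conclude
  have hlt : ∫⁻ x in S, (‖g x‖₊:ℝ≥0∞)^p ∂volume < ENNReal.ofReal ε :=
    (ENNReal.mul_lt_mul_iff_right hC0 hCt).1 (lt_of_le_of_lt main hfinal)
  rw [hgoal]
  exact hlt
end

section
/- Let F ⊂ L^p(ℝ^d; B) with 1 ≤ p < ∞. If F is bounded, L^p-equivanishing, and L^p-equicontinuous, then the family of real-valued functions ‖F‖ = {x ↦ ‖f(x)‖ : f ∈ F} is totally bounded in L^p(ℝ^d; ℝ). -/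
open MeasureTheory Set
open scoped ENNReal NNReal

theorem eLpNorm_eq_lintegral_rpow_nnnorm {α E : Type*} [MeasurableSpace α]
    [NormedAddCommGroup E] {μ : Measure α} {p : ℝ≥0∞} (hp_ne_zero : p ≠ 0) (hp_ne_top : p ≠ ∞)
    {f : α → E} :
    eLpNorm f p μ = (∫⁻ x, ((‖f x‖₊ : ℝ≥0∞)) ^ p.toReal ∂μ) ^ (1 / p.toReal) := by
  rw [eLpNorm_eq_lintegral_rpow_enorm_toReal hp_ne_zero hp_ne_top]; rfl

theorem eLpNorm_one_eq_lintegral_nnnorm {α E : Type*} [MeasurableSpace α]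
    [NormedAddCommGroup E] {μ : Measure α} {f : α → E} :
    eLpNorm f 1 μ = ∫⁻ x, ((‖f x‖₊ : ℝ≥0∞)) ∂μ := by
  rw [eLpNorm_one_eq_lintegral_enorm]; rfl

theorem ennnorm_integral_le_lintegral_ennnorm {α G : Type*} [MeasurableSpace α]
    [NormedAddCommGroup G] [NormedSpace ℝ G] {μ : Measure α} (f : α → G) :
    ((‖∫ a, f a ∂μ‖₊ : ℝ≥0∞)) ≤ ∫⁻ a, ((‖f a‖₊ : ℝ≥0∞)) ∂μ :=
  enorm_integral_le_lintegral_enorm f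

theorem Real.ennnorm_eq_ofReal {r : ℝ} (hr : 0 ≤ r) : ((‖r‖₊ : ℝ≥0∞)) = ENNReal.ofReal r :=
  Real.enorm_eq_ofReal hr

theorem Real.ennnorm_eq_ofReal_abs (r : ℝ) : ((‖r‖₊ : ℝ≥0∞)) = ENNReal.ofReal |r| :=
  Real.enorm_eq_ofReal_abs r

set_option maxHeartbeats 1000000 in
/-- If `F ⊂ Lᵖ(ℝᵈ; B)` is bounded, `Lᵖ`-equivanishing and `Lᵖ`-equicontinuous, then the
family of real-valued functions `x ↦ ‖f x‖`, `f ∈ F`, is totally bounded in `Lᵖ(ℝᵈ; ℝ)`. -/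
theorem norm_family_totallyBounded
    {d : ℕ} {B : Type*} [NormedAddCommGroup B] [NormedSpace ℝ B] [CompleteSpace B]
    (p : ℝ) (hp : 1 ≤ p) (F : Set (EuclideanSpace ℝ (Fin d) → B))
    (hF : ∀ f ∈ F, MemLp f (ENNReal.ofReal p) volume)
    (hbdd : ∃ M : ℝ, ∀ f ∈ F, eLpNorm f (ENNReal.ofReal p) volume ≤ ENNReal.ofReal M)
    (hvan : ∀ ε > (0:ℝ), ∃ r : ℝ, ∀ f ∈ F,
      eLpNorm f (ENNReal.ofReal p) (volume.restrict {x | r < ‖x‖}) < ENNReal.ofReal ε)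
    (hcont : ∀ ε > (0:ℝ), ∃ δ > (0:ℝ), ∀ h : EuclideanSpace ℝ (Fin d), ‖h‖ < δ →
      ∀ f ∈ F, eLpNorm (fun x => f (x + h) - f x) (ENNReal.ofReal p) volume
        < ENNReal.ofReal ε) :
    ∀ ε > (0:ℝ), ∃ G : Set (EuclideanSpace ℝ (Fin d) → ℝ), G.Finite ∧
      ∀ f ∈ F, ∃ g ∈ G,
        eLpNorm ((fun x => ‖f x‖) - g) (ENNReal.ofReal p) volume < ENNReal.ofReal ε := by
  classical
  set q : ℝ≥0∞ := ENNReal.ofReal p with hq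
  have hp0 : (0:ℝ) < p := lt_of_lt_of_le one_pos hp
  have hq1 : (1:ℝ≥0∞) ≤ q := ENNReal.one_le_ofReal.mpr hp
  have hq0 : q ≠ 0 := by
    simp only [hq, ne_eq, ENNReal.ofReal_eq_zero, not_le]; exact hp0
  have hqt : q ≠ ∞ := ENNReal.ofReal_ne_top
  have hqr : q.toReal = p := ENNReal.toReal_ofReal hp0.le
  -- generic: `p`-th power of the `eLpNorm` as a lintegral
  have hpow : ∀ (u : EuclideanSpace ℝ (Fin d) → ℝ) (μ : Measure (EuclideanSpace ℝ (Fin d))),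
      (∫⁻ y, ((‖u y‖₊ : ℝ≥0∞)) ^ p ∂μ) = (eLpNorm u q μ) ^ p := by
    intro u μ
    rw [eLpNorm_eq_lintegral_rpow_nnnorm hq0 hqt, hqr, ← ENNReal.rpow_mul, one_div,
      inv_mul_cancel₀ hp0.ne', ENNReal.rpow_one]
  intro ε hε
  set ε₁ : ℝ := ε / 5 with hε₁def
  have hε₁ : 0 < ε₁ := by positivity
  obtain ⟨M₀, hM₀⟩ := hbdd
  set M : ℝ := max M₀ 0 with hMdef
  have hM : ∀ f ∈ F, eLpNorm f q volume ≤ ENNReal.ofReal M :=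
    fun f hf => (hM₀ f hf).trans (ENNReal.ofReal_le_ofReal (le_max_left _ _))
  obtain ⟨δ₁, hδ₁pos, hδ₁⟩ := hcont ε₁ hε₁
  set S : Set (EuclideanSpace ℝ (Fin d)) := Metric.ball (0 : EuclideanSpace ℝ (Fin d)) δ₁
    with hSdef
  have hSm : MeasurableSet S := measurableSet_ball
  set V : ℝ≥0∞ := volume S with hVdef
  have hV0 : V ≠ 0 := (Metric.measure_ball_pos _ _ hδ₁pos).ne'
  have hVt : V ≠ ∞ := measure_ball_lt_top.ne
  haveI : Fact (volume S < ∞) := ⟨hVt.lt_top⟩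
  have hVr : (0:ℝ) < V.toReal := ENNReal.toReal_pos hV0 hVt
  obtain ⟨r₀, hr₀⟩ := hvan ε₁ hε₁
  set R : ℝ := max r₀ 0 + 1 with hRdef
  set K : Set (EuclideanSpace ℝ (Fin d)) := Metric.closedBall (0 : EuclideanSpace ℝ (Fin d)) R
    with hKdef
  have hKm : MeasurableSet K := measurableSet_closedBall
  have hKc : Kᶜ ⊆ {x : EuclideanSpace ℝ (Fin d) | r₀ < ‖x‖} := by
    intro x hx
    simp only [hKdef, mem_compl_iff, Metric.mem_closedBall, dist_zero_right, not_le] at hx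
    have h1 : r₀ ≤ max r₀ 0 := le_max_left _ _
    simp only [mem_setOf_eq]
    rw [hRdef] at hx
    linarith
  set W : ℝ≥0∞ := volume K with hWdef
  have hWt : W ≠ ∞ := measure_closedBall_lt_top.ne
  set Wr : ℝ := W.toReal with hWrdef
  have hWr0 : 0 ≤ Wr := ENNReal.toReal_nonneg
  set B₁ : ℝ := Wr ^ (1/p) + 1 with hB₁def
  have hB₁ : 0 < B₁ := by positivity
  set η : ℝ := ε₁ / B₁ with hηdef
  have hη : 0 < η := by positivity
  have hVrp0 : V ^ (1/p) ≠ 0 := by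
    simp only [ne_eq, ENNReal.rpow_eq_zero_iff, not_or, not_and]
    exact ⟨fun h0 => absurd h0 hV0, fun ht => absurd ht hVt⟩
  have hVrpt : V ^ (1/p) ≠ ∞ := by
    simp only [ne_eq, ENNReal.rpow_eq_top_iff, not_or, not_and]
    exact ⟨fun h0 => absurd h0 hV0, fun ht => absurd ht hVt⟩
  have hVnegt : V ^ (-(1/p)) ≠ ∞ := by
    rw [ENNReal.rpow_neg]
    exact ENNReal.inv_ne_top.mpr hVrp0
  set C₀e : ℝ≥0∞ := V ^ (-(1/p)) * ENNReal.ofReal M with hC₀edef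
  have hC₀t : C₀e ≠ ∞ := ENNReal.mul_ne_top hVnegt ENNReal.ofReal_ne_top
  set C₀ : ℝ := C₀e.toReal with hC₀def
  have hC₀0 : 0 ≤ C₀ := ENNReal.toReal_nonneg
  set ε₂ : ℝ := η * (V ^ (1/p)).toReal with hε₂def
  have hε₂pos : 0 < ε₂ := mul_pos hη (ENNReal.toReal_pos hVrp0 hVrpt)
  have hε₂key : V ^ (-(1/p)) * ENNReal.ofReal ε₂ = ENNReal.ofReal η := by
    rw [hε₂def, ENNReal.ofReal_mul hη.le, ENNReal.ofReal_toReal hVrpt, ← mul_assoc,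
      mul_comm (V ^ (-(1/p))) (ENNReal.ofReal η), mul_assoc, ← ENNReal.rpow_add _ _ hV0 hVt]
    simp
  obtain ⟨δ₂, hδ₂pos, hδ₂⟩ := hcont ε₂ hε₂pos
  -- finite net of the compact ball `K`
  have hKcomp : IsCompact K := isCompact_closedBall _ _
  obtain ⟨T, hT⟩ := hKcomp.elim_finite_subcover
    (fun x : EuclideanSpace ℝ (Fin d) => Metric.ball x δ₂)
    (fun x => Metric.isOpen_ball) (fun x hx => mem_iUnion.mpr ⟨x, Metric.mem_ball_self hδ₂pos⟩)
  set m : ℕ := T.card with hmdef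
  set t : Fin m → EuclideanSpace ℝ (Fin d) := fun j => ((T.equivFin.symm j : T) :
    EuclideanSpace ℝ (Fin d)) with htdef
  have hcov : ∀ x ∈ K, ∃ j : Fin m, x ∈ Metric.ball (t j) δ₂ := by
    intro x hx
    obtain ⟨i, hiT, hi⟩ := mem_iUnion₂.mp (hT hx)
    refine ⟨T.equivFin ⟨i, hiT⟩, ?_⟩
    simpa [htdef] using hi
  set Vset : Fin m → Set (EuclideanSpace ℝ (Fin d)) := fun j =>
    (Metric.ball (t j) δ₂ ∩ K) \ ⋃ (i : Fin m) (_ : i < j), Metric.ball (t i) δ₂ with hVsetdef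
  have hVmeas : ∀ j, MeasurableSet (Vset j) := fun j =>
    (measurableSet_ball.inter hKm).diff
      (MeasurableSet.iUnion fun i => MeasurableSet.iUnion fun _ => measurableSet_ball)
  have hVsub : ∀ j, Vset j ⊆ K := fun j x hx => hx.1.2
  have hkey : ∀ x ∈ K, ∃ j : Fin m, x ∈ Vset j ∧ dist x (t j) < δ₂ ∧
      ∀ i, i ≠ j → x ∉ Vset i := by
    intro x hx
    have hne : (Finset.filter (fun j : Fin m => x ∈ Metric.ball (t j) δ₂) Finset.univ).Nonempty := by
      obtain ⟨j, hj⟩ := hcov x hx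
      exact ⟨j, Finset.mem_filter.mpr ⟨Finset.mem_univ _, hj⟩⟩
    set j := (Finset.filter (fun j : Fin m => x ∈ Metric.ball (t j) δ₂) Finset.univ).min' hne
      with hjdef
    have hjball : x ∈ Metric.ball (t j) δ₂ :=
      (Finset.mem_filter.mp (Finset.min'_mem
        (Finset.filter (fun j : Fin m => x ∈ Metric.ball (t j) δ₂) Finset.univ) hne)).2
    have hjmin : ∀ i : Fin m, x ∈ Metric.ball (t i) δ₂ → j ≤ i := fun i hi =>
      Finset.min'_le (Finset.filter (fun j : Fin m => x ∈ Metric.ball (t j) δ₂) Finset.univ)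
        i (Finset.mem_filter.mpr ⟨Finset.mem_univ _, hi⟩)
    refine ⟨j, ⟨⟨hjball, hx⟩, ?_⟩, Metric.mem_ball.mp hjball, ?_⟩
    · intro hmem
      simp only [mem_iUnion] at hmem
      obtain ⟨i, hij, hball⟩ := hmem
      exact absurd (hjmin i hball) (not_le.mpr hij)
    · intro i hij hxi
      rcases lt_or_gt_of_ne hij with h | h
      · exact absurd (hjmin i hxi.1.1) (not_le.mpr h)
      · apply hxi.2
        simp only [mem_iUnion]
        exact ⟨j, h, hjball⟩
  -- the grid of values
  set N : ℕ := ⌈C₀ / η⌉₊ + 1 with hNdef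
  set gridSet : Set ℝ := (fun k : ℤ => (k : ℝ) * η) '' (Set.Icc (-(N:ℤ)) N) with hgriddef
  have hgridfin : gridSet.Finite := (Set.finite_Icc _ _).image _
  have hgrid : ∀ a : ℝ, |a| ≤ C₀ → ∃ v ∈ gridSet, |a - v| ≤ η := by
    intro a ha
    have hbounds := abs_le.mp ha
    have hN : C₀ / η ≤ (⌈C₀ / η⌉₊ : ℝ) := Nat.le_ceil _
    have hk1 : (a / η - 1 : ℝ) < (⌊a / η⌋ : ℝ) := Int.sub_one_lt_floor _
    have hk2 : ((⌊a / η⌋ : ℤ) : ℝ) ≤ a / η := Int.floor_le _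
    have hdiv1 : (-C₀) / η ≤ a / η := by
      rw [div_eq_mul_inv, div_eq_mul_inv]
      exact mul_le_mul_of_nonneg_right hbounds.1 (inv_nonneg.mpr hη.le)
    have hdiv2 : a / η ≤ C₀ / η := by
      rw [div_eq_mul_inv, div_eq_mul_inv]
      exact mul_le_mul_of_nonneg_right hbounds.2 (inv_nonneg.mpr hη.le)
    refine ⟨(⌊a / η⌋ : ℝ) * η, ⟨⌊a / η⌋, ?_, rfl⟩, ?_⟩
    · rw [Set.mem_Icc]
      constructor
      · have : (-(N:ℤ) : ℝ) ≤ ((⌊a / η⌋ : ℤ) : ℝ) := by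
          push_cast [hNdef]
          rw [neg_div] at hdiv1
          linarith
        exact_mod_cast this
      · have : ((⌊a / η⌋ : ℤ) : ℝ) ≤ ((N : ℤ) : ℝ) := by
          push_cast [hNdef]
          linarith
        exact_mod_cast this
    · have he1 : (⌊a / η⌋ : ℝ) * η ≤ a := by
        have := mul_le_mul_of_nonneg_right hk2 hη.le
        rwa [div_mul_cancel₀ a hη.ne'] at this
      have he2 : a ≤ (⌊a / η⌋ : ℝ) * η + η := by
        have h3 : a / η < (⌊a / η⌋ : ℝ) + 1 := by linarith
        have := mul_le_mul_of_nonneg_right h3.le hη.le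
        rwa [div_mul_cancel₀ a hη.ne', add_mul, one_mul] at this
      rw [abs_le]
      constructor <;> linarith
  -- the finite set of candidate step functions
  refine ⟨(fun v : Fin m → ℝ => fun x => ∑ j, (Vset j).indicator (fun _ => v j) x) ''
      (Set.pi Set.univ fun _ : Fin m => gridSet),
    (Set.Finite.pi fun _ => hgridfin).image _, ?_⟩
  intro f hf
  -- measurable representative
  have hfm := (hF f hf).aestronglyMeasurable
  set f' := hfm.mk f with hf'def
  have hsm : StronglyMeasurable f' := hfm.stronglyMeasurable_mk
  have hff' : f =ᵐ[volume] f' := hfm.ae_eq_mk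
  set g : EuclideanSpace ℝ (Fin d) → ℝ := fun x => ‖f' x‖ with hgdef
  have hg : Measurable g := hsm.norm.measurable
  have hgf : (fun x : EuclideanSpace ℝ (Fin d) => ‖f x‖) =ᵐ[volume] g :=
    hff'.mono fun x hx => by simp only [hgdef]; rw [hx]
  have hgMem : MemLp g q volume := ((hF f hf).norm).ae_eq hgf
  have hgbound : eLpNorm g q volume ≤ ENNReal.ofReal M := by
    rw [← eLpNorm_congr_ae hgf, eLpNorm_norm]
    exact hM f hf
  -- uniform translation estimate for g
  have hgdiff : ∀ (w : EuclideanSpace ℝ (Fin d)) (ε' δ' : ℝ),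
      (∀ h : EuclideanSpace ℝ (Fin d), ‖h‖ < δ' → ∀ f ∈ F,
        eLpNorm (fun x => f (x + h) - f x) q volume < ENNReal.ofReal ε') →
      ‖w‖ < δ' → eLpNorm (fun x => g (x + w) - g x) q volume ≤ ENNReal.ofReal ε' := by
    intro w ε' δ' hc hw
    have hmp : MeasurePreserving (fun x : EuclideanSpace ℝ (Fin d) => x + w) volume volume :=
      measurePreserving_add_right volume w
    have htr : (fun x : EuclideanSpace ℝ (Fin d) => f' (x + w)) =ᵐ[volume]
        (fun x => f (x + w)) := by
      have := hmp.quasiMeasurePreserving.ae_eq_comp hff'.symm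
      exact this
    have h1 : eLpNorm (fun x => g (x + w) - g x) q volume
        ≤ eLpNorm (fun x => f' (x + w) - f' x) q volume := by
      apply eLpNorm_mono
      intro x
      simp only [hgdef, Real.norm_eq_abs]
      exact abs_norm_sub_norm_le _ _
    have h2 : (fun x : EuclideanSpace ℝ (Fin d) => f' (x + w) - f' x) =ᵐ[volume]
        (fun x => f (x + w) - f x) := htr.sub hff'.symm
    calc eLpNorm (fun x => g (x + w) - g x) q volume
        ≤ eLpNorm (fun x => f' (x + w) - f' x) q volume := h1
      _ = eLpNorm (fun x => f (x + w) - f x) q volume := eLpNorm_congr_ae h2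
      _ ≤ ENNReal.ofReal ε' := (hc w hw f hf).le
  -- translates of g are in L^p, hence integrable on S
  have hMemT : ∀ x : EuclideanSpace ℝ (Fin d), MemLp (fun h => g (x + h)) q volume := by
    intro x
    refine ⟨(hg.comp (measurable_const_add x)).aestronglyMeasurable, ?_⟩
    rw [eLpNorm_eq_lintegral_rpow_nnnorm hq0 hqt, hqr]
    have heq : (∫⁻ h, ((‖g (x + h)‖₊ : ℝ≥0∞)) ^ p ∂volume)
        = ∫⁻ y, ((‖g y‖₊ : ℝ≥0∞)) ^ p ∂volume :=
      lintegral_add_left_eq_self (fun y => ((‖g y‖₊ : ℝ≥0∞)) ^ p) x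
    rw [heq, hpow g volume, ← ENNReal.rpow_mul, mul_one_div, div_self hp0.ne',
      ENNReal.rpow_one]
    exact hgMem.2
  have hInt : ∀ x, Integrable (fun h => g (x + h)) (volume.restrict S) :=
    fun x => ((hMemT x).restrict S).integrable hq1
  -- the averaging operator
  set A : EuclideanSpace ℝ (Fin d) → ℝ :=
    fun x => (V.toReal)⁻¹ * ∫ h in S, g (x + h) ∂volume with hAdef
  have hAmeas : Measurable A := by
    have h2 : StronglyMeasurable fun z : EuclideanSpace ℝ (Fin d) × EuclideanSpace ℝ (Fin d) =>
        g (z.1 + z.2) := (hg.comp (measurable_fst.add measurable_snd)).stronglyMeasurable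
    exact measurable_const.mul h2.integral_prod_right'.measurable
  have hAdiffeq : ∀ x, A x - g x = (V.toReal)⁻¹ * ∫ h in S, (g (x + h) - g x) ∂volume := by
    intro x
    rw [integral_sub (hInt x) (integrable_const _), setIntegral_const, smul_eq_mul, mul_sub,
      measureReal_def, ← hVdef, ← mul_assoc, inv_mul_cancel₀ hVr.ne', one_mul]
  -- the Hölder machine
  have hHolder : ∀ wfun : EuclideanSpace ℝ (Fin d) → ℝ, Measurable wfun →
      ((‖(V.toReal)⁻¹ * ∫ h in S, wfun h ∂volume‖₊ : ℝ≥0∞))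
        ≤ V ^ (-(1/p)) * (∫⁻ h in S, ((‖wfun h‖₊ : ℝ≥0∞)) ^ p ∂volume) ^ (1/p) := by
    intro w hw
    have hc : ((‖(V.toReal)⁻¹‖₊ : ℝ≥0∞)) = V⁻¹ := by
      rw [Real.ennnorm_eq_ofReal (by positivity), ENNReal.ofReal_inv_of_pos hVr,
        ENNReal.ofReal_toReal hVt]
    have hint : ((‖∫ h in S, w h ∂volume‖₊ : ℝ≥0∞)) ≤ ∫⁻ h in S, ((‖w h‖₊ : ℝ≥0∞)) ∂volume :=
      ennnorm_integral_le_lintegral_ennnorm _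
    have hold : (∫⁻ h in S, ((‖w h‖₊ : ℝ≥0∞)) ∂volume)
        ≤ (∫⁻ h in S, ((‖w h‖₊ : ℝ≥0∞)) ^ p ∂volume) ^ (1/p) * V ^ (1 - 1/p) := by
      have h1 := eLpNorm_le_eLpNorm_mul_rpow_measure_univ (p := 1) (q := q)
        (μ := volume.restrict S) hq1 hw.aestronglyMeasurable
      rw [eLpNorm_one_eq_lintegral_nnnorm, eLpNorm_eq_lintegral_rpow_nnnorm hq0 hqt, hqr,
        Measure.restrict_apply_univ, ENNReal.toReal_one] at h1
      have : (1:ℝ)/1 - 1/p = 1 - 1/p := by norm_num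
      rw [this] at h1
      exact h1
    calc ((‖(V.toReal)⁻¹ * ∫ h in S, w h ∂volume‖₊ : ℝ≥0∞))
        = V⁻¹ * ((‖∫ h in S, w h ∂volume‖₊ : ℝ≥0∞)) := by
          rw [nnnorm_mul, ENNReal.coe_mul, hc]
      _ ≤ V⁻¹ * ((∫⁻ h in S, ((‖w h‖₊ : ℝ≥0∞)) ^ p ∂volume) ^ (1/p) * V ^ (1 - 1/p)) :=
          mul_le_mul_right (hint.trans hold) _
      _ = (V⁻¹ * V ^ (1 - 1/p)) * (∫⁻ h in S, ((‖w h‖₊ : ℝ≥0∞)) ^ p ∂volume) ^ (1/p) := by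
          ring
      _ = V ^ (-(1/p)) * (∫⁻ h in S, ((‖w h‖₊ : ℝ≥0∞)) ^ p ∂volume) ^ (1/p) := by
          congr 1
          have hexp : (-1 : ℝ) + (1 - 1/p) = -(1/p) := by ring
          rw [← ENNReal.rpow_neg_one V, ← ENNReal.rpow_add _ _ hV0 hVt, hexp]
  -- Step B : smoothing error
  have hStepB : eLpNorm (fun x => A x - g x) q volume ≤ ENNReal.ofReal ε₁ := by
    have hb1 : ∀ x, ((‖A x - g x‖₊ : ℝ≥0∞)) ^ p
        ≤ V⁻¹ * ∫⁻ h in S, ((‖g (x + h) - g x‖₊ : ℝ≥0∞)) ^ p ∂volume := by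
      intro x
      have hmeasw : Measurable fun h : EuclideanSpace ℝ (Fin d) => g (x + h) - g x :=
        (hg.comp (measurable_const_add x)).sub measurable_const
      have h0 := hHolder _ hmeasw
      rw [← hAdiffeq x] at h0
      calc ((‖A x - g x‖₊ : ℝ≥0∞)) ^ p
          ≤ (V ^ (-(1/p)) *
            (∫⁻ h in S, ((‖g (x + h) - g x‖₊ : ℝ≥0∞)) ^ p ∂volume) ^ (1/p)) ^ p :=
            ENNReal.rpow_le_rpow h0 hp0.le
        _ = V⁻¹ * ∫⁻ h in S, ((‖g (x + h) - g x‖₊ : ℝ≥0∞)) ^ p ∂volume := by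
            rw [ENNReal.mul_rpow_of_nonneg _ _ hp0.le, ← ENNReal.rpow_mul, ← ENNReal.rpow_mul,
              show -(1/p) * p = -1 by field_simp, show (1:ℝ)/p * p = 1 by field_simp,
              ENNReal.rpow_neg_one, ENNReal.rpow_one]
    have hΨ : Measurable fun z : EuclideanSpace ℝ (Fin d) × EuclideanSpace ℝ (Fin d) =>
        ((‖g (z.1 + z.2) - g z.1‖₊ : ℝ≥0∞)) ^ p := by
      apply Measurable.comp (ENNReal.continuous_rpow_const.measurable)
      exact ((hg.comp (measurable_fst.add measurable_snd)).sub (hg.comp measurable_fst)).enorm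
    have hswap : ∫⁻ x, ∫⁻ h in S, ((‖g (x + h) - g x‖₊ : ℝ≥0∞)) ^ p ∂volume ∂volume
        = ∫⁻ h in S, ∫⁻ x, ((‖g (x + h) - g x‖₊ : ℝ≥0∞)) ^ p ∂volume ∂volume :=
      lintegral_lintegral_swap hΨ.aemeasurable
    have hinner : ∀ h ∈ S, (∫⁻ x, ((‖g (x + h) - g x‖₊ : ℝ≥0∞)) ^ p ∂volume)
        ≤ (ENNReal.ofReal ε₁) ^ p := by
      intro h hh
      rw [hpow (fun x => g (x + h) - g x) volume]
      apply ENNReal.rpow_le_rpow _ hp0.le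
      apply hgdiff h ε₁ δ₁ hδ₁
      simpa [hSdef, Metric.mem_ball, dist_zero_right] using hh
    calc eLpNorm (fun x => A x - g x) q volume
        = (∫⁻ x, ((‖A x - g x‖₊ : ℝ≥0∞)) ^ p ∂volume) ^ (1/p) := by
          rw [eLpNorm_eq_lintegral_rpow_nnnorm hq0 hqt, hqr]
      _ ≤ (∫⁻ x, V⁻¹ * ∫⁻ h in S, ((‖g (x + h) - g x‖₊ : ℝ≥0∞)) ^ p ∂volume ∂volume) ^ (1/p) :=
          ENNReal.rpow_le_rpow (lintegral_mono hb1) (by positivity)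
      _ = (V⁻¹ * ∫⁻ h in S, ∫⁻ x, ((‖g (x + h) - g x‖₊ : ℝ≥0∞)) ^ p ∂volume ∂volume) ^ (1/p) := by
          rw [lintegral_const_mul _ hΨ.lintegral_prod_right', hswap]
      _ ≤ (V⁻¹ * (V * (ENNReal.ofReal ε₁) ^ p)) ^ (1/p) := by
          apply ENNReal.rpow_le_rpow _ (by positivity)
          apply mul_le_mul_right
          calc ∫⁻ h in S, (∫⁻ x, ((‖g (x + h) - g x‖₊ : ℝ≥0∞)) ^ p ∂volume) ∂volume
              ≤ ∫⁻ _ in S, (ENNReal.ofReal ε₁) ^ p ∂volume :=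
                setLIntegral_mono measurable_const hinner
            _ = V * (ENNReal.ofReal ε₁) ^ p := by
                rw [setLIntegral_const, mul_comm]
      _ = ENNReal.ofReal ε₁ := by
          rw [← mul_assoc, ENNReal.inv_mul_cancel hV0 hVt, one_mul, ← ENNReal.rpow_mul,
            mul_one_div, div_self hp0.ne', ENNReal.rpow_one]
  -- Step C1 : uniform bound
  have hC1 : ∀ x, |A x| ≤ C₀ := by
    intro x
    have h0 := hHolder (fun h => g (x + h)) (hg.comp (measurable_const_add x))
    have h1 : (∫⁻ h in S, ((‖g (x + h)‖₊ : ℝ≥0∞)) ^ p ∂volume) ≤ (ENNReal.ofReal M) ^ p :=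
      calc (∫⁻ h in S, ((‖g (x + h)‖₊ : ℝ≥0∞)) ^ p ∂volume)
          ≤ ∫⁻ h, ((‖g (x + h)‖₊ : ℝ≥0∞)) ^ p ∂volume := setLIntegral_le_lintegral _ _
        _ = ∫⁻ y, ((‖g y‖₊ : ℝ≥0∞)) ^ p ∂volume :=
            lintegral_add_left_eq_self (fun y => ((‖g y‖₊ : ℝ≥0∞)) ^ p) x
        _ = (eLpNorm g q volume) ^ p := hpow g volume
        _ ≤ (ENNReal.ofReal M) ^ p := ENNReal.rpow_le_rpow hgbound hp0.le
    have h2 : ((‖A x‖₊ : ℝ≥0∞)) ≤ C₀e := by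
      refine h0.trans ?_
      rw [hC₀edef]
      apply mul_le_mul_right
      calc (∫⁻ h in S, ((‖g (x + h)‖₊ : ℝ≥0∞)) ^ p ∂volume) ^ (1/p)
          ≤ ((ENNReal.ofReal M) ^ p) ^ (1/p) := ENNReal.rpow_le_rpow h1 (by positivity)
        _ = ENNReal.ofReal M := by
            rw [← ENNReal.rpow_mul, mul_one_div, div_self hp0.ne', ENNReal.rpow_one]
    have h3 := ENNReal.toReal_mono hC₀t h2
    simpa [Real.norm_eq_abs] using h3
  -- Step C2 : uniform modulus of continuity
  have hC2 : ∀ x y : EuclideanSpace ℝ (Fin d), dist x y < δ₂ → |A x - A y| ≤ η := by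
    intro x y hxy
    have hw : ‖x - y‖ < δ₂ := by rw [← dist_eq_norm]; exact hxy
    have hAsub : A x - A y = (V.toReal)⁻¹ * ∫ h in S, (g (x + h) - g (y + h)) ∂volume := by
      rw [integral_sub (hInt x) (hInt y), mul_sub]
    have h0 := hHolder (fun h => g (x + h) - g (y + h))
      ((hg.comp (measurable_const_add x)).sub (hg.comp (measurable_const_add y)))
    rw [← hAsub] at h0
    have h1 : (∫⁻ h in S, ((‖g (x + h) - g (y + h)‖₊ : ℝ≥0∞)) ^ p ∂volume)
        ≤ (ENNReal.ofReal ε₂) ^ p := by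
      have hrw : ∀ h : EuclideanSpace ℝ (Fin d),
          g (x + h) - g (y + h) = g ((y + h) + (x - y)) - g (y + h) := by
        intro h
        have : (y + h) + (x - y) = x + h := by abel
        rw [this]
      calc (∫⁻ h in S, ((‖g (x + h) - g (y + h)‖₊ : ℝ≥0∞)) ^ p ∂volume)
          ≤ ∫⁻ h, ((‖g (x + h) - g (y + h)‖₊ : ℝ≥0∞)) ^ p ∂volume :=
            setLIntegral_le_lintegral _ _
        _ = ∫⁻ h, ((‖g ((y + h) + (x - y)) - g (y + h)‖₊ : ℝ≥0∞)) ^ p ∂volume := by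
            simp_rw [hrw]
        _ = ∫⁻ z, ((‖g (z + (x - y)) - g z‖₊ : ℝ≥0∞)) ^ p ∂volume :=
            lintegral_add_left_eq_self
              (fun z => ((‖g (z + (x - y)) - g z‖₊ : ℝ≥0∞)) ^ p) y
        _ = (eLpNorm (fun z => g (z + (x - y)) - g z) q volume) ^ p := hpow _ volume
        _ ≤ (ENNReal.ofReal ε₂) ^ p :=
            ENNReal.rpow_le_rpow (hgdiff (x - y) ε₂ δ₂ hδ₂ hw) hp0.le
    have h2 : ((‖A x - A y‖₊ : ℝ≥0∞)) ≤ ENNReal.ofReal η := by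
      refine h0.trans ?_
      rw [← hε₂key]
      apply mul_le_mul_right
      calc (∫⁻ h in S, ((‖g (x + h) - g (y + h)‖₊ : ℝ≥0∞)) ^ p ∂volume) ^ (1/p)
          ≤ ((ENNReal.ofReal ε₂) ^ p) ^ (1/p) := ENNReal.rpow_le_rpow h1 (by positivity)
        _ = ENNReal.ofReal ε₂ := by
            rw [← ENNReal.rpow_mul, mul_one_div, div_self hp0.ne', ENNReal.rpow_one]
    rw [Real.ennnorm_eq_ofReal_abs] at h2
    exact (ENNReal.ofReal_le_ofReal_iff hη.le).mp h2
  -- choose the grid values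
  have hvex : ∀ j : Fin m, ∃ w ∈ gridSet, |A (t j) - w| ≤ η := fun j => hgrid _ (hC1 (t j))
  choose v hv1 hv2 using hvex
  set sf : EuclideanSpace ℝ (Fin d) → ℝ :=
    fun x => ∑ j, (Vset j).indicator (fun _ => v j) x with hsfdef
  have hsfmeas : Measurable sf :=
    Finset.measurable_sum _ fun j _ => measurable_const.indicator (hVmeas j)
  have hsfK : ∀ x ∉ K, sf x = 0 := by
    intro x hx
    apply Finset.sum_eq_zero
    intro j _
    exact Set.indicator_of_notMem (fun hmem => hx (hVsub j hmem)) _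
  have hsfbound : ∀ x ∈ K, |A x - sf x| ≤ 2 * η := by
    intro x hx
    obtain ⟨j, hxV, hxd, huniq⟩ := hkey x hx
    have hsfx : sf x = v j := by
      have h0 : ∀ i ∈ (Finset.univ : Finset (Fin m)), i ≠ j →
          (Vset i).indicator (fun _ => v i) x = 0 := fun i _ hij =>
        Set.indicator_of_notMem (huniq i hij) _
      calc sf x = ∑ i, (Vset i).indicator (fun _ => v i) x := rfl
        _ = (Vset j).indicator (fun _ => v j) x :=
            Finset.sum_eq_single_of_mem j (Finset.mem_univ j) h0
        _ = v j := Set.indicator_of_mem hxV _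
    rw [hsfx]
    calc |A x - v j| ≤ |A x - A (t j)| + |A (t j) - v j| := by
          have hdc : A x - v j = (A x - A (t j)) + (A (t j) - v j) := by ring
          rw [hdc]; exact abs_add_le _ _
      _ ≤ η + η := add_le_add (hC2 x (t j) hxd) (hv2 j)
      _ = 2 * η := by ring
  refine ⟨sf, ⟨v, fun j _ => hv1 j, rfl⟩, ?_⟩
  -- final assembly
  have hgm : Measurable fun x => g x - sf x := hg.sub hsfmeas
  have h₁ : eLpNorm ((fun x : EuclideanSpace ℝ (Fin d) => ‖f x‖) - sf) q volume
      = eLpNorm (fun x => g x - sf x) q volume := by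
    apply eLpNorm_congr_ae
    filter_upwards [hgf] with x hx
    simp only [Pi.sub_apply]
    rw [hx]
  have hsplit1 : eLpNorm (fun x => g x - sf x) q volume
      ≤ eLpNorm (K.indicator fun x => g x - sf x) q volume
        + eLpNorm (Kᶜ.indicator fun x => g x - sf x) q volume := by
    have hdec : (fun x => g x - sf x)
        = (K.indicator fun x => g x - sf x) + (Kᶜ.indicator fun x => g x - sf x) :=
      (Set.indicator_self_add_compl K _).symm
    nth_rewrite 1 [hdec]
    exact eLpNorm_add_le (hgm.indicator hKm).aestronglyMeasurable
      (hgm.indicator hKm.compl).aestronglyMeasurable hq1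
  have hsplit2 : eLpNorm (K.indicator fun x => g x - sf x) q volume
      ≤ eLpNorm (K.indicator fun x => g x - A x) q volume
        + eLpNorm (K.indicator fun x => A x - sf x) q volume := by
    have hdec : (K.indicator fun x => g x - sf x)
        = (K.indicator fun x => g x - A x) + (K.indicator fun x => A x - sf x) := by
      funext x
      by_cases hx : x ∈ K <;>
        simp [Set.indicator_of_mem, Set.indicator_of_notMem, hx]
    rw [hdec]
    exact eLpNorm_add_le ((hg.sub hAmeas).indicator hKm).aestronglyMeasurable
      ((hAmeas.sub hsfmeas).indicator hKm).aestronglyMeasurable hq1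
  have hterm1 : eLpNorm (K.indicator fun x => g x - A x) q volume ≤ ENNReal.ofReal ε₁ := by
    refine (eLpNorm_indicator_le _).trans ?_
    exact (eLpNorm_mono fun x => (norm_sub_rev _ _).le).trans hStepB
  have hterm2 : eLpNorm (K.indicator fun x => A x - sf x) q volume
      ≤ ENNReal.ofReal (2 * ε₁) := by
    rw [eLpNorm_indicator_eq_eLpNorm_restrict hKm]
    have hae : ∀ᵐ x ∂(volume.restrict K), ‖A x - sf x‖ ≤ 2 * η := by
      rw [ae_restrict_iff' hKm]
      exact ae_of_all _ fun x hx => by rw [Real.norm_eq_abs]; exact hsfbound x hx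
    refine (eLpNorm_le_of_ae_bound hae).trans ?_
    rw [Measure.restrict_apply_univ, hqr]
    have hWrw : ENNReal.ofReal (Wr ^ (1/p)) = W ^ p⁻¹ := by
      rw [← ENNReal.ofReal_rpow_of_nonneg hWr0 (by positivity : (0:ℝ) ≤ 1/p),
        ENNReal.ofReal_toReal hWt, one_div]
    rw [← hWrw, ← ENNReal.ofReal_mul (by positivity)]
    apply ENNReal.ofReal_le_ofReal
    have hle : Wr ^ (1/p) ≤ B₁ := by
      rw [hB₁def]
      linarith
    calc Wr ^ (1/p) * (2 * η) ≤ B₁ * (2 * η) :=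
        mul_le_mul_of_nonneg_right hle (by positivity)
      _ = 2 * ε₁ := by
        rw [hηdef]
        field_simp
  have hterm3 : eLpNorm (Kᶜ.indicator fun x => g x - sf x) q volume ≤ ENNReal.ofReal ε₁ := by
    rw [eLpNorm_indicator_eq_eLpNorm_restrict hKm.compl]
    have hae : (fun x => g x - sf x) =ᵐ[volume.restrict Kᶜ]
        (fun x : EuclideanSpace ℝ (Fin d) => ‖f x‖) := by
      have h1 : (fun x => g x - sf x) =ᵐ[volume.restrict Kᶜ] g := by
        refine (ae_restrict_iff' hKm.compl).mpr (ae_of_all _ fun x hx => ?_)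
        show g x - sf x = g x
        rw [hsfK x hx, sub_zero]
      exact h1.trans (ae_restrict_of_ae hgf.symm)
    rw [eLpNorm_congr_ae hae, eLpNorm_norm]
    exact le_trans (eLpNorm_mono_measure f (Measure.restrict_mono hKc le_rfl)) (hr₀ f hf).le
  calc eLpNorm ((fun x : EuclideanSpace ℝ (Fin d) => ‖f x‖) - sf) q volume
      = eLpNorm (fun x => g x - sf x) q volume := h₁
    _ ≤ eLpNorm (K.indicator fun x => g x - sf x) q volume
        + eLpNorm (Kᶜ.indicator fun x => g x - sf x) q volume := hsplit1
    _ ≤ (ENNReal.ofReal ε₁ + ENNReal.ofReal (2 * ε₁)) + ENNReal.ofReal ε₁ :=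
        add_le_add (hsplit2.trans (add_le_add hterm1 hterm2)) hterm3
    _ = ENNReal.ofReal (4 * ε₁) := by
        rw [← ENNReal.ofReal_add (by positivity) (by positivity),
          ← ENNReal.ofReal_add (by positivity) (by positivity)]
        ring_nf
    _ < ENNReal.ofReal ε := by
        apply (ENNReal.ofReal_lt_ofReal_iff hε).mpr
        rw [hε₁def]
        linarith
end

section
/- Let X be a compactly gauged cone in a Banach space B with ‖x‖ ≤ [x]_X for x ∈ X, and let 1 ≤ p < ∞. Suppose F ⊂ L^p(ℝ^d; X) satisfies: (i) sup_{f∈F} (∫ [f(x)]_X^p dx)^{1/p} < ∞; (ii) F is L^p-equivanishing in L^p(ℝ^d; B); (iii) F is L^p-equicontinuous in L^p(ℝ^d; B). Then F is totally bounded in L^p(ℝ^d; B). -/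
open MeasureTheory Set
open scoped ENNReal NNReal

namespace LpTB

variable {α : Type*} [MeasurableSpace α] {μ : Measure α}

/-- Hölder against 1: `∫⁻ φ ≤ (∫⁻ φ^p)^(1/p) * (μ univ)^(1-1/p)`. -/
theorem lintegral_le_rpow {p : ℝ} (hp : 1 ≤ p) {φ : α → ℝ≥0∞} (hφ : AEMeasurable φ μ) :
    ∫⁻ x, φ x ∂μ ≤ (∫⁻ x, φ x ^ p ∂μ) ^ (1/p) * (μ univ) ^ (1 - 1/p) := by
  rcases eq_or_lt_of_le hp with h1 | h1
  · simp [← h1]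
  · have hpq := Real.HolderConjugate.conjExponent h1
    have := ENNReal.lintegral_mul_le_Lp_mul_Lq μ hpq hφ (aemeasurable_const (b := (1:ℝ≥0∞)))
    simpa [hpq.one_sub_inv.symm, ENNReal.one_rpow, one_div] using this

theorem abs_coord_le_norm {d : ℕ} (x : EuclideanSpace ℝ (Fin d)) (i : Fin d) :
    |x i| ≤ ‖x‖ := by
  rw [EuclideanSpace.norm_eq]
  rw [← Real.sqrt_sq_eq_abs]
  apply Real.sqrt_le_sqrt
  calc (x i)^2 = ‖x i‖^2 := by rw [Real.norm_eq_abs, sq_abs]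
  _ ≤ ∑ j, ‖x j‖^2 :=
    Finset.single_le_sum (f := fun j => ‖x j‖^2) (fun j _ => sq_nonneg _) (Finset.mem_univ i)

theorem norm_le_of_coords {d : ℕ} (x : EuclideanSpace ℝ (Fin d)) {c : ℝ} (hc : 0 ≤ c)
    (h : ∀ i, |x i| ≤ c) : ‖x‖ ≤ Real.sqrt d * c := by
  rw [EuclideanSpace.norm_eq]
  have : ∑ j, ‖x j‖^2 ≤ d * c^2 := by
    calc ∑ j, ‖x j‖^2 ≤ ∑ _j : Fin d, c^2 := by
          apply Finset.sum_le_sum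
          intro j _
          rw [Real.norm_eq_abs, sq_abs]
          have := abs_le.mp (h j)
          exact sq_le_sq' this.1 this.2
    _ = d * c^2 := by simp [Finset.sum_const, nsmul_eq_mul]
  calc Real.sqrt (∑ j, ‖x j‖^2) ≤ Real.sqrt (d * c^2) := Real.sqrt_le_sqrt this
  _ = Real.sqrt d * c := by
      rw [Real.sqrt_mul (by positivity)]
      rw [Real.sqrt_sq hc]

theorem volume_coord_box {d : ℕ} (t : Fin d → Set ℝ) (ht : ∀ i, MeasurableSet (t i)) :
    volume {x : EuclideanSpace ℝ (Fin d) | ∀ i, x i ∈ t i} = ∏ i, volume (t i) := by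
  have hmp := EuclideanSpace.volume_preserving_symm_measurableEquiv_toLp (Fin d)
  have : {x : EuclideanSpace ℝ (Fin d) | ∀ i, x i ∈ t i}
      = (MeasurableEquiv.toLp 2 (Fin d → ℝ)).symm ⁻¹' (Set.univ.pi t) := by
    ext x; simp [MeasurableEquiv.toLp, Set.mem_pi]; rfl
  rw [this, hmp.measure_preimage (MeasurableSet.univ_pi ht).nullMeasurableSet]
  exact volume_pi_pi t

end LpTB

set_option maxHeartbeats 2000000

/-- Compactness for `Lᵖ` families with values in a compactly gauged cone `X ⊂ B`:
if `F ⊂ Lᵖ(ℝᵈ; X)` is bounded in the gauge norm, `Lᵖ`-equivanishing and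
`Lᵖ`-equicontinuous in `Lᵖ(ℝᵈ; B)`, then `F` is totally bounded in `Lᵖ(ℝᵈ; B)`. -/
theorem lp_totallyBounded_of_gauged_cone
    {d : ℕ} {B : Type*} [NormedAddCommGroup B] [NormedSpace ℝ B] [CompleteSpace B]
    (X : Set B)
    (hcone : ∀ a : ℝ, 0 ≤ a → ∀ x ∈ X, a • x ∈ X)
    (g : B → ℝ)
    (hg0 : ∀ x ∈ X, 0 ≤ g x)
    (hgh : ∀ a : ℝ, 0 ≤ a → ∀ x ∈ X, g (a • x) = a * g x)
    (hgz : ∀ x ∈ X, (g x = 0 ↔ x = 0))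
    (hnorm : ∀ x ∈ X, ‖x‖ ≤ g x)
    (hcpt : TotallyBounded {x ∈ X | g x ≤ 1})
    (p : ℝ) (hp : 1 ≤ p) (F : Set (EuclideanSpace ℝ (Fin d) → B))
    (hXval : ∀ f ∈ F, ∀ x, f x ∈ X)
    (hmeas : ∀ f ∈ F, AEStronglyMeasurable f volume)
    (hgmeas : ∀ f ∈ F, Measurable fun x => g (f x))
    (hbdd : ∃ M : ℝ, ∀ f ∈ F,
      ∫⁻ x, ENNReal.ofReal (g (f x)) ^ p ≤ ENNReal.ofReal M)
    (hvan : ∀ ε > (0:ℝ), ∃ r : ℝ, ∀ f ∈ F,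
      eLpNorm f (ENNReal.ofReal p) (volume.restrict {x | r < ‖x‖}) < ENNReal.ofReal ε)
    (hcont : ∀ ε > (0:ℝ), ∃ δ > (0:ℝ), ∀ h : EuclideanSpace ℝ (Fin d), ‖h‖ < δ →
      ∀ f ∈ F, eLpNorm (fun x => f (x + h) - f x) (ENNReal.ofReal p) volume
        < ENNReal.ofReal ε) :
    ∀ ε > (0:ℝ), ∃ G : Set (EuclideanSpace ℝ (Fin d) → B), G.Finite ∧
      ∀ f ∈ F, ∃ g' ∈ G,
        eLpNorm (f - g') (ENNReal.ofReal p) volume < ENNReal.ofReal ε := by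
  classical
  obtain ⟨M₀, hM₀⟩ := hbdd
  set M := max M₀ 0 with hMdef
  have hM : ∀ f ∈ F, ∫⁻ x, ENNReal.ofReal (g (f x)) ^ p ≤ ENNReal.ofReal M := fun f hf =>
    (hM₀ f hf).trans (ENNReal.ofReal_le_ofReal (le_max_left _ _))
  have hp0 : (0:ℝ) < p := lt_of_lt_of_le one_pos hp
  set P := ENNReal.ofReal p with hPdef
  have hPtoReal : P.toReal = p := ENNReal.toReal_ofReal hp0.le
  have hP0 : P ≠ 0 := by simp [hPdef, ENNReal.ofReal_eq_zero]; linarith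
  have hPtop : P ≠ ∞ := ENNReal.ofReal_ne_top
  have hP1 : 1 ≤ P := ENNReal.one_le_ofReal.mpr hp
  have hexp : (0:ℝ) ≤ 1 - 1/p := by
    rw [sub_nonneg, div_le_one hp0]; exact hp
  intro ε hε
  have hε₀ : (0:ℝ) < ε/4 := by linarith
  obtain ⟨r, hr⟩ := hvan (ε/4) hε₀
  set ε₁ : ℝ := (ε/4) / 2^d with hε₁def
  have hε₁ : 0 < ε₁ := by positivity
  obtain ⟨δ, hδpos, hδ⟩ := hcont ε₁ hε₁
  set s : ℝ := δ / (Real.sqrt d + 1) with hsdef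
  have hsd1 : (0:ℝ) < Real.sqrt d + 1 := by positivity
  have hs : 0 < s := div_pos hδpos hsd1
  have hsδ : Real.sqrt d * s < δ := by
    rw [hsdef, mul_div_assoc'] at *
    rw [div_lt_iff₀ hsd1]
    have hd0 : (0:ℝ) ≤ Real.sqrt d := Real.sqrt_nonneg _
    nlinarith
  obtain ⟨n, hn⟩ : ∃ n : ℕ, r < n * s := by
    obtain ⟨n, hn⟩ := exists_nat_gt (r / s)
    exact ⟨n, by rwa [div_lt_iff₀ hs] at hn⟩
  -- the grid
  set kfun : EuclideanSpace ℝ (Fin d) → (Fin d → ℤ) := fun x i => ⌊x i / s⌋ with hkfun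
  have hkmeas : Measurable kfun := by
    apply measurable_pi_lambda
    intro i
    exact Measurable.floor
      (((measurable_pi_apply i).comp (WithLp.measurable_ofLp 2 _) :
        Measurable fun x : EuclideanSpace ℝ (Fin d) => x i).div_const s)
  set Q : (Fin d → ℤ) → Set (EuclideanSpace ℝ (Fin d)) := fun k => kfun ⁻¹' {k} with hQdef
  have hQmeas : ∀ k, MeasurableSet (Q k) := fun k => hkmeas (measurableSet_singleton k)
  have hQmem : ∀ k x, x ∈ Q k ↔ ∀ i, (k i : ℝ) * s ≤ x i ∧ x i < (k i : ℝ) * s + s := by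
    intro k x
    simp only [hQdef, mem_preimage, mem_singleton_iff, funext_iff, hkfun]
    refine forall_congr' fun i => ?_
    rw [Int.floor_eq_iff, le_div_iff₀ hs, div_lt_iff₀ hs]
    constructor <;> rintro ⟨h1, h2⟩ <;> constructor <;> nlinarith
  have hQself : ∀ x, x ∈ Q (kfun x) := fun x => rfl
  have hQeq : ∀ k x, x ∈ Q k → kfun x = k := fun k x hx => hx
  set J : Finset (Fin d → ℤ) := Fintype.piFinset (fun _ => Finset.Ico (-(n:ℤ)) (n:ℤ)) with hJdef
  set E : Set (EuclideanSpace ℝ (Fin d)) := kfun ⁻¹' (J : Set (Fin d → ℤ)) with hEdef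
  have hEmeas : MeasurableSet E := hkmeas (J : Set (Fin d → ℤ)).toFinite.measurableSet
  have hEi : ∀ x, x ∈ E ↔ kfun x ∈ J := fun x => Iff.rfl
  set V : ℝ≥0∞ := (ENNReal.ofReal s)^d with hVdef
  have hQvol : ∀ k, volume (Q k) = V := by
    intro k
    have : Q k = {x : EuclideanSpace ℝ (Fin d) | ∀ i, x i ∈ Ico ((k i:ℝ)*s) ((k i:ℝ)*s + s)} := by
      ext x; simpa [mem_Ico] using hQmem k x
    rw [this, LpTB.volume_coord_box _ (fun i => measurableSet_Ico)]
    simp [Real.volume_Ico, hVdef]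
  have hV0 : V ≠ 0 := by
    simp only [hVdef]
    exact pow_ne_zero _ (by simp [ENNReal.ofReal_eq_zero]; linarith)
  have hVtop : V ≠ ∞ := by simp only [hVdef]; exact ENNReal.pow_ne_top ENNReal.ofReal_ne_top
  have hEc : Eᶜ ⊆ {x : EuclideanSpace ℝ (Fin d) | r < ‖x‖} := by
    intro x hx
    simp only [hEdef, mem_compl_iff, mem_preimage, Finset.coe_sort_coe, Finset.mem_coe,
      hJdef, Fintype.mem_piFinset, not_forall] at hx
    obtain ⟨i, hi⟩ := hx
    rw [Finset.mem_Ico, not_and_or, not_le, not_lt] at hi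
    have hns : (n:ℝ) * s ≤ |x i| := by
      rcases hi with hi | hi
      · have : x i / s < -(n:ℝ) := by
          have := Int.floor_lt.mp hi
          push_cast at this ⊢
          exact this
        rw [div_lt_iff₀ hs] at this
        have : x i < -((n:ℝ) * s) := by nlinarith
        rw [abs_of_neg (by nlinarith)]
        linarith
      · have : ((n:ℤ):ℝ) ≤ x i / s := by exact_mod_cast Int.le_floor.mp hi
        rw [le_div_iff₀ hs] at this
        push_cast at this
        calc (n:ℝ) * s ≤ x i := by linarith
        _ ≤ |x i| := le_abs_self _
    have := LpTB.abs_coord_le_norm x i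
    simp only [mem_setOf_eq]
    linarith
  have hEvol : volume E ≠ ∞ := by
    have : E = ⋃ k ∈ J, Q k := by
      ext x
      simp only [mem_iUnion, exists_prop]
      exact ⟨fun hx => ⟨kfun x, hx, hQself x⟩, fun ⟨k, hk, hx⟩ => by rw [hEi, hQeq k x hx]; exact hk⟩
    rw [this]
    refine (measure_biUnion_finset_le J Q).trans_lt ?_ |>.ne
    simp only [hQvol]
    exact ENNReal.sum_lt_top.mpr fun _ _ => hVtop.lt_top
  have hEunion : E = ⋃ k ∈ J, Q k := by
    ext x
    simp only [mem_iUnion, exists_prop]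
    exact ⟨fun hx => ⟨kfun x, hx, hQself x⟩, fun ⟨k, hk, hx⟩ => by rw [hEi, hQeq k x hx]; exact hk⟩
  -- the difference box
  set D : Set (EuclideanSpace ℝ (Fin d)) := {h | ∀ i, |h i| ≤ s} with hDdef
  have hDmeas : MeasurableSet D := by
    have : D = {x : EuclideanSpace ℝ (Fin d) | ∀ i, x i ∈ Icc (-s) s} := by
      ext x; simp [hDdef, abs_le]
    rw [this]
    have : {x : EuclideanSpace ℝ (Fin d) | ∀ i, x i ∈ Icc (-s) s}
        = ⋂ i, (fun x : EuclideanSpace ℝ (Fin d) => x i) ⁻¹' Icc (-s) s := by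
      ext x; simp
    rw [this]
    exact MeasurableSet.iInter fun i => ((measurable_pi_apply i).comp (WithLp.measurable_ofLp 2 _)) measurableSet_Icc
  have hDvol : volume D = (ENNReal.ofReal (2*s))^d := by
    have : D = {x : EuclideanSpace ℝ (Fin d) | ∀ i, x i ∈ Icc (-s) s} := by
      ext x; simp [hDdef, abs_le]
    rw [this, LpTB.volume_coord_box _ (fun i => measurableSet_Icc)]
    simp [Real.volume_Icc]
    ring_nf
    rw [ENNReal.ofReal_mul' (by norm_num), mul_pow, ENNReal.ofReal_ofNat]
  have hDnorm : ∀ h ∈ D, ‖h‖ < δ := fun h hh =>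
    lt_of_le_of_lt (LpTB.norm_le_of_coords h hs.le hh) hsδ
  have hDdiff : ∀ k x (h : EuclideanSpace ℝ (Fin d)), x ∈ Q k → x + h ∈ Q k → h ∈ D := by
    intro k x h hx hxh
    intro i
    have h1 := (hQmem k x).mp hx i
    have h2 := (hQmem k (x+h)).mp hxh i
    have hadd : (x + h) i = x i + h i := rfl
    rw [hadd] at h2
    rw [abs_le]
    constructor <;> nlinarith [h1.1, h1.2, h2.1, h2.2]
  -- the compact set of possible averages
  set S : Set B := {x ∈ X | g x ≤ 1} with hSdef
  set K : Set B := closure (convexHull ℝ (insert 0 S)) with hKdef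
  have hKconv : Convex ℝ K := (convex_convexHull ℝ _).closure
  have hK0 : (0:B) ∈ K := subset_closure (subset_convexHull ℝ _ (mem_insert 0 S))
  have hKcpt : IsCompact K := by
    apply TotallyBounded.isCompact_of_isClosed _ isClosed_closure
    exact (totallyBounded_convexHull.mpr (hcpt.insert 0)).closure
  set a : ℝ := ((ENNReal.ofReal M)^(1/p) * V^(1-1/p) * V⁻¹).toReal with hadef
  have ha0 : 0 ≤ a := ENNReal.toReal_nonneg
  set coneK : Set (ℝ × B) := {q | 0 ≤ q.1 ∧ ∃ c ∈ K, q.2 = q.1 • c} with hconeKdef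
  have hconeKconv : Convex ℝ coneK := by
    rintro ⟨t₁, x₁⟩ hq₁ ⟨t₂, x₂⟩ hq₂ θ₁ θ₂ hθ₁ hθ₂ hθ
    obtain ⟨ht₁, c₁, hc₁, hx₁⟩ := hq₁
    obtain ⟨ht₂, c₂, hc₂, hx₂⟩ := hq₂
    dsimp only at ht₁ ht₂ hx₁ hx₂
    subst hx₁; subst hx₂
    set T := θ₁ * t₁ + θ₂ * t₂ with hT
    have hT0 : 0 ≤ T := by positivity
    refine ⟨by show (0:ℝ) ≤ θ₁ * t₁ + θ₂ * t₂; positivity, ?_⟩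
    rcases eq_or_lt_of_le hT0 with hT0' | hT0'
    · refine ⟨0, hK0, ?_⟩
      have h1 : θ₁ * t₁ = 0 := by nlinarith
      have h2 : θ₂ * t₂ = 0 := by nlinarith
      show θ₁ • t₁ • c₁ + θ₂ • t₂ • c₂ = (θ₁ * t₁ + θ₂ * t₂) • (0:B)
      rw [smul_smul, smul_smul, h1, h2]; simp
    · refine ⟨(θ₁ * t₁ / T) • c₁ + (θ₂ * t₂ / T) • c₂, ?_, ?_⟩
      · apply hKconv hc₁ hc₂ (by positivity) (by positivity)
        field_simp
        exact hT.symm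
      · show θ₁ • t₁ • c₁ + θ₂ • t₂ • c₂ = (θ₁ * t₁ + θ₂ * t₂) • ((θ₁ * t₁ / T) • c₁ + (θ₂ * t₂ / T) • c₂)
        rw [smul_add, smul_smul, smul_smul, smul_smul, smul_smul, ← hT]
        congr 1 <;> congr 1 <;> field_simp
  set L : Set B := (fun q : ℝ × B => q.1 • q.2) '' ((Icc (0:ℝ) (a+1)) ×ˢ K) with hLdef
  have hLcpt : IsCompact L := (isCompact_Icc.prod hKcpt).image (continuous_fst.smul continuous_snd)
  -- the finite net of values
  set η : ℝ := (ε/4) / ((volume E).toReal ^ (1/p) + 1) with hηdef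
  have hηpos : 0 < η := by
    apply div_pos hε₀
    positivity
  obtain ⟨tset, htfin, htsub⟩ := Metric.totallyBounded_iff.mp hLcpt.totallyBounded η hηpos
  -- step functions
  set Stp : ((Fin d → ℤ) → B) → EuclideanSpace ℝ (Fin d) → B :=
    fun w x => if x ∈ E then w (kfun x) else 0 with hStpdef
  have hStp_sum : ∀ w, Stp w = fun x => ∑ k ∈ J, (Q k).indicator (fun _ => w k) x := by
    intro w
    funext x
    by_cases hx : x ∈ E
    · have hkx : kfun x ∈ J := (hEi x).mp hx
      rw [hStpdef]
      simp only [hx, if_true]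
      rw [Finset.sum_eq_single (kfun x)]
      · rw [indicator_of_mem (hQself x)]
      · intro k hk hne
        exact indicator_of_notMem (fun hmem => hne ((hQeq k x hmem) ▸ rfl)) _
      · intro h; exact absurd hkx h
    · rw [hStpdef]
      simp only [hx, if_false]
      symm
      apply Finset.sum_eq_zero
      intro k hk
      apply indicator_of_notMem
      intro hmem
      exact hx ((hEi x).mpr ((hQeq k x hmem) ▸ hk))
  have hStp_meas : ∀ w, AEStronglyMeasurable (Stp w) volume := by
    intro w
    rw [hStp_sum w]
    apply Finset.aestronglyMeasurable_fun_sum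
    intro k _
    exact (stronglyMeasurable_const.indicator (hQmeas k)).aestronglyMeasurable
  set VV : Set ((Fin d → ℤ) → B) :=
    (fun u : {k // k ∈ J} → B => fun k => if h : k ∈ J then u ⟨k, h⟩ else 0) ''
      (Set.pi Set.univ fun _ => tset) with hVVdef
  have hVVfin : VV.Finite := (Set.Finite.pi fun _ => htfin).image _
  refine ⟨Stp '' VV, hVVfin.image _, ?_⟩
  intro f hf
  -- per-function analysis
  have hfX := hXval f hf
  have hfm := hmeas f hf
  have hgm := hgmeas f hf
  set f₀ := hfm.mk f with hf₀def
  have hf₀meas : StronglyMeasurable f₀ := hfm.stronglyMeasurable_mk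
  have hae : f =ᵐ[volume] f₀ := hfm.ae_eq_mk
  -- integrability on cubes
  have hgle : ∀ k, ∫⁻ x in Q k, ENNReal.ofReal (g (f x)) ∂volume
      ≤ (ENNReal.ofReal M)^(1/p) * V^(1-1/p) := by
    intro k
    have h1 := LpTB.lintegral_le_rpow (μ := volume.restrict (Q k)) hp
      (hgm.ennreal_ofReal.aemeasurable)
    refine h1.trans ?_
    rw [Measure.restrict_apply_univ, hQvol k]
    exact mul_le_mul' (ENNReal.rpow_le_rpow
      ((setLIntegral_le_lintegral _ _).trans (hM f hf)) (by positivity)) le_rfl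
  have hnormle : ∀ x, (‖f x‖₊ : ℝ≥0∞) ≤ ENNReal.ofReal (g (f x)) := by
    intro x
    rw [← enorm_eq_nnnorm, ← ofReal_norm]
    exact ENNReal.ofReal_le_ofReal (hnorm _ (hfX x))
  have hfint : ∀ k, IntegrableOn f (Q k) volume := by
    intro k
    refine ⟨hfm.restrict, ?_⟩
    rw [hasFiniteIntegral_def]
    calc ∫⁻ x in Q k, (‖f x‖₊ : ℝ≥0∞) ∂volume
        ≤ ∫⁻ x in Q k, ENNReal.ofReal (g (f x)) ∂volume := lintegral_mono fun x => hnormle x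
    _ ≤ (ENNReal.ofReal M)^(1/p) * V^(1-1/p) := hgle k
    _ < ∞ := by
        apply ENNReal.mul_lt_top
        · exact (ENNReal.rpow_ne_top_of_nonneg (by positivity) ENNReal.ofReal_ne_top).lt_top
        · exact (ENNReal.rpow_ne_top_of_nonneg hexp hVtop).lt_top
  have hgfint : ∀ k, IntegrableOn (fun x => g (f x)) (Q k) volume := by
    intro k
    refine ⟨(hgm.aestronglyMeasurable).restrict, ?_⟩
    rw [hasFiniteIntegral_def]
    have heq : ∫⁻ x in Q k, (‖g (f x)‖₊ : ℝ≥0∞) ∂volume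
        = ∫⁻ x in Q k, ENNReal.ofReal (g (f x)) ∂volume := by
      apply lintegral_congr
      intro x
      rw [← enorm_eq_nnnorm, ← ofReal_norm, Real.norm_of_nonneg (hg0 _ (hfX x))]
    change ∫⁻ x in Q k, (‖g (f x)‖₊ : ℝ≥0∞) ∂volume < ∞
    rw [heq]
    refine (hgle k).trans_lt ?_
    exact ENNReal.mul_lt_top
      (ENNReal.rpow_ne_top_of_nonneg (by positivity) ENNReal.ofReal_ne_top).lt_top
      (ENNReal.rpow_ne_top_of_nonneg hexp hVtop).lt_top
  have hVinv_top : V⁻¹ ≠ ∞ := ENNReal.inv_ne_top.mpr hV0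
  set ν : (Fin d → ℤ) → Measure (EuclideanSpace ℝ (Fin d)) :=
    fun k => (V⁻¹ • volume.restrict (Q k)) with hνdef
  have hνprob : ∀ k, IsProbabilityMeasure (ν k) := by
    intro k
    constructor
    simp only [hνdef, Measure.smul_apply, Measure.restrict_apply_univ, hQvol k, smul_eq_mul]
    exact ENNReal.inv_mul_cancel hV0 hVtop
  have hfintν : ∀ k, Integrable f (ν k) := fun k => (hfint k).smul_measure hVinv_top
  have hgfintν : ∀ k, Integrable (fun x => g (f x)) (ν k) :=
    fun k => (hgfint k).smul_measure hVinv_top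
  set A : (Fin d → ℤ) → B := fun k => ∫ x, f x ∂(ν k) with hAdef
  set bnd : ℝ≥0∞ := (ENNReal.ofReal M)^(1/p) * V^(1-1/p) * V⁻¹ with hbnddef
  have hbnd_top : bnd ≠ ∞ :=
    ENNReal.mul_ne_top (ENNReal.mul_ne_top
      (ENNReal.rpow_ne_top_of_nonneg (by positivity) ENNReal.ofReal_ne_top)
      (ENNReal.rpow_ne_top_of_nonneg hexp hVtop)) hVinv_top
  have hab : a = bnd.toReal := rfl
  have hAL : ∀ k ∈ J, A k ∈ L := by
    intro k _
    have hQ0 : volume (Q k) ≠ 0 := by rw [hQvol k]; exact hV0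
    have hQtop : volume (Q k) ≠ ∞ := by rw [hQvol k]; exact hVtop
    have hmempair : ∀ᵐ x ∂(volume.restrict (Q k)), (g (f x), f x) ∈ coneK := by
      apply ae_of_all
      intro x
      refine ⟨hg0 _ (hfX x), ?_⟩
      by_cases hzx : g (f x) = 0
      · exact ⟨0, hK0, by dsimp only; rw [hzx, (hgz _ (hfX x)).mp hzx]; simp⟩
      · have hgpos : 0 < g (f x) := lt_of_le_of_ne (hg0 _ (hfX x)) (Ne.symm hzx)
        refine ⟨(g (f x))⁻¹ • f x, ?_, ?_⟩
        · apply subset_closure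
          apply subset_convexHull
          refine mem_insert_of_mem _ ⟨hcone _ (inv_nonneg.mpr hgpos.le) _ (hfX x), ?_⟩
          rw [hgh _ (inv_nonneg.mpr hgpos.le) _ (hfX x), inv_mul_cancel₀ hzx]
        · dsimp only
          rw [smul_inv_smul₀ hzx]
    have hpairint : IntegrableOn (fun x => (g (f x), f x)) (Q k) volume :=
      (hgfint k).prodMk (hfint k)
    have havg := hconeKconv.set_average_mem_closure (μ := volume) (t := Q k)
      hQ0 hQtop hmempair hpairint
    have hpair_eq : (⨍ x in Q k, (g (f x), f x) ∂volume)
        = (∫ x, g (f x) ∂(ν k), ∫ x, f x ∂(ν k)) := by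
      rw [average_eq', Measure.restrict_apply_univ, hQvol k]
      exact integral_pair (hgfintν k) (hfintν k)
    rw [hpair_eq] at havg
    set tb : ℝ := ∫ x, g (f x) ∂(ν k) with htbdef
    have htb0 : 0 ≤ tb := integral_nonneg fun x => hg0 _ (hfX x)
    have htba : tb ≤ a := by
      have h1 : ENNReal.ofReal tb = ∫⁻ x, ENNReal.ofReal (g (f x)) ∂(ν k) :=
        ofReal_integral_eq_lintegral_ofReal (hgfintν k) (ae_of_all _ fun x => hg0 _ (hfX x))
      have h2 : (∫⁻ x, ENNReal.ofReal (g (f x)) ∂(ν k)) ≤ bnd := by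
        rw [hνdef]
        dsimp only
        rw [lintegral_smul_measure]
        calc V⁻¹ * ∫⁻ x in Q k, ENNReal.ofReal (g (f x)) ∂volume
            ≤ V⁻¹ * ((ENNReal.ofReal M)^(1/p) * V^(1-1/p)) := mul_le_mul' le_rfl (hgle k)
        _ = bnd := by rw [hbnddef, mul_comm]
      have h3 : ENNReal.ofReal tb ≤ bnd := h1 ▸ h2
      have h4 := ENNReal.toReal_mono hbnd_top h3
      rwa [ENNReal.toReal_ofReal htb0, ← hab] at h4
    obtain ⟨q, hqmem, hqt⟩ := mem_closure_iff_seq_limit.mp havg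
    have h1 : Filter.Tendsto (fun m => (q m).1) Filter.atTop (nhds tb) :=
      (continuous_fst.tendsto _).comp hqt
    have h2 : Filter.Tendsto (fun m => (q m).2) Filter.atTop (nhds (A k)) :=
      (continuous_snd.tendsto _).comp hqt
    have hev : ∀ᶠ m in Filter.atTop, (q m).1 < a + 1 :=
      h1.eventually_lt_const (by linarith)
    have hevL : ∀ᶠ m in Filter.atTop, (q m).2 ∈ L := by
      filter_upwards [hev] with m hm
      obtain ⟨hge, c, hc, hqc⟩ := hqmem m
      exact ⟨((q m).1, c), ⟨⟨hge, hm.le⟩, hc⟩, hqc.symm⟩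
    exact hLcpt.isClosed.mem_of_tendsto h2 hevL
  -- measurability of the shifted-difference kernel
  have haddmeas : Measurable fun q : EuclideanSpace ℝ (Fin d) × EuclideanSpace ℝ (Fin d) =>
      q.1 + q.2 := measurable_fst.add measurable_snd
  have hTsm : StronglyMeasurable fun q : EuclideanSpace ℝ (Fin d) × EuclideanSpace ℝ (Fin d) =>
      f₀ q.1 - f₀ (q.1 + q.2) :=
    (hf₀meas.comp_measurable measurable_fst).sub (hf₀meas.comp_measurable haddmeas)
  have hTmeas : Measurable fun q : EuclideanSpace ℝ (Fin d) × EuclideanSpace ℝ (Fin d) =>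
      (‖f₀ q.1 - f₀ (q.1 + q.2)‖₊ : ℝ≥0∞) ^ p :=
    hTsm.enorm.pow measurable_const
  -- per-cube estimate
  have hcube : ∀ k, ∫⁻ x in Q k, (‖f x - A k‖₊ : ℝ≥0∞) ^ p ∂volume
      ≤ V⁻¹ * ∫⁻ h in D, ∫⁻ x in Q k,
          (‖f₀ x - f₀ (x + h)‖₊ : ℝ≥0∞) ^ p ∂volume ∂volume := by
    intro k
    haveI := hνprob k
    have e1 : ∫⁻ x in Q k, (‖f x - A k‖₊ : ℝ≥0∞) ^ p ∂volume
        = ∫⁻ x in Q k, (‖f₀ x - A k‖₊ : ℝ≥0∞) ^ p ∂volume := by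
      apply lintegral_congr_ae
      filter_upwards [ae_restrict_of_ae hae] with x hx
      rw [hx]
    rw [e1]
    have hptw : ∀ x, (‖f₀ x - A k‖₊ : ℝ≥0∞) ^ p
        ≤ V⁻¹ * ∫⁻ y in Q k, (‖f₀ x - f₀ y‖₊ : ℝ≥0∞) ^ p ∂volume := by
      intro x
      have hsub : f₀ x - A k = ∫ y, (f₀ x - f y) ∂(ν k) := by
        rw [integral_sub (integrable_const _) (hfintν k), integral_const]
        simp
        rfl
      have hb1 : (‖f₀ x - A k‖₊ : ℝ≥0∞) ≤ ∫⁻ y, (‖f₀ x - f y‖₊ : ℝ≥0∞) ∂(ν k) := by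
        rw [hsub]
        exact enorm_integral_le_lintegral_enorm _
      have hb2 : (∫⁻ y, (‖f₀ x - f y‖₊ : ℝ≥0∞) ∂(ν k))
          ≤ (∫⁻ y, (‖f₀ x - f y‖₊ : ℝ≥0∞) ^ p ∂(ν k)) ^ (1/p) := by
        have hmb : AEMeasurable (fun y => (‖f₀ x - f y‖₊ : ℝ≥0∞)) (ν k) :=
          (aestronglyMeasurable_const.sub (hfintν k).aestronglyMeasurable).enorm
        have := LpTB.lintegral_le_rpow (μ := ν k) hp hmb
        simpa using this
      calc (‖f₀ x - A k‖₊ : ℝ≥0∞) ^ p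
          ≤ ((∫⁻ y, (‖f₀ x - f y‖₊ : ℝ≥0∞) ^ p ∂(ν k)) ^ (1/p)) ^ p :=
            ENNReal.rpow_le_rpow (hb1.trans hb2) hp0.le
      _ = ∫⁻ y, (‖f₀ x - f y‖₊ : ℝ≥0∞) ^ p ∂(ν k) := by
            rw [← ENNReal.rpow_mul, one_div, inv_mul_cancel₀ (ne_of_gt hp0), ENNReal.rpow_one]
      _ = V⁻¹ * ∫⁻ y in Q k, (‖f₀ x - f y‖₊ : ℝ≥0∞) ^ p ∂volume := lintegral_smul_measure _ _
      _ = V⁻¹ * ∫⁻ y in Q k, (‖f₀ x - f₀ y‖₊ : ℝ≥0∞) ^ p ∂volume := by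
            congr 1
            apply lintegral_congr_ae
            filter_upwards [ae_restrict_of_ae hae] with y hy
            rw [hy]
    have hDstep : ∀ x ∈ Q k, ∫⁻ y in Q k, (‖f₀ x - f₀ y‖₊ : ℝ≥0∞) ^ p ∂volume
        ≤ ∫⁻ h in D, (‖f₀ x - f₀ (x + h)‖₊ : ℝ≥0∞) ^ p ∂volume := by
      intro x hx
      rw [← lintegral_indicator (hQmeas k) _, ← lintegral_indicator hDmeas _]
      have hshift := lintegral_add_left_eq_self (μ := volume)
        (fun y => (Q k).indicator (fun y => (‖f₀ x - f₀ y‖₊ : ℝ≥0∞) ^ p) y) x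
      rw [← hshift]
      apply lintegral_mono
      intro h
      dsimp only
      by_cases hmem : x + h ∈ Q k
      · rw [indicator_of_mem hmem, indicator_of_mem (hDdiff k x h hx hmem)]
      · rw [indicator_of_notMem hmem]; exact zero_le
    calc ∫⁻ x in Q k, (‖f₀ x - A k‖₊ : ℝ≥0∞) ^ p ∂volume
        ≤ ∫⁻ x in Q k, V⁻¹ * ∫⁻ h in D,
            (‖f₀ x - f₀ (x + h)‖₊ : ℝ≥0∞) ^ p ∂volume ∂volume := by
          apply setLIntegral_mono' (hQmeas k)
          intro x hx
          exact (hptw x).trans (mul_le_mul' le_rfl (hDstep x hx))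
    _ = V⁻¹ * ∫⁻ x in Q k, ∫⁻ h in D,
            (‖f₀ x - f₀ (x + h)‖₊ : ℝ≥0∞) ^ p ∂volume ∂volume :=
          lintegral_const_mul' _ _ hVinv_top
    _ = V⁻¹ * ∫⁻ h in D, ∫⁻ x in Q k,
            (‖f₀ x - f₀ (x + h)‖₊ : ℝ≥0∞) ^ p ∂volume ∂volume := by
          congr 1
          exact lintegral_lintegral_swap hTmeas.aemeasurable
  -- summing over the cubes
  have hQdisj : (↑J : Set (Fin d → ℤ)).PairwiseDisjoint Q := by
    intro k₁ _ k₂ _ hne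
    refine Set.disjoint_left.mpr fun {x} hx₁ hx₂ => ?_
    exact hne ((hQeq _ _ hx₁).symm.trans (hQeq _ _ hx₂))
  have hEsplit : ∫⁻ x in E, (‖f x - Stp A x‖₊ : ℝ≥0∞) ^ p ∂volume
      = ∑ k ∈ J, ∫⁻ x in Q k, (‖f x - A k‖₊ : ℝ≥0∞) ^ p ∂volume := by
    rw [hEunion, lintegral_biUnion_finset hQdisj (fun k _ => hQmeas k)]
    apply Finset.sum_congr rfl
    intro k hk
    apply setLIntegral_congr_fun (hQmeas k)
    intro x hx
    have hxE : x ∈ E := (hEi x).mpr ((hQeq k x hx) ▸ hk)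
    rw [hStpdef]
    simp only [hxE, if_true, hQeq k x hx]
  have htail_h : ∀ h ∈ D, ∫⁻ x, (‖f₀ x - f₀ (x + h)‖₊ : ℝ≥0∞) ^ p ∂volume
      ≤ (ENNReal.ofReal ε₁) ^ p := by
    intro h hD
    have hmp := measurePreserving_add_right (volume : Measure (EuclideanSpace ℝ (Fin d))) h
    have haeh : (fun x => f (x + h)) =ᵐ[volume] (fun x => f₀ (x + h)) :=
      hmp.quasiMeasurePreserving.ae_eq_comp hae
    have e2 : ∫⁻ x, (‖f₀ x - f₀ (x + h)‖₊ : ℝ≥0∞) ^ p ∂volume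
        = ∫⁻ x, (‖f (x + h) - f x‖₊ : ℝ≥0∞) ^ p ∂volume := by
      apply lintegral_congr_ae
      filter_upwards [hae, haeh] with x hx hxh
      rw [← hx, ← hxh]
      congr 1
      rw [← neg_sub, nnnorm_neg]
    rw [e2]
    have h3 := hδ h (hDnorm h hD) f hf
    rw [eLpNorm_eq_lintegral_rpow_enorm_toReal hP0 hPtop, hPtoReal] at h3
    have h4 := ENNReal.rpow_le_rpow h3.le hp0.le
    rwa [← ENNReal.rpow_mul, one_div, inv_mul_cancel₀ (ne_of_gt hp0), ENNReal.rpow_one] at h4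
  have hEbound : ∫⁻ x in E, (‖f x - Stp A x‖₊ : ℝ≥0∞) ^ p ∂volume
      ≤ (ENNReal.ofReal 2) ^ d * (ENNReal.ofReal ε₁) ^ p := by
    rw [hEsplit]
    calc ∑ k ∈ J, ∫⁻ x in Q k, (‖f x - A k‖₊ : ℝ≥0∞) ^ p ∂volume
        ≤ ∑ k ∈ J, V⁻¹ * ∫⁻ h in D, ∫⁻ x in Q k,
            (‖f₀ x - f₀ (x + h)‖₊ : ℝ≥0∞) ^ p ∂volume ∂volume :=
          Finset.sum_le_sum fun k _ => hcube k
    _ = V⁻¹ * ∫⁻ h in D, ∑ k ∈ J, ∫⁻ x in Q k,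
            (‖f₀ x - f₀ (x + h)‖₊ : ℝ≥0∞) ^ p ∂volume ∂volume := by
          rw [← Finset.mul_sum]
          congr 1
          rw [lintegral_finset_sum' J]
          intro k _
          exact (hTmeas.lintegral_prod_left').aemeasurable
    _ ≤ V⁻¹ * ∫⁻ _h in D, (ENNReal.ofReal ε₁) ^ p ∂volume := by
          apply mul_le_mul' le_rfl
          apply setLIntegral_mono' hDmeas
          intro h hD
          have hsum : ∑ k ∈ J, ∫⁻ x in Q k, (‖f₀ x - f₀ (x + h)‖₊ : ℝ≥0∞) ^ p ∂volume
              = ∫⁻ x in E, (‖f₀ x - f₀ (x + h)‖₊ : ℝ≥0∞) ^ p ∂volume := by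
            rw [hEunion, lintegral_biUnion_finset hQdisj (fun k _ => hQmeas k)]
          rw [hsum]
          exact (setLIntegral_le_lintegral _ _).trans (htail_h h hD)
    _ = V⁻¹ * ((ENNReal.ofReal ε₁) ^ p * volume D) := by rw [setLIntegral_const]
    _ = (ENNReal.ofReal 2) ^ d * (ENNReal.ofReal ε₁) ^ p := by
          rw [hDvol, ENNReal.ofReal_mul (by norm_num : (0:ℝ) ≤ 2), mul_pow]
          calc V⁻¹ * ((ENNReal.ofReal ε₁) ^ p *
                ((ENNReal.ofReal 2) ^ d * (ENNReal.ofReal s) ^ d))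
              = (ENNReal.ofReal 2) ^ d * (ENNReal.ofReal ε₁) ^ p *
                ((ENNReal.ofReal s) ^ d * V⁻¹) := by ring
          _ = (ENNReal.ofReal 2) ^ d * (ENNReal.ofReal ε₁) ^ p := by
              rw [← hVdef, ENNReal.mul_inv_cancel hV0 hVtop, mul_one]
  -- the three pieces
  have hφ2 : eLpNorm (E.indicator fun x => f x - Stp A x) P volume
      ≤ ENNReal.ofReal (ε/4) := by
    rw [eLpNorm_indicator_eq_eLpNorm_restrict hEmeas,
      eLpNorm_eq_lintegral_rpow_enorm_toReal hP0 hPtop, hPtoReal]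
    have h1 : (∫⁻ x in E, (‖f x - Stp A x‖₊ : ℝ≥0∞) ^ p ∂volume) ^ (1/p)
        ≤ ((ENNReal.ofReal 2) ^ d * (ENNReal.ofReal ε₁) ^ p) ^ (1/p) :=
      ENNReal.rpow_le_rpow hEbound (by positivity)
    refine h1.trans ?_
    rw [ENNReal.mul_rpow_of_nonneg _ _ (by positivity), ← ENNReal.rpow_mul,
      mul_one_div_cancel (ne_of_gt hp0), ENNReal.rpow_one]
    have h2 : ((ENNReal.ofReal 2) ^ d) ^ (1/p) ≤ (ENNReal.ofReal 2) ^ d := by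
      rw [← ENNReal.rpow_natCast (ENNReal.ofReal 2) d, ← ENNReal.rpow_mul]
      apply ENNReal.rpow_le_rpow_of_exponent_le (ENNReal.one_le_ofReal.mpr (by norm_num))
      have h1p : 1/p ≤ 1 := by rw [div_le_one hp0]; exact hp
      have : (d:ℝ) * (1/p) ≤ (d:ℝ) * 1 := by
        apply mul_le_mul_of_nonneg_left h1p (by positivity)
      simpa using this
    calc ((ENNReal.ofReal 2) ^ d) ^ (1/p) * ENNReal.ofReal ε₁
        ≤ (ENNReal.ofReal 2) ^ d * ENNReal.ofReal ε₁ := mul_le_mul' h2 le_rfl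
    _ = ENNReal.ofReal (2 ^ d * ε₁) := by
        rw [ENNReal.ofReal_mul (by positivity), ENNReal.ofReal_pow (by norm_num)]
    _ = ENNReal.ofReal (ε/4) := by
        congr 1
        rw [hε₁def, mul_comm, div_mul_cancel₀ _ (ne_of_gt (by positivity : (0:ℝ) < 2^d))]
  have hφ1 : eLpNorm (Eᶜ.indicator f) P volume < ENNReal.ofReal (ε/4) := by
    rw [eLpNorm_indicator_eq_eLpNorm_restrict hEmeas.compl]
    refine lt_of_le_of_lt ?_ (hr f hf)
    exact eLpNorm_mono_measure f (Measure.restrict_mono hEc le_rfl)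
  -- choose approximating values from the net
  have hchoice : ∀ k : {k // k ∈ J}, ∃ z ∈ tset, ‖A k.1 - z‖ < η := by
    intro k
    have := htsub (hAL k.1 k.2)
    simp only [mem_iUnion, exists_prop, Metric.mem_ball] at this
    obtain ⟨z, hz, hdz⟩ := this
    exact ⟨z, hz, by rwa [dist_eq_norm] at hdz⟩
  choose y hy hyd using hchoice
  set v : (Fin d → ℤ) → B := fun k => if h : k ∈ J then y ⟨k, h⟩ else 0 with hvdef
  have hvVV : v ∈ VV := ⟨y, fun k _ => hy k, rfl⟩
  refine ⟨Stp v, mem_image_of_mem _ hvVV, ?_⟩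
  have hφ3 : eLpNorm (fun x => Stp A x - Stp v x) P volume ≤ ENNReal.ofReal (ε/4) := by
    have hb : ∀ x, ‖Stp A x - Stp v x‖ ≤ ‖E.indicator (fun _ => η) x‖ := by
      intro x
      by_cases hx : x ∈ E
      · have hkx : kfun x ∈ J := (hEi x).mp hx
        rw [indicator_of_mem hx, hStpdef, hvdef]
        simp only [hx, if_true, hkx, dif_pos]
        rw [Real.norm_of_nonneg hηpos.le]
        exact (hyd ⟨kfun x, hkx⟩).le
      · rw [indicator_of_notMem hx, hStpdef]
        simp [hx]
    calc eLpNorm (fun x => Stp A x - Stp v x) P volume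
        ≤ eLpNorm (E.indicator fun _ => η) P volume := eLpNorm_mono hb
    _ = ‖η‖₊ * (volume E) ^ (1/P.toReal) := eLpNorm_indicator_const hEmeas hP0 hPtop
    _ ≤ ENNReal.ofReal (ε/4) := by
        rw [hPtoReal]
        have he1 : (‖η‖₊ : ℝ≥0∞) = ENNReal.ofReal η := (Real.enorm_eq_ofReal hηpos.le)
        have he2 : (volume E) ^ (1/p) = ENNReal.ofReal ((volume E).toReal ^ (1/p)) := by
          rw [← ENNReal.ofReal_rpow_of_nonneg ENNReal.toReal_nonneg (by positivity),
            ENNReal.ofReal_toReal hEvol]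
        rw [he1, he2, ← ENNReal.ofReal_mul hηpos.le]
        apply ENNReal.ofReal_le_ofReal
        rw [hηdef]
        set q : ℝ := (volume E).toReal ^ (1/p) with hqdef
        have hq0 : 0 ≤ q := by rw [hqdef]; positivity
        rw [div_mul_eq_mul_div, div_le_iff₀ (by positivity)]
        nlinarith [hε₀.le]
  -- assembling
  have hsplitf : f - Stp v = fun x =>
      Eᶜ.indicator f x + (E.indicator (fun x => f x - Stp A x) x + (Stp A x - Stp v x)) := by
    funext x
    by_cases hx : x ∈ E
    · rw [Pi.sub_apply, indicator_of_notMem (by simpa using hx),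
        indicator_of_mem hx]
      abel
    · rw [Pi.sub_apply, indicator_of_mem (mem_compl hx), indicator_of_notMem hx]
      have h0A : Stp A x = 0 := by rw [hStpdef]; simp [hx]
      have h0v : Stp v x = 0 := by rw [hStpdef]; simp [hx]
      rw [h0A, h0v]
      abel
  rw [hsplitf]
  have hm1 : AEStronglyMeasurable (Eᶜ.indicator f) volume := hfm.indicator hEmeas.compl
  have hm2 : AEStronglyMeasurable (E.indicator fun x => f x - Stp A x) volume :=
    ((hfm.sub (hStp_meas A)).indicator hEmeas)
  have hm3 : AEStronglyMeasurable (fun x => Stp A x - Stp v x) volume :=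
    (hStp_meas A).sub (hStp_meas v)
  have hq4 : ENNReal.ofReal (ε/4) ≠ ∞ := ENNReal.ofReal_ne_top
  calc eLpNorm (fun x =>
        Eᶜ.indicator f x + (E.indicator (fun x => f x - Stp A x) x + (Stp A x - Stp v x)))
        P volume
      ≤ eLpNorm (Eᶜ.indicator f) P volume
        + eLpNorm (fun x => E.indicator (fun x => f x - Stp A x) x + (Stp A x - Stp v x))
            P volume := eLpNorm_add_le hm1 (hm2.add hm3) hP1
  _ ≤ eLpNorm (Eᶜ.indicator f) P volume
        + (eLpNorm (E.indicator fun x => f x - Stp A x) P volume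
          + eLpNorm (fun x => Stp A x - Stp v x) P volume) :=
      add_le_add le_rfl (eLpNorm_add_le hm2 hm3 hP1)
  _ ≤ eLpNorm (Eᶜ.indicator f) P volume + (ENNReal.ofReal (ε/4) + ENNReal.ofReal (ε/4)) :=
      add_le_add le_rfl (add_le_add hφ2 hφ3)
  _ < ENNReal.ofReal (ε/4) + (ENNReal.ofReal (ε/4) + ENNReal.ofReal (ε/4)) :=
      ENNReal.add_lt_add_right (by simp [hq4]) hφ1
  _ ≤ ENNReal.ofReal ε := by
      rw [← ENNReal.ofReal_add hε₀.le hε₀.le, ← ENNReal.ofReal_add hε₀.le (by linarith)]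
      apply ENNReal.ofReal_le_ofReal
      linarith
end

section
/- Under the assumptions of the cone-Ehrling lemma (B, Y Banach subspaces of a common vector space, X ⊂ B a compactly gauged cone, no sequence in B ∩ Y converging to 0 in Y and to a nonzero vector in B), if F ⊂ L^p(ℝ^d; X) ∩ L^p(ℝ^d; Y) is bounded in the gauge L^p-norm and L^p-equicontinuous in L^p(ℝ^d; Y), then F is L^p-equicontinuous in L^p(ℝ^d; B). -/
open MeasureTheory Set
open scoped ENNReal NNReal

theorem ehrling_aux
    {B Y V : Type*}
    [NormedAddCommGroup B] [NormedSpace ℝ B] [CompleteSpace B]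
    [NormedAddCommGroup Y] [NormedSpace ℝ Y]
    [AddCommGroup V] [Module ℝ V]
    (iB : B →ₗ[ℝ] V) (iY : Y →ₗ[ℝ] V)
    (hseq : ∀ (u : ℕ → B) (w : ℕ → Y) (b : B),
      (∀ n, iB (u n) = iY (w n)) →
      Filter.Tendsto w Filter.atTop (nhds 0) →
      Filter.Tendsto u Filter.atTop (nhds b) → b = 0)
    (X : Set B)
    (hcone : ∀ a : ℝ, 0 ≤ a → ∀ x ∈ X, a • x ∈ X)
    (g : B → ℝ)
    (hg0 : ∀ x ∈ X, 0 ≤ g x)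
    (hgh : ∀ a : ℝ, 0 ≤ a → ∀ x ∈ X, g (a • x) = a * g x)
    (hcpt : TotallyBounded {x ∈ X | g x ≤ 1})
    (η : ℝ) (hη : 0 < η) :
    ∃ c > (0:ℝ), ∀ u ∈ X, ∀ v ∈ X, ∀ wu wv : Y,
      iB u = iY wu → iB v = iY wv →
      ‖u - v‖ ≤ η * (g u + g v) + c * ‖wu - wv‖ := by
  by_contra hcon
  push_neg at hcon
  choose u hu v hv wu wv hwu hwv hlt using fun n : ℕ =>
    hcon ((n : ℝ) + 1) (by positivity)
  set t : ℕ → ℝ := fun n => ‖u n - v n‖ with ht_def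
  have hgn : ∀ n, 0 ≤ g (u n) + g (v n) := fun n =>
    add_nonneg (hg0 _ (hu n)) (hg0 _ (hv n))
  have ht : ∀ n, 0 < t n := by
    intro n
    have := hlt n
    have h1 : (0:ℝ) ≤ η * (g (u n) + g (v n)) + ((n:ℝ)+1) * ‖wu n - wv n‖ := by
      have := hgn n; positivity
    linarith
  set u' : ℕ → B := fun n => (t n)⁻¹ • u n with hu'_def
  set v' : ℕ → B := fun n => (t n)⁻¹ • v n with hv'_def
  set w' : ℕ → Y := fun n => (t n)⁻¹ • (wu n - wv n) with hw'_def
  have hinv : ∀ n, (0:ℝ) ≤ (t n)⁻¹ := fun n => (inv_nonneg).2 (ht n).le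
  have hu' : ∀ n, u' n ∈ X := fun n => hcone _ (hinv n) _ (hu n)
  have hv' : ∀ n, v' n ∈ X := fun n => hcone _ (hinv n) _ (hv n)
  have hnorm1 : ∀ n, ‖u' n - v' n‖ = 1 := by
    intro n
    have : u' n - v' n = (t n)⁻¹ • (u n - v n) := by
      simp [hu'_def, hv'_def, smul_sub]
    rw [this, norm_smul, Real.norm_eq_abs, abs_of_nonneg (hinv n)]
    exact inv_mul_cancel₀ (ht n).ne'
  -- gauge bounds
  have hgu' : ∀ n, g (u' n) ≤ η⁻¹ := by
    intro n
    rw [hu'_def]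
    rw [hgh _ (hinv n) _ (hu n)]
    have h1 : η * g (u n) ≤ t n := by
      have := hlt n
      have h2 : (0:ℝ) ≤ ((n:ℝ)+1) * ‖wu n - wv n‖ := by positivity
      have h3 : (0:ℝ) ≤ g (v n) := hg0 _ (hv n)
      nlinarith
    have h4 : g (u n) ≤ t n / η := (le_div_iff₀ hη).2 (by linarith)
    calc (t n)⁻¹ * g (u n) ≤ (t n)⁻¹ * (t n / η) :=
          mul_le_mul_of_nonneg_left h4 (hinv n)
      _ = η⁻¹ := by
          field_simp
          exact div_self (ht n).ne'
  have hgv' : ∀ n, g (v' n) ≤ η⁻¹ := by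
    intro n
    rw [hv'_def]
    rw [hgh _ (hinv n) _ (hv n)]
    have h1 : η * g (v n) ≤ t n := by
      have := hlt n
      have h2 : (0:ℝ) ≤ ((n:ℝ)+1) * ‖wu n - wv n‖ := by positivity
      have h3 : (0:ℝ) ≤ g (u n) := hg0 _ (hu n)
      nlinarith
    have h4 : g (v n) ≤ t n / η := (le_div_iff₀ hη).2 (by linarith)
    calc (t n)⁻¹ * g (v n) ≤ (t n)⁻¹ * (t n / η) :=
          mul_le_mul_of_nonneg_left h4 (hinv n)
      _ = η⁻¹ := by
          field_simp
          exact div_self (ht n).ne'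
  -- w' → 0
  have hw'0 : Filter.Tendsto w' Filter.atTop (nhds 0) := by
    have hb : ∀ n : ℕ, ‖w' n‖ ≤ 1 / ((n:ℝ)+1) := by
      intro n
      have h1 : ((n:ℝ)+1) * ‖wu n - wv n‖ ≤ t n := by
        have := hlt n
        have h2 : (0:ℝ) ≤ η * (g (u n) + g (v n)) := by
          have := hgn n; positivity
        linarith
      have hn1 : (0:ℝ) < (n:ℝ)+1 := by positivity
      have h4 : ‖wu n - wv n‖ ≤ t n / ((n:ℝ)+1) := (le_div_iff₀ hn1).2 (by linarith)
      have : ‖w' n‖ = (t n)⁻¹ * ‖wu n - wv n‖ := by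
        rw [hw'_def]
        simp [norm_smul, Real.norm_eq_abs, abs_of_nonneg (hinv n), (ht n).le]
      rw [this]
      calc (t n)⁻¹ * ‖wu n - wv n‖ ≤ (t n)⁻¹ * (t n / ((n:ℝ)+1)) :=
            mul_le_mul_of_nonneg_left h4 (hinv n)
        _ = 1 / ((n:ℝ)+1) := by field_simp [(ht n).ne']
    exact squeeze_zero_norm hb tendsto_one_div_add_atTop_nhds_zero_nat
  -- compactness
  set S : Set B := {x ∈ X | g x ≤ η⁻¹} with hS_def
  have hStb : TotallyBounded S := by
    have hsub : S ⊆ (fun x : B => η⁻¹ • x) '' {x ∈ X | g x ≤ 1} := by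
      intro x hx
      refine ⟨η • x, ⟨hcone _ hη.le _ hx.1, ?_⟩, ?_⟩
      · rw [hgh _ hη.le _ hx.1]
        calc η * g x ≤ η * η⁻¹ := mul_le_mul_of_nonneg_left hx.2 hη.le
          _ = 1 := mul_inv_cancel₀ hη.ne'
      · simp [smul_smul, inv_mul_cancel₀ hη.ne']
    exact (hcpt.image (uniformContinuous_const_smul η⁻¹)).subset hsub
  have hK : IsCompact (closure S) :=
    hStb.closure.isCompact_of_isClosed isClosed_closure
  have hmemu : ∀ n, u' n ∈ closure S := fun n =>
    subset_closure ⟨hu' n, hgu' n⟩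
  have hmemv : ∀ n, v' n ∈ closure S := fun n =>
    subset_closure ⟨hv' n, hgv' n⟩
  obtain ⟨a, -, φ, hφ, hφa⟩ := hK.tendsto_subseq hmemu
  obtain ⟨b, -, ψ, hψ, hψb⟩ := hK.tendsto_subseq (fun n => hmemv (φ n))
  set σ : ℕ → ℕ := φ ∘ ψ with hσ_def
  have hua : Filter.Tendsto (fun n => u' (σ n)) Filter.atTop (nhds a) :=
    hφa.comp hψ.tendsto_atTop
  have hvb : Filter.Tendsto (fun n => v' (σ n)) Filter.atTop (nhds b) := hψb
  have hcompat' : ∀ n, iB (u' (σ n) - v' (σ n)) = iY (w' (σ n)) := by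
    intro n
    simp only [hu'_def, hv'_def, hw'_def, map_sub, LinearMap.map_smul, hwu, hwv, smul_sub]
  have hdiff : Filter.Tendsto (fun n => u' (σ n) - v' (σ n)) Filter.atTop
      (nhds (a - b)) := hua.sub hvb
  have hw'σ : Filter.Tendsto (fun n => w' (σ n)) Filter.atTop (nhds 0) :=
    hw'0.comp ((hφ.comp hψ).tendsto_atTop)
  have hab : a - b = 0 := hseq _ _ _ hcompat' hw'σ hdiff
  have : Filter.Tendsto (fun n => ‖u' (σ n) - v' (σ n)‖) Filter.atTop
      (nhds ‖a - b‖) := hdiff.norm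
  have h1 : ‖a - b‖ = 1 := by
    have h2 : Filter.Tendsto (fun _ : ℕ => (1:ℝ)) Filter.atTop (nhds ‖a - b‖) := by
      convert this using 1
      ext n; exact (hnorm1 (σ n)).symm
    exact (tendsto_nhds_unique tendsto_const_nhds h2).symm
  rw [hab] at h1
  simp at h1

/-- Under the cone-Ehrling assumptions, a family `F` of pairs `(f, fY)` of compatible
`B`- and `Y`-valued functions that is bounded in the gauge `Lᵖ`-norm and
`Lᵖ`-equicontinuous in `Lᵖ(ℝᵈ; Y)` is `Lᵖ`-equicontinuous in `Lᵖ(ℝᵈ; B)`. -/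
theorem lp_equicontinuous_in_B_of_equicontinuous_in_Y
    {d : ℕ} {B Y V : Type*}
    [NormedAddCommGroup B] [NormedSpace ℝ B] [CompleteSpace B]
    [NormedAddCommGroup Y] [NormedSpace ℝ Y] [CompleteSpace Y]
    [AddCommGroup V] [Module ℝ V]
    (iB : B →ₗ[ℝ] V) (iY : Y →ₗ[ℝ] V)
    (hiB : Function.Injective iB) (hiY : Function.Injective iY)
    (hseq : ∀ (u : ℕ → B) (w : ℕ → Y) (b : B),
      (∀ n, iB (u n) = iY (w n)) →
      Filter.Tendsto w Filter.atTop (nhds 0) →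
      Filter.Tendsto u Filter.atTop (nhds b) → b = 0)
    (X : Set B)
    (hcone : ∀ a : ℝ, 0 ≤ a → ∀ x ∈ X, a • x ∈ X)
    (g : B → ℝ)
    (hg0 : ∀ x ∈ X, 0 ≤ g x)
    (hgh : ∀ a : ℝ, 0 ≤ a → ∀ x ∈ X, g (a • x) = a * g x)
    (hgz : ∀ x ∈ X, (g x = 0 ↔ x = 0))
    (hcpt : TotallyBounded {x ∈ X | g x ≤ 1})
    (p : ℝ) (hp : 1 ≤ p)
    (F : Set ((EuclideanSpace ℝ (Fin d) → B) × (EuclideanSpace ℝ (Fin d) → Y)))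
    (hcompat : ∀ q ∈ F, ∀ x, iB (q.1 x) = iY (q.2 x))
    (hXval : ∀ q ∈ F, ∀ x, q.1 x ∈ X)
    (hmeas : ∀ q ∈ F, AEStronglyMeasurable q.1 volume)
    (hgmeas : ∀ q ∈ F, Measurable fun x => g (q.1 x))
    (hbdd : ∃ M : ℝ, ∀ q ∈ F,
      ∫⁻ x, ENNReal.ofReal (g (q.1 x)) ^ p ≤ ENNReal.ofReal M)
    (hcont : ∀ ε > (0:ℝ), ∃ δ > (0:ℝ), ∀ h : EuclideanSpace ℝ (Fin d), ‖h‖ < δ →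
      ∀ q ∈ F, eLpNorm (fun x => q.2 (x + h) - q.2 x) (ENNReal.ofReal p) volume
        < ENNReal.ofReal ε) :
    ∀ ε > (0:ℝ), ∃ δ > (0:ℝ), ∀ h : EuclideanSpace ℝ (Fin d), ‖h‖ < δ →
      ∀ q ∈ F, eLpNorm (fun x => q.1 (x + h) - q.1 x) (ENNReal.ofReal p) volume
        < ENNReal.ofReal ε := by
  intro ε hε
  obtain ⟨M, hM⟩ := hbdd
  set M₀ : ℝ := max M 0 with hM₀def
  have hM₀ : 0 ≤ M₀ := le_max_right _ _
  set s : ℝ := M₀ ^ (1/p) with hsdef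
  have hs : 0 ≤ s := Real.rpow_nonneg hM₀ _
  set η : ℝ := ε / (4*(s+1)) with hηdef
  have hη : 0 < η := by positivity
  obtain ⟨c, hc, hEhr⟩ := ehrling_aux iB iY hseq X hcone g hg0 hgh hcpt η hη
  obtain ⟨δ, hδ, hδ'⟩ := hcont (ε/(4*c)) (by positivity)
  refine ⟨δ, hδ, fun h hh q hq => ?_⟩
  have hp0 : (0:ℝ) < p := lt_of_lt_of_le one_pos hp
  set P : ℝ≥0∞ := ENNReal.ofReal p with hPdef
  have hP1 : 1 ≤ P := ENNReal.one_le_ofReal.mpr hp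
  have hP0 : P ≠ 0 := by
    simp [hPdef, ENNReal.ofReal_eq_zero]; linarith
  have hPtop : P ≠ ⊤ := ENNReal.ofReal_ne_top
  have hPto : P.toReal = p := ENNReal.toReal_ofReal hp0.le
  have mp : MeasurePreserving (fun x : EuclideanSpace ℝ (Fin d) => x + h)
      volume volume := measurePreserving_add_right volume h
  have hf : AEStronglyMeasurable q.1 volume := hmeas q hq
  have hfh : AEStronglyMeasurable (fun x => q.1 (x + h)) volume :=
    hf.comp_measurePreserving mp
  have hgf : Measurable (fun x => g (q.1 x)) := hgmeas q hq
  have hgfh : Measurable (fun x => g (q.1 (x + h))) :=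
    hgf.comp (measurable_add_const h)
  set A : EuclideanSpace ℝ (Fin d) → ℝ :=
    fun x => η * (g (q.1 (x+h)) + g (q.1 x)) with hAdef
  have hA0 : ∀ x, 0 ≤ A x := fun x =>
    mul_nonneg hη.le (add_nonneg (hg0 _ (hXval q hq _)) (hg0 _ (hXval q hq _)))
  have hAmeas : AEStronglyMeasurable A volume :=
    ((hgfh.add hgf).const_mul η).aestronglyMeasurable
  set C' : EuclideanSpace ℝ (Fin d) → ℝ :=
    fun x => max (‖q.1 (x+h) - q.1 x‖ - A x) 0 with hC'def
  have hC'0 : ∀ x, 0 ≤ C' x := fun x => le_max_right _ _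
  have hC'meas : AEStronglyMeasurable C' volume := by
    have h1 : AEStronglyMeasurable (fun x => ‖q.1 (x+h) - q.1 x‖ - A x) volume :=
      (hfh.sub hf).norm.sub hAmeas
    exact (h1.aemeasurable.max aemeasurable_const).aestronglyMeasurable
  have key : ∀ x, ‖q.1 (x+h) - q.1 x‖ ≤ A x + c * ‖q.2 (x+h) - q.2 x‖ := fun x =>
    hEhr _ (hXval q hq _) _ (hXval q hq _) _ _ (hcompat q hq _) (hcompat q hq _)
  have hC'le : ∀ x, C' x ≤ c * ‖q.2 (x+h) - q.2 x‖ := fun x =>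
    max_le (by linarith [key x]) (by positivity)
  -- step 1 : pointwise domination
  have step1 : eLpNorm (fun x => q.1 (x + h) - q.1 x) P volume ≤
      eLpNorm (fun x => A x + C' x) P volume := by
    apply eLpNorm_mono
    intro x
    rw [Real.norm_eq_abs, abs_of_nonneg (add_nonneg (hA0 x) (hC'0 x))]
    have := le_max_left (‖q.1 (x+h) - q.1 x‖ - A x) 0
    linarith
  have step2 : eLpNorm (fun x => A x + C' x) P volume ≤
      eLpNorm A P volume + eLpNorm C' P volume :=
    eLpNorm_add_le hAmeas hC'meas hP1
  have step3 : eLpNorm C' P volume ≤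
      eLpNorm (fun x => c * ‖q.2 (x+h) - q.2 x‖) P volume := by
    apply eLpNorm_mono
    intro x
    rw [Real.norm_eq_abs, abs_of_nonneg (hC'0 x), Real.norm_eq_abs,
      abs_of_nonneg (by positivity : (0:ℝ) ≤ c * ‖q.2 (x+h) - q.2 x‖)]
    exact hC'le x
  have step4 : eLpNorm (fun x => c * ‖q.2 (x+h) - q.2 x‖) P volume =
      ENNReal.ofReal c * eLpNorm (fun x => q.2 (x+h) - q.2 x) P volume := by
    have e1 := eLpNorm_const_smul (𝕜 := ℝ) c
      (fun x : EuclideanSpace ℝ (Fin d) => ‖q.2 (x+h) - q.2 x‖) P volume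
    have e2 : (fun x : EuclideanSpace ℝ (Fin d) => c * ‖q.2 (x+h) - q.2 x‖) =
        c • (fun x : EuclideanSpace ℝ (Fin d) => ‖q.2 (x+h) - q.2 x‖) := rfl
    rw [e2, e1, Real.enorm_eq_ofReal hc.le,
      eLpNorm_norm (fun x => q.2 (x+h) - q.2 x)]
  have step5 : eLpNorm A P volume ≤
      ENNReal.ofReal η * (eLpNorm (fun x => g (q.1 (x+h))) P volume +
        eLpNorm (fun x => g (q.1 x)) P volume) := by
    have e1 := eLpNorm_const_smul (𝕜 := ℝ) η
      (fun x : EuclideanSpace ℝ (Fin d) => g (q.1 (x+h)) + g (q.1 x)) P volume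
    have e2 : A = η • (fun x : EuclideanSpace ℝ (Fin d) =>
        g (q.1 (x+h)) + g (q.1 x)) := rfl
    rw [e2, e1, Real.enorm_eq_ofReal hη.le]
    exact mul_le_mul_right (eLpNorm_add_le hgfh.aestronglyMeasurable
      hgf.aestronglyMeasurable hP1) _
  have step6 : eLpNorm (fun x => g (q.1 (x+h))) P volume =
      eLpNorm (fun x => g (q.1 x)) P volume :=
    eLpNorm_comp_measurePreserving hgf.aestronglyMeasurable mp
  have step7 : eLpNorm (fun x => g (q.1 x)) P volume ≤ ENNReal.ofReal s := by
    rw [eLpNorm_eq_lintegral_rpow_enorm_toReal hP0 hPtop, hPto]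
    have e1 : ∀ x, ‖g (q.1 x)‖ₑ ^ p =
        ENNReal.ofReal (g (q.1 x)) ^ p := by
      intro x
      rw [← Real.enorm_eq_ofReal (hg0 _ (hXval q hq x))]
    simp_rw [e1]
    calc (∫⁻ x, ENNReal.ofReal (g (q.1 x)) ^ p) ^ (1/p)
        ≤ (ENNReal.ofReal M) ^ (1/p) :=
          ENNReal.rpow_le_rpow (hM q hq) (by positivity)
      _ ≤ (ENNReal.ofReal M₀) ^ (1/p) :=
          ENNReal.rpow_le_rpow (ENNReal.ofReal_le_ofReal (le_max_left _ _))
            (by positivity)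
      _ = ENNReal.ofReal s := by
          rw [hsdef, ← ENNReal.ofReal_rpow_of_nonneg hM₀ (by positivity)]
  -- combine
  have hw : eLpNorm (fun x => q.2 (x + h) - q.2 x) P volume
      < ENNReal.ofReal (ε/(4*c)) := hδ' h hh q hq
  have T2lt : ENNReal.ofReal c * eLpNorm (fun x => q.2 (x + h) - q.2 x) P volume
      < ENNReal.ofReal (ε/4) := by
    calc ENNReal.ofReal c * eLpNorm (fun x => q.2 (x + h) - q.2 x) P volume
        < ENNReal.ofReal c * ENNReal.ofReal (ε/(4*c)) := by
          rw [ENNReal.mul_lt_mul_iff_right ((ENNReal.ofReal_pos.mpr hc).ne')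
            ENNReal.ofReal_ne_top]
          exact hw
      _ = ENNReal.ofReal (c * (ε/(4*c))) := (ENNReal.ofReal_mul hc.le).symm
      _ = ENNReal.ofReal (ε/4) := by
          congr 1; field_simp
  have T1le : ENNReal.ofReal η * (eLpNorm (fun x => g (q.1 (x+h))) P volume +
      eLpNorm (fun x => g (q.1 x)) P volume) ≤ ENNReal.ofReal (ε/2) := by
    calc ENNReal.ofReal η * (eLpNorm (fun x => g (q.1 (x+h))) P volume +
        eLpNorm (fun x => g (q.1 x)) P volume)
        ≤ ENNReal.ofReal η * (ENNReal.ofReal s + ENNReal.ofReal s) := by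
          apply mul_le_mul_right
          exact add_le_add (step6 ▸ step7) step7
      _ = ENNReal.ofReal (η * (s + s)) := by
          rw [← ENNReal.ofReal_add hs hs, ← ENNReal.ofReal_mul hη.le]
      _ ≤ ENNReal.ofReal (ε/2) := by
          apply ENNReal.ofReal_le_ofReal
          rw [hηdef]
          rw [div_mul_eq_mul_div, div_le_div_iff₀ (by positivity) (by norm_num)]
          nlinarith
  calc eLpNorm (fun x => q.1 (x + h) - q.1 x) P volume
      ≤ eLpNorm A P volume + eLpNorm C' P volume := le_trans step1 step2
    _ ≤ (ENNReal.ofReal η * (eLpNorm (fun x => g (q.1 (x+h))) P volume +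
          eLpNorm (fun x => g (q.1 x)) P volume)) +
        (ENNReal.ofReal c * eLpNorm (fun x => q.2 (x + h) - q.2 x) P volume) :=
          add_le_add step5 (le_trans step3 (le_of_eq step4))
    _ < ENNReal.ofReal (ε/2) + ENNReal.ofReal (ε/4) :=
          ENNReal.add_lt_add_of_le_of_lt
            (ne_top_of_le_ne_top ENNReal.ofReal_ne_top T1le) T1le T2lt
    _ = ENNReal.ofReal (ε/2 + ε/4) := (ENNReal.ofReal_add (by positivity) (by positivity)).symm
    _ < ENNReal.ofReal ε := by
          rw [ENNReal.ofReal_lt_ofReal_iff hε]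
          linarith
end

section
/- Let B be a Banach space, 1 ≤ p < ∞, and F ⊂ L^p(0,T; B) bounded and L^p-equicontinuous on (0,T) (i.e., ∫_0^{T−h} ‖f(t+h) − f(t)‖^p dt → 0 as h → 0⁺ uniformly in F). Then ∫_0^h ‖f(t)‖^p dt → 0 and ∫_{T−h}^T ‖f(t)‖^p dt → 0 as h → 0⁺, uniformly for f ∈ F; consequently, extending each f by zero outside (0,T), the extended family is L^p-equicontinuous on ℝ in the full-line sense (∫_ℝ ‖f(t+h) − f(t)‖^p dt → 0 uniformly). -/
open MeasureTheory Set
open scoped ENNReal NNReal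

private lemma ebz_ptwise {B : Type*} [NormedAddCommGroup B] {p : ℝ} (hp : 1 ≤ p) (a b : B) :
    (‖a‖₊ : ℝ≥0∞) ^ p ≤ (2 : ℝ≥0∞) ^ (p - 1) * ((‖a - b‖₊ : ℝ≥0∞) ^ p + (‖b‖₊ : ℝ≥0∞) ^ p) := by
  have h1 : (‖a‖₊ : ℝ≥0∞) ≤ (‖a - b‖₊ : ℝ≥0∞) + (‖b‖₊ : ℝ≥0∞) := by
    have h := nnnorm_add_le (a - b) b
    rw [sub_add_cancel] at h
    exact_mod_cast h
  calc (‖a‖₊ : ℝ≥0∞) ^ p ≤ ((‖a - b‖₊ : ℝ≥0∞) + (‖b‖₊ : ℝ≥0∞)) ^ p :=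
        ENNReal.rpow_le_rpow h1 (by linarith)
    _ ≤ _ := ENNReal.rpow_add_le_mul_rpow_add_rpow _ _ hp

private lemma ebz_shift (g : ℝ → ℝ≥0∞) (r : ℝ) (s : Set ℝ) :
    ∫⁻ t in (fun t : ℝ => t + r) ⁻¹' s, g (t + r) = ∫⁻ t in s, g t :=
  (measurePreserving_add_right volume r).setLIntegral_comp_preimage_emb
    (MeasurableEquiv.addRight r).measurableEmbedding g s

private lemma ebz_shift_Ioo (g : ℝ → ℝ≥0∞) (r a b : ℝ) :
    ∫⁻ t in Ioo a b, g (t + r) = ∫⁻ t in Ioo (a + r) (b + r), g t := by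
  have hs : Ioo a b = (fun t : ℝ => t + r) ⁻¹' Ioo (a + r) (b + r) := by
    ext t
    simp only [mem_Ioo, mem_preimage]
    constructor <;> rintro ⟨h1, h2⟩ <;> constructor <;> linarith
  rw [hs, ebz_shift]

private lemma ebz_nnnorm_rev {B : Type*} [NormedAddCommGroup B] (a b : B) :
    ‖a - b‖₊ = ‖b - a‖₊ := by rw [← neg_sub, nnnorm_neg]

private lemma ebz_pigeon {N : ℕ} (hN : 0 < N) (a : ℕ → ℝ≥0∞) {S : ℝ≥0∞} (hS : S ≠ ∞)
    (h : ∑ k ∈ Finset.range N, a k ≤ S) : ∃ k, k < N ∧ a k ≤ S / (N : ℝ≥0∞) := by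
  by_contra hc
  push_neg at hc
  have hNne : (N : ℝ≥0∞) ≠ 0 := by exact_mod_cast hN.ne'
  have hlt : ∑ _k ∈ Finset.range N, S / (N : ℝ≥0∞) < ∑ k ∈ Finset.range N, a k := by
    refine ENNReal.sum_lt_sum_of_nonempty (Finset.nonempty_range_iff.2 hN.ne') ?_
    intro k hk
    exact hc k (Finset.mem_range.1 hk)
  rw [Finset.sum_const, Finset.card_range, nsmul_eq_mul,
    ENNReal.mul_div_cancel hNne (ENNReal.natCast_ne_top N)] at hlt
  exact absurd (hlt.trans_le h) (lt_irrefl S)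

set_option maxHeartbeats 1000000 in
/-- If `F ⊂ Lᵖ(0,T;B)` is bounded and `Lᵖ`-equicontinuous on `(0,T)` (restricted
translates), then the integrals of `‖f‖ᵖ` near both endpoints vanish uniformly, and the
extensions by zero form an `Lᵖ`-equicontinuous family on all of `ℝ`. -/
theorem extension_by_zero_equicontinuous
    {B : Type*} [NormedAddCommGroup B] [NormedSpace ℝ B] [CompleteSpace B]
    (T : ℝ) (hT : 0 < T) (p : ℝ) (hp : 1 ≤ p)
    (F : Set (ℝ → B))
    (hmeas : ∀ f ∈ F, AEStronglyMeasurable f volume)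
    (hzero : ∀ f ∈ F, ∀ t : ℝ, t ∉ Ioo 0 T → f t = 0)
    (hbdd : ∃ M : ℝ, ∀ f ∈ F,
      ∫⁻ t in Ioo 0 T, (‖f t‖₊ : ℝ≥0∞) ^ p ≤ ENNReal.ofReal M)
    (hcont : ∀ ε > (0:ℝ), ∃ δ > (0:ℝ), ∀ h : ℝ, 0 < h → h < δ → ∀ f ∈ F,
      ∫⁻ t in Ioo 0 (T - h), (‖f (t + h) - f t‖₊ : ℝ≥0∞) ^ p < ENNReal.ofReal ε) :
    (∀ ε > (0:ℝ), ∃ δ > (0:ℝ), ∀ h : ℝ, 0 < h → h < δ → ∀ f ∈ F,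
      ∫⁻ t in Ioo 0 h, (‖f t‖₊ : ℝ≥0∞) ^ p < ENNReal.ofReal ε ∧
      ∫⁻ t in Ioo (T - h) T, (‖f t‖₊ : ℝ≥0∞) ^ p < ENNReal.ofReal ε) ∧
    (∀ ε > (0:ℝ), ∃ δ > (0:ℝ), ∀ h : ℝ, |h| < δ → ∀ f ∈ F,
      ∫⁻ t, (‖f (t + h) - f t‖₊ : ℝ≥0∞) ^ p < ENNReal.ofReal ε) := by
  have hp0 : (0:ℝ) < p := lt_of_lt_of_le one_pos hp
  obtain ⟨M, hM0⟩ := hbdd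
  set M' : ℝ := max M 0 with hM'def
  have hM'0 : (0:ℝ) ≤ M' := le_max_right _ _
  have hM : ∀ f ∈ F, ∫⁻ t in Ioo 0 T, (‖f t‖₊ : ℝ≥0∞) ^ p ≤ ENNReal.ofReal M' := fun f hf =>
    (hM0 f hf).trans (ENNReal.ofReal_le_ofReal (le_max_left _ _))
  set r : ℝ := (2:ℝ) ^ (p - 1) with hrdef
  have hrpos : 0 < r := Real.rpow_pos_of_pos two_pos _
  have hc : (2 : ℝ≥0∞) ^ (p - 1) = ENNReal.ofReal r := by
    rw [hrdef, ← ENNReal.ofReal_rpow_of_pos two_pos]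
    norm_num
  have key1 : ∀ ε > (0:ℝ), ∃ δ > (0:ℝ), ∀ h : ℝ, 0 < h → h < δ → ∀ f ∈ F,
      ∫⁻ t in Ioo 0 h, (‖f t‖₊ : ℝ≥0∞) ^ p < ENNReal.ofReal ε ∧
      ∫⁻ t in Ioo (T - h) T, (‖f t‖₊ : ℝ≥0∞) ^ p < ENNReal.ofReal ε := by
    intro ε hε
    have hε'pos : 0 < ε / (4 * r) := by positivity
    obtain ⟨δ₁, hδ₁pos, hδ₁⟩ := hcont (ε / (4 * r)) hε'pos
    set N : ℕ := ⌈M' * (4 * r) / ε⌉₊ + 1 with hNdef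
    have hNpos : 0 < N := Nat.succ_pos _
    have hNR : (0:ℝ) < N := by exact_mod_cast hNpos
    have hNbound : M' / N ≤ ε / (4 * r) := by
      rw [div_le_div_iff₀ hNR (by positivity)]
      have h1 : M' * (4 * r) / ε ≤ (N : ℝ) := by
        calc M' * (4 * r) / ε ≤ (⌈M' * (4 * r) / ε⌉₊ : ℝ) := Nat.le_ceil _
          _ ≤ (N : ℝ) := by exact_mod_cast Nat.le_succ _
      rw [div_le_iff₀ hε] at h1
      linarith
    refine ⟨min δ₁ T / (N + 2), by positivity, ?_⟩
    intro h hh0 hhδ f hf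
    have hNh : h * ((N:ℝ) + 2) < min δ₁ T := (lt_div_iff₀ (by positivity)).1 hhδ
    have hNhδ : h * ((N:ℝ) + 2) < δ₁ := lt_of_lt_of_le hNh (min_le_left _ _)
    have hNhT : h * ((N:ℝ) + 2) < T := lt_of_lt_of_le hNh (min_le_right _ _)
    have hfae : AEStronglyMeasurable f volume := hmeas f hf
    -- the final numeric estimate, used twice
    have hfinal : ENNReal.ofReal r *
        (ENNReal.ofReal (ε / (4 * r)) + ENNReal.ofReal M' / (N : ℝ≥0∞)) ≤ ENNReal.ofReal ε := by
      have hdiv : ENNReal.ofReal M' / (N : ℝ≥0∞) = ENNReal.ofReal (M' / N) := by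
        rw [ENNReal.ofReal_div_of_pos hNR, ENNReal.ofReal_natCast]
      rw [hdiv, ← ENNReal.ofReal_add (by positivity) (by positivity),
        ← ENNReal.ofReal_mul hrpos.le]
      apply ENNReal.ofReal_le_ofReal
      calc r * (ε / (4 * r) + M' / N) ≤ r * (ε / (4 * r) + ε / (4 * r)) :=
            mul_le_mul_of_nonneg_left (by linarith) hrpos.le
        _ = ε / 2 := by field_simp; ring
        _ ≤ ε := by linarith
    have hdivne : ENNReal.ofReal M' / (N : ℝ≥0∞) ≠ ⊤ := by
      simp [ENNReal.div_eq_top, hNpos.ne', ENNReal.ofReal_ne_top]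
    constructor
    · -- left endpoint
      have hsum : ∑ k ∈ Finset.range N,
          ∫⁻ t in Ioo (((k:ℝ) + 1) * h) (((k:ℝ) + 1) * h + h), (‖f t‖₊ : ℝ≥0∞) ^ p
          ≤ ENNReal.ofReal M' := by
        have hdisj : Set.PairwiseDisjoint (↑(Finset.range N))
            (fun k : ℕ => Ioo (((k:ℝ) + 1) * h) (((k:ℝ) + 1) * h + h)) := by
          intro i _ j _ hij
          refine Set.Ioo_disjoint_Ioo.2 ?_
          rcases hij.lt_or_gt with hlt | hlt
          · have hij' : (i:ℝ) + 1 ≤ (j:ℝ) := by exact_mod_cast hlt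
            have := mul_le_mul_of_nonneg_right hij' hh0.le
            exact le_trans (min_le_left _ _) (le_trans (by linarith) (le_max_right _ _))
          · have hij' : (j:ℝ) + 1 ≤ (i:ℝ) := by exact_mod_cast hlt
            have := mul_le_mul_of_nonneg_right hij' hh0.le
            exact le_trans (min_le_right _ _) (le_trans (by linarith) (le_max_left _ _))
        calc ∑ k ∈ Finset.range N,
              ∫⁻ t in Ioo (((k:ℝ) + 1) * h) (((k:ℝ) + 1) * h + h), (‖f t‖₊ : ℝ≥0∞) ^ p
            = ∫⁻ t in ⋃ k ∈ Finset.range N,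
                Ioo (((k:ℝ) + 1) * h) (((k:ℝ) + 1) * h + h), (‖f t‖₊ : ℝ≥0∞) ^ p :=
              (lintegral_biUnion_finset hdisj (fun k _ => measurableSet_Ioo) _).symm
          _ ≤ ∫⁻ t in Ioo 0 T, (‖f t‖₊ : ℝ≥0∞) ^ p := by
              refine lintegral_mono_set (iUnion₂_subset fun k hk => ?_)
              rw [Finset.mem_range] at hk
              have hkN : (k:ℝ) + 1 ≤ N := by exact_mod_cast Nat.succ_le_of_lt hk
              have hk0 : (0:ℝ) ≤ k := Nat.cast_nonneg k
              have hmul := mul_le_mul_of_nonneg_right hkN hh0.le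
              have hpos := mul_pos (show (0:ℝ) < (k:ℝ) + 1 by positivity) hh0
              rintro t ⟨ht1, ht2⟩
              exact ⟨by linarith, by linarith⟩
          _ ≤ ENNReal.ofReal M' := hM f hf
      obtain ⟨k, hkN, hak⟩ := ebz_pigeon hNpos _ ENNReal.ofReal_ne_top hsum
      set rr : ℝ := ((k:ℝ) + 1) * h with hrrdef
      have hk1N : (k:ℝ) + 1 ≤ N := by exact_mod_cast Nat.succ_le_of_lt hkN
      have hk0 : (0:ℝ) ≤ k := Nat.cast_nonneg k
      have hmul := mul_le_mul_of_nonneg_right hk1N hh0.le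
      have hrr0 : 0 < rr := by rw [hrrdef]; positivity
      have hrrδ₁ : rr < δ₁ := by rw [hrrdef]; linarith
      have hrrh : rr + h ≤ T := by rw [hrrdef]; linarith
      have hb2 : ∫⁻ t in Ioo 0 h, (‖f (t + rr) - f t‖₊ : ℝ≥0∞) ^ p
          < ENNReal.ofReal (ε / (4 * r)) :=
        lt_of_le_of_lt (lintegral_mono_set (Ioo_subset_Ioo le_rfl (by linarith)))
          (hδ₁ rr hrr0 hrrδ₁ f hf)
      have hb3 : ∫⁻ t in Ioo 0 h, (‖f (t + rr)‖₊ : ℝ≥0∞) ^ p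
          ≤ ENNReal.ofReal M' / (N : ℝ≥0∞) := by
        have hsh := ebz_shift_Ioo (fun t => (‖f t‖₊ : ℝ≥0∞) ^ p) rr 0 h
        rw [zero_add] at hsh
        rw [hsh]
        rw [add_comm h rr]
        exact hak
      have hmono : ∫⁻ t in Ioo 0 h, (‖f t‖₊ : ℝ≥0∞) ^ p ≤
          (2:ℝ≥0∞) ^ (p - 1) * ((∫⁻ t in Ioo 0 h, (‖f (t + rr) - f t‖₊ : ℝ≥0∞) ^ p) +
            ∫⁻ t in Ioo 0 h, (‖f (t + rr)‖₊ : ℝ≥0∞) ^ p) := by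
        have step1 : ∫⁻ t in Ioo 0 h, (‖f t‖₊ : ℝ≥0∞) ^ p ≤
            ∫⁻ t in Ioo 0 h, (2:ℝ≥0∞) ^ (p - 1) *
              ((‖f (t + rr) - f t‖₊ : ℝ≥0∞) ^ p + (‖f (t + rr)‖₊ : ℝ≥0∞) ^ p) := by
          refine lintegral_mono fun t => ?_
          have hpt := ebz_ptwise hp (f t) (f (t + rr))
          rwa [ebz_nnnorm_rev (f t) (f (t + rr))] at hpt
        rw [lintegral_const_mul' _ _ (by rw [hc]; exact ENNReal.ofReal_ne_top)] at step1
        refine step1.trans (le_of_eq ?_)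
        refine congrArg (fun z => (2:ℝ≥0∞) ^ (p - 1) * z) ?_
        have hftr : AEStronglyMeasurable (fun t => f (t + rr)) volume :=
          hfae.comp_quasiMeasurePreserving
            (measurePreserving_add_right volume rr).quasiMeasurePreserving
        have hu : AEMeasurable (fun t => (‖f (t + rr) - f t‖₊ : ℝ≥0∞) ^ p) volume :=
          (hftr.sub hfae).enorm.pow_const p
        exact lintegral_add_left' hu.restrict _
      refine hmono.trans_lt (lt_of_lt_of_le ?_ hfinal)
      rw [hc]
      exact (ENNReal.mul_lt_mul_iff_right (ENNReal.ofReal_pos.2 hrpos).ne' ENNReal.ofReal_ne_top).2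
        (ENNReal.add_lt_add_of_lt_of_le (ne_top_of_le_ne_top hdivne hb3) hb2 hb3)
    · -- right endpoint
      have hsum : ∑ k ∈ Finset.range N,
          ∫⁻ t in Ioo (T - h - ((k:ℝ) + 1) * h) (T - ((k:ℝ) + 1) * h), (‖f t‖₊ : ℝ≥0∞) ^ p
          ≤ ENNReal.ofReal M' := by
        have hdisj : Set.PairwiseDisjoint (↑(Finset.range N))
            (fun k : ℕ => Ioo (T - h - ((k:ℝ) + 1) * h) (T - ((k:ℝ) + 1) * h)) := by
          intro i _ j _ hij
          refine Set.Ioo_disjoint_Ioo.2 ?_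
          rcases hij.lt_or_gt with hlt | hlt
          · have hij' : (i:ℝ) + 1 ≤ (j:ℝ) := by exact_mod_cast hlt
            have := mul_le_mul_of_nonneg_right hij' hh0.le
            exact le_trans (min_le_right _ _) (le_trans (by linarith) (le_max_left _ _))
          · have hij' : (j:ℝ) + 1 ≤ (i:ℝ) := by exact_mod_cast hlt
            have := mul_le_mul_of_nonneg_right hij' hh0.le
            exact le_trans (min_le_left _ _) (le_trans (by linarith) (le_max_right _ _))
        calc ∑ k ∈ Finset.range N,
              ∫⁻ t in Ioo (T - h - ((k:ℝ) + 1) * h) (T - ((k:ℝ) + 1) * h), (‖f t‖₊ : ℝ≥0∞) ^ p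
            = ∫⁻ t in ⋃ k ∈ Finset.range N,
                Ioo (T - h - ((k:ℝ) + 1) * h) (T - ((k:ℝ) + 1) * h), (‖f t‖₊ : ℝ≥0∞) ^ p :=
              (lintegral_biUnion_finset hdisj (fun k _ => measurableSet_Ioo) _).symm
          _ ≤ ∫⁻ t in Ioo 0 T, (‖f t‖₊ : ℝ≥0∞) ^ p := by
              refine lintegral_mono_set (iUnion₂_subset fun k hk => ?_)
              rw [Finset.mem_range] at hk
              have hkN : (k:ℝ) + 1 ≤ N := by exact_mod_cast Nat.succ_le_of_lt hk
              have hk0 : (0:ℝ) ≤ k := Nat.cast_nonneg k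
              have hmul := mul_le_mul_of_nonneg_right hkN hh0.le
              have hpos := mul_pos (show (0:ℝ) < (k:ℝ) + 1 by positivity) hh0
              rintro t ⟨ht1, ht2⟩
              exact ⟨by linarith, by linarith⟩
          _ ≤ ENNReal.ofReal M' := hM f hf
      obtain ⟨k, hkN, hak⟩ := ebz_pigeon hNpos _ ENNReal.ofReal_ne_top hsum
      set rr : ℝ := ((k:ℝ) + 1) * h with hrrdef
      have hk1N : (k:ℝ) + 1 ≤ N := by exact_mod_cast Nat.succ_le_of_lt hkN
      have hk0 : (0:ℝ) ≤ k := Nat.cast_nonneg k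
      have hmul := mul_le_mul_of_nonneg_right hk1N hh0.le
      have hrr0 : 0 < rr := by rw [hrrdef]; positivity
      have hrrδ₁ : rr < δ₁ := by rw [hrrdef]; linarith
      have hrrh : rr + h ≤ T := by rw [hrrdef]; linarith
      have hshift : ∫⁻ t in Ioo (T - h) T, (‖f t‖₊ : ℝ≥0∞) ^ p =
          ∫⁻ t in Ioo (T - h - rr) (T - rr), (‖f (t + rr)‖₊ : ℝ≥0∞) ^ p := by
        rw [ebz_shift_Ioo (fun t => (‖f t‖₊ : ℝ≥0∞) ^ p) rr (T - h - rr) (T - rr)]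
        congr 1 <;> ring
      have hb2 : ∫⁻ t in Ioo (T - h - rr) (T - rr), (‖f (t + rr) - f t‖₊ : ℝ≥0∞) ^ p
          < ENNReal.ofReal (ε / (4 * r)) := by
        refine lt_of_le_of_lt (lintegral_mono_set ?_) (hδ₁ rr hrr0 hrrδ₁ f hf)
        exact Ioo_subset_Ioo (by linarith) le_rfl
      have hb3 : ∫⁻ t in Ioo (T - h - rr) (T - rr), (‖f t‖₊ : ℝ≥0∞) ^ p
          ≤ ENNReal.ofReal M' / (N : ℝ≥0∞) := hak
      have hmono : ∫⁻ t in Ioo (T - h) T, (‖f t‖₊ : ℝ≥0∞) ^ p ≤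
          (2:ℝ≥0∞) ^ (p - 1) *
            ((∫⁻ t in Ioo (T - h - rr) (T - rr), (‖f (t + rr) - f t‖₊ : ℝ≥0∞) ^ p) +
              ∫⁻ t in Ioo (T - h - rr) (T - rr), (‖f t‖₊ : ℝ≥0∞) ^ p) := by
        rw [hshift]
        have step1 : ∫⁻ t in Ioo (T - h - rr) (T - rr), (‖f (t + rr)‖₊ : ℝ≥0∞) ^ p ≤
            ∫⁻ t in Ioo (T - h - rr) (T - rr), (2:ℝ≥0∞) ^ (p - 1) *
              ((‖f (t + rr) - f t‖₊ : ℝ≥0∞) ^ p + (‖f t‖₊ : ℝ≥0∞) ^ p) := by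
          refine lintegral_mono fun t => ?_
          exact ebz_ptwise hp (f (t + rr)) (f t)
        rw [lintegral_const_mul' _ _ (by rw [hc]; exact ENNReal.ofReal_ne_top)] at step1
        refine step1.trans (le_of_eq ?_)
        refine congrArg (fun z => (2:ℝ≥0∞) ^ (p - 1) * z) ?_
        have hftr : AEStronglyMeasurable (fun t => f (t + rr)) volume :=
          hfae.comp_quasiMeasurePreserving
            (measurePreserving_add_right volume rr).quasiMeasurePreserving
        have hu : AEMeasurable (fun t => (‖f (t + rr) - f t‖₊ : ℝ≥0∞) ^ p) volume :=
          (hftr.sub hfae).enorm.pow_const p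
        exact lintegral_add_left' hu.restrict _
      refine hmono.trans_lt (lt_of_lt_of_le ?_ hfinal)
      rw [hc]
      exact (ENNReal.mul_lt_mul_iff_right (ENNReal.ofReal_pos.2 hrpos).ne' ENNReal.ofReal_ne_top).2
        (ENNReal.add_lt_add_of_lt_of_le (ne_top_of_le_ne_top hdivne hb3) hb2 hb3)
  refine ⟨key1, ?_⟩
  intro ε hε
  have hε3 : 0 < ε / 3 := by linarith
  obtain ⟨δ₂, hδ₂pos, hδ₂⟩ := key1 (ε / 3) hε3
  obtain ⟨δ₃, hδ₃pos, hδ₃⟩ := hcont (ε / 3) hε3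
  refine ⟨min (min δ₂ δ₃) T, by positivity, ?_⟩
  intro h hhabs f hf
  have hposcase : ∀ h' : ℝ, 0 < h' → h' < min (min δ₂ δ₃) T →
      ∫⁻ t, (‖f (t + h') - f t‖₊ : ℝ≥0∞) ^ p < ENNReal.ofReal ε := by
    intro h' hh'0 hh'δ
    have hh'δ₂ : h' < δ₂ := lt_of_lt_of_le hh'δ (le_trans (min_le_left _ _) (min_le_left _ _))
    have hh'δ₃ : h' < δ₃ := lt_of_lt_of_le hh'δ (le_trans (min_le_left _ _) (min_le_right _ _))
    have hh'T : h' < T := lt_of_lt_of_le hh'δ (min_le_right _ _)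
    obtain ⟨hδ₂l, hδ₂r⟩ := hδ₂ h' hh'0 hh'δ₂ f hf
    set w : ℝ → ℝ≥0∞ := fun t => (‖f (t + h') - f t‖₊ : ℝ≥0∞) ^ p with hwdef
    have hw0 : ∀ t, t ∉ Ioo (-h') T → w t = 0 := by
      intro t ht
      have ht' : t ≤ -h' ∨ T ≤ t := by
        by_contra hcon
        push_neg at hcon
        exact ht ⟨hcon.1, hcon.2⟩
      have h1 : f t = 0 := by
        refine hzero f hf t fun hmem => ?_
        rcases hmem with ⟨hm1, hm2⟩
        rcases ht' with h' | h' <;> linarith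
      have h2 : f (t + h') = 0 := by
        refine hzero f hf _ fun hmem => ?_
        rcases hmem with ⟨hm1, hm2⟩
        rcases ht' with hx | hx <;> linarith
      simp [hwdef, h1, h2, ENNReal.zero_rpow_of_pos hp0]
    have hw : ∫⁻ t, w t = ∫⁻ t in Ioo (-h') T, w t := by
      rw [← lintegral_indicator measurableSet_Ioo]
      congr 1
      funext t
      by_cases ht : t ∈ Ioo (-h') T
      · rw [indicator_of_mem ht]
      · rw [indicator_of_notMem ht, hw0 t ht]
    have hsub : Ioo (-h') T ⊆ Ioo (-h') 0 ∪ (Ico 0 (T - h') ∪ Ico (T - h') T) := by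
      rintro t ⟨ht1, ht2⟩
      rcases lt_or_ge t 0 with h0 | h0
      · exact Or.inl ⟨ht1, h0⟩
      rcases lt_or_ge t (T - h') with h1 | h1
      · exact Or.inr (Or.inl ⟨h0, h1⟩)
      · exact Or.inr (Or.inr ⟨h1, ht2⟩)
    have hI1 : ∫⁻ t in Ioo (-h') 0, w t < ENNReal.ofReal (ε / 3) := by
      have he : ∫⁻ t in Ioo (-h') 0, w t = ∫⁻ t in Ioo (-h') 0, (‖f (t + h')‖₊ : ℝ≥0∞) ^ p := by
        refine setLIntegral_congr_fun measurableSet_Ioo (fun t ht => ?_)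
        rcases ht with ⟨ht1, ht2⟩
        have : f t = 0 := hzero f hf t (by rintro ⟨hm1, hm2⟩; linarith)
        simp [hwdef, this]
      rw [he, ebz_shift_Ioo (fun t => (‖f t‖₊ : ℝ≥0∞) ^ p) h' (-h') 0]
      rw [neg_add_cancel, zero_add]
      exact hδ₂l
    have hI2 : ∫⁻ t in Ico 0 (T - h'), w t < ENNReal.ofReal (ε / 3) := by
      have he : ∫⁻ t in Ico 0 (T - h'), w t = ∫⁻ t in Ioo 0 (T - h'), w t :=
        (setLIntegral_congr (Ioo_ae_eq_Ico (μ := volume) (a := 0) (b := T - h'))).symm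
      rw [he]
      exact hδ₃ h' hh'0 hh'δ₃ f hf
    have hI3 : ∫⁻ t in Ico (T - h') T, w t < ENNReal.ofReal (ε / 3) := by
      have he : ∫⁻ t in Ico (T - h') T, w t = ∫⁻ t in Ioo (T - h') T, w t :=
        (setLIntegral_congr (Ioo_ae_eq_Ico (μ := volume) (a := T - h') (b := T))).symm
      have he2 : ∫⁻ t in Ioo (T - h') T, w t = ∫⁻ t in Ioo (T - h') T, (‖f t‖₊ : ℝ≥0∞) ^ p := by
        refine setLIntegral_congr_fun measurableSet_Ioo (fun t ht => ?_)
        rcases ht with ⟨ht1, ht2⟩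
        have : f (t + h') = 0 := hzero f hf _ (by rintro ⟨hm1, hm2⟩; linarith)
        simp [hwdef, this]
      rw [he, he2]
      exact hδ₂r
    calc ∫⁻ t, w t = ∫⁻ t in Ioo (-h') T, w t := hw
      _ ≤ ∫⁻ t in Ioo (-h') 0 ∪ (Ico 0 (T - h') ∪ Ico (T - h') T), w t := lintegral_mono_set hsub
      _ ≤ (∫⁻ t in Ioo (-h') 0, w t) + ∫⁻ t in Ico 0 (T - h') ∪ Ico (T - h') T, w t :=
          lintegral_union_le _ _ _
      _ ≤ (∫⁻ t in Ioo (-h') 0, w t) +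
          ((∫⁻ t in Ico 0 (T - h'), w t) + ∫⁻ t in Ico (T - h') T, w t) := by
          gcongr
          exact lintegral_union_le _ _ _
      _ < ENNReal.ofReal (ε / 3) + (ENNReal.ofReal (ε / 3) + ENNReal.ofReal (ε / 3)) :=
          ENNReal.add_lt_add hI1 (ENNReal.add_lt_add hI2 hI3)
      _ = ENNReal.ofReal ε := by
          rw [← ENNReal.ofReal_add hε3.le hε3.le, ← ENNReal.ofReal_add hε3.le (by linarith)]
          congr 1
          ring
  rcases lt_trichotomy h 0 with hneg | hzero' | hpos
  · have heq : ∫⁻ t, (‖f (t + h) - f t‖₊ : ℝ≥0∞) ^ p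
        = ∫⁻ t, (‖f (t + -h) - f t‖₊ : ℝ≥0∞) ^ p := by
      calc ∫⁻ t, (‖f (t + h) - f t‖₊ : ℝ≥0∞) ^ p
          = ∫⁻ t, (‖f ((t + -h) + h) - f (t + -h)‖₊ : ℝ≥0∞) ^ p :=
            (lintegral_add_right_eq_self (fun t => (‖f (t + h) - f t‖₊ : ℝ≥0∞) ^ p) (-h)).symm
        _ = ∫⁻ t, (‖f (t + -h) - f t‖₊ : ℝ≥0∞) ^ p := by
            congr 1
            funext t
            rw [neg_add_cancel_right, ebz_nnnorm_rev]
    rw [heq]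
    exact hposcase (-h) (neg_pos.2 hneg) (by rwa [abs_of_neg hneg] at hhabs)
  · subst hzero'
    simp only [add_zero, sub_self, nnnorm_zero, ENNReal.coe_zero,
      ENNReal.zero_rpow_of_pos hp0, lintegral_zero]
    exact ENNReal.ofReal_pos.2 hε
  · exact hposcase h hpos (by rwa [abs_of_pos hpos] at hhabs)
end

section
/- Let F ⊂ L¹(0,T; ℝ) consist of nonnegative functions, and suppose there exists ε > 0 such that for every h > 0 there is f ∈ F with ∫_0^h f dt ≥ ε. If F is L¹-equicontinuous on (0,T) (∫_0^{T−h}|f(t+h) − f(t)| dt → 0 as h → 0⁺ uniformly in F), then F is unbounded in L¹(0,T): sup_{f∈F} ∫_0^T f dt = ∞. -/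
open MeasureTheory Set
open scoped ENNReal NNReal

lemma shift_lintegral (g : ℝ → ℝ≥0∞) (a h : ℝ) :
    ∫⁻ t in Ioo 0 h, g (t + a) = ∫⁻ t in Ioo a (a + h), g t := by
  rw [← lintegral_indicator measurableSet_Ioo, ← lintegral_indicator measurableSet_Ioo,
    ← lintegral_add_right_eq_self (fun t => (Ioo a (a+h)).indicator g t) a]
  congr 1; funext t
  have : t + a ∈ Ioo a (a + h) ↔ t ∈ Ioo 0 h := by
    simp only [mem_Ioo]; constructor <;> intro ⟨h1,h2⟩ <;> constructor <;> linarith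
  simp only [indicator_apply]
  rw [if_congr this rfl rfl]

/-- If a family of nonnegative functions in `L¹(0,T)` is `L¹`-equicontinuous on `(0,T)`
but has mass at least `ε` arbitrarily close to the left endpoint, then it is unbounded
in `L¹(0,T)`. -/
theorem unbounded_of_mass_near_zero
    (T : ℝ) (hT : 0 < T)
    (F : Set (ℝ → ℝ))
    (hmeas : ∀ f ∈ F, Measurable f)
    (hnonneg : ∀ f ∈ F, ∀ t : ℝ, 0 ≤ f t)
    (ε : ℝ) (hε : 0 < ε)
    (hmass : ∀ h : ℝ, 0 < h → h < T → ∃ f ∈ F,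
      ENNReal.ofReal ε ≤ ∫⁻ t in Ioo 0 h, ENNReal.ofReal (f t))
    (hcont : ∀ η > (0:ℝ), ∃ δ > (0:ℝ), ∀ h : ℝ, 0 < h → h < δ → ∀ f ∈ F,
      ∫⁻ t in Ioo 0 (T - h), ENNReal.ofReal |f (t + h) - f t| < ENNReal.ofReal η) :
    ∀ C : ℝ, ∃ f ∈ F, ENNReal.ofReal C ≤ ∫⁻ t in Ioo 0 T, ENNReal.ofReal (f t) := by
  intro C
  rcases le_or_gt C 0 with hC | hC
  · obtain ⟨f, hf, hfm⟩ := hmass (T/2) (by linarith) (by linarith)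
    exact ⟨f, hf, by simp [ENNReal.ofReal_eq_zero.2 hC]⟩
  -- choose n
  set n : ℕ := ⌈2 * C / ε⌉₊ + 1 with hn
  have hn1 : 1 ≤ n := Nat.le_add_left 1 _
  have hnpos : (0:ℝ) < n := by positivity
  have hCn : C ≤ n * ε / 2 := by
    have h1 : 2 * C / ε ≤ (n:ℝ) := le_trans (Nat.le_ceil _) (by exact_mod_cast Nat.le_succ _)
    rw [div_le_iff₀ hε] at h1
    linarith
  -- choose η and δ
  set η : ℝ := ε / (2 * n) with hη
  have hηpos : 0 < η := by positivity
  obtain ⟨δ, hδpos, hδ⟩ := hcont η hηpos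
  -- choose h
  set h : ℝ := min (δ / 2) (T / (n + 1)) with hh
  have hhpos : 0 < h := lt_min (by linarith) (by positivity)
  have hhδ : h < δ := lt_of_le_of_lt (min_le_left _ _) (by linarith)
  have hhT : (n + 1 : ℝ) * h ≤ T := by
    calc (n+1:ℝ) * h ≤ (n+1) * (T / (n+1)) :=
          mul_le_mul_of_nonneg_left (min_le_right _ _) (by positivity)
      _ = T := by field_simp
  have hhT' : h < T := by nlinarith
  -- get f
  obtain ⟨f, hfF, hfmass⟩ := hmass h hhpos hhT'
  refine ⟨f, hfF, ?_⟩
  have hfm : Measurable f := hmeas f hfF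
  set g : ℝ → ℝ≥0∞ := fun t => ENNReal.ofReal (f t) with hg
  have hgm : Measurable g := hfm.ennreal_ofReal
  set g2 : ℝ → ℝ≥0∞ := fun s => ENNReal.ofReal |f (s + h) - f s| with hg2
  have hDstep : ∫⁻ t in Ioo 0 (T - h), g2 t ≤ ENNReal.ofReal η :=
    (hδ h hhpos hhδ f hfF).le
  set D : ℝ≥0∞ := ENNReal.ofReal η with hD
  -- block estimate
  have hblock : ∀ k : ℕ, k < n →
      ENNReal.ofReal ε ≤ (∫⁻ t in Ioo ((k:ℝ)*h) ((k:ℝ)*h + h), g t) + (n : ℝ≥0∞) * D := by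
    have key : ∀ k : ℕ, k < n →
        ENNReal.ofReal ε ≤ (∫⁻ t in Ioo 0 h, g (t + (k:ℝ)*h)) + (k : ℝ≥0∞) * D := by
      intro k
      induction k with
      | zero => intro _; simpa using hfmass
      | succ k ih =>
        intro hk
        simp only [Nat.cast_add, Nat.cast_one]
        have hk' : k < n := Nat.lt_of_succ_lt hk
        have step : (∫⁻ t in Ioo 0 h, g (t + (k:ℝ)*h)) ≤
            (∫⁻ t in Ioo 0 h, g (t + ((k:ℕ)+1:ℝ)*h)) + D := by
          have hpt : ∀ t : ℝ, g (t + (k:ℝ)*h) ≤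
              g (t + ((k:ℕ)+1:ℝ)*h) + g2 (t + (k:ℝ)*h) := by
            intro t
            have e1 : t + (k:ℝ)*h + h = t + ((k:ℕ)+1:ℝ)*h := by ring
            simp only [hg, hg2, e1]
            rw [← ENNReal.ofReal_add (hnonneg f hfF _) (abs_nonneg _)]
            exact ENNReal.ofReal_le_ofReal (by
              cases abs_cases (f (t + ((k:ℕ)+1:ℝ)*h) - f (t + (k:ℝ)*h)) with
              | inl hc => linarith [hc.1]
              | inr hc => linarith [hc.1])
          calc (∫⁻ t in Ioo 0 h, g (t + (k:ℝ)*h))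
              ≤ ∫⁻ t in Ioo 0 h, (g (t + ((k:ℕ)+1:ℝ)*h) + g2 (t + (k:ℝ)*h)) :=
                lintegral_mono fun t => hpt t
            _ = (∫⁻ t in Ioo 0 h, g (t + ((k:ℕ)+1:ℝ)*h)) +
                ∫⁻ t in Ioo 0 h, g2 (t + (k:ℝ)*h) :=
                lintegral_add_left (hgm.comp (measurable_id.add_const _)) _
            _ ≤ (∫⁻ t in Ioo 0 h, g (t + ((k:ℕ)+1:ℝ)*h)) + D := by
                gcongr
                rw [shift_lintegral g2 ((k:ℝ)*h) h]
                refine le_trans (lintegral_mono_set ?_) hDstep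
                apply Ioo_subset_Ioo (by positivity)
                have hk2 : (k:ℝ) + 2 ≤ (n:ℝ) + 1 := by
                  have : k + 2 ≤ n + 1 := by omega
                  exact_mod_cast this
                nlinarith
        calc ENNReal.ofReal ε ≤ (∫⁻ t in Ioo 0 h, g (t + (k:ℝ)*h)) + (k : ℝ≥0∞) * D :=
              ih hk'
          _ ≤ ((∫⁻ t in Ioo 0 h, g (t + ((k:ℕ)+1:ℝ)*h)) + D) + (k : ℝ≥0∞) * D := by
              gcongr
          _ = (∫⁻ t in Ioo 0 h, g (t + ((k:ℕ)+1:ℝ)*h)) + ((k:ℕ)+1 : ℝ≥0∞) * D := by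
              ring
    intro k hk
    calc ENNReal.ofReal ε ≤ (∫⁻ t in Ioo 0 h, g (t + (k:ℝ)*h)) + (k : ℝ≥0∞) * D :=
          key k hk
      _ ≤ (∫⁻ t in Ioo 0 h, g (t + (k:ℝ)*h)) + (n : ℝ≥0∞) * D := by
          gcongr
      _ = (∫⁻ t in Ioo ((k:ℝ)*h) ((k:ℝ)*h + h), g t) + (n : ℝ≥0∞) * D := by
          rw [shift_lintegral]
  -- sum estimate
  have hsum : ∀ m : ℕ, m ≤ n →
      (m : ℝ≥0∞) * ENNReal.ofReal ε ≤
        (∫⁻ t in Ioo 0 ((m:ℝ)*h), g t) + (m : ℝ≥0∞) * ((n : ℝ≥0∞) * D) := by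
    intro m
    induction m with
    | zero => simp
    | succ m ih =>
      intro hm
      simp only [Nat.cast_add, Nat.cast_one]
      have hm' : m ≤ n := Nat.le_of_succ_le hm
      have hmlt : m < n := hm
      have hunion : (∫⁻ t in Ioo 0 ((m:ℝ)*h), g t) +
          (∫⁻ t in Ioo ((m:ℝ)*h) ((m:ℝ)*h + h), g t) ≤
          ∫⁻ t in Ioo 0 (((m:ℕ)+1:ℝ)*h), g t := by
        rw [← lintegral_union measurableSet_Ioo]
        · apply lintegral_mono_set
          intro x hx
          simp only [mem_union, mem_Ioo] at hx ⊢
          rcases hx with ⟨h1,h2⟩ | ⟨h1,h2⟩ <;> constructor <;> nlinarith [Nat.cast_nonneg (α := ℝ) m]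
        · rw [Set.disjoint_iff]
          rintro x ⟨⟨_, h2⟩, ⟨h3, _⟩⟩
          exact absurd h2 (not_lt.2 h3.le)
      calc ((m:ℕ) + 1 : ℝ≥0∞) * ENNReal.ofReal ε
          = (m : ℝ≥0∞) * ENNReal.ofReal ε + ENNReal.ofReal ε := by push_cast; ring
        _ ≤ ((∫⁻ t in Ioo 0 ((m:ℝ)*h), g t) + (m : ℝ≥0∞) * ((n : ℝ≥0∞) * D)) +
            ((∫⁻ t in Ioo ((m:ℝ)*h) ((m:ℝ)*h + h), g t) + (n : ℝ≥0∞) * D) :=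
            add_le_add (ih hm') (hblock m hmlt)
        _ = ((∫⁻ t in Ioo 0 ((m:ℝ)*h), g t) +
              (∫⁻ t in Ioo ((m:ℝ)*h) ((m:ℝ)*h + h), g t)) +
            ((m:ℕ) + 1 : ℝ≥0∞) * ((n : ℝ≥0∞) * D) := by ring
        _ ≤ (∫⁻ t in Ioo 0 (((m:ℕ)+1:ℝ)*h), g t) +
            ((m:ℕ) + 1 : ℝ≥0∞) * ((n : ℝ≥0∞) * D) := by
            gcongr
  -- final arithmetic
  have hfin := hsum n le_rfl
  have hIooT : (∫⁻ t in Ioo 0 ((n:ℝ)*h), g t) ≤ ∫⁻ t in Ioo 0 T, g t := by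
    apply lintegral_mono_set
    apply Ioo_subset_Ioo le_rfl
    nlinarith
  have hmain : ENNReal.ofReal ((n:ℝ) * ε) ≤
      (∫⁻ t in Ioo 0 T, g t) + ENNReal.ofReal ((n:ℝ) * (ε/2)) := by
    have e1 : (n : ℝ≥0∞) * ENNReal.ofReal ε = ENNReal.ofReal ((n:ℝ) * ε) := by
      rw [← ENNReal.ofReal_natCast n, ← ENNReal.ofReal_mul (by positivity)]
    have e2 : (n : ℝ≥0∞) * ((n : ℝ≥0∞) * D) = ENNReal.ofReal ((n:ℝ) * (ε/2)) := by
      have : (n:ℝ) * η = ε / 2 := by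
        rw [hη]; field_simp
      rw [hD, ← ENNReal.ofReal_natCast n, ← ENNReal.ofReal_mul (by positivity),
        ← ENNReal.ofReal_mul (by positivity)]
      congr 1
      rw [← this]
    rw [← e1, ← e2]
    exact le_trans hfin (by gcongr)
  have hfinal : ENNReal.ofReal C + ENNReal.ofReal ((n:ℝ) * (ε/2)) ≤
      (∫⁻ t in Ioo 0 T, g t) + ENNReal.ofReal ((n:ℝ) * (ε/2)) := by
    refine le_trans ?_ hmain
    rw [← ENNReal.ofReal_add hC.le (by positivity)]
    apply ENNReal.ofReal_le_ofReal
    linarith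
  exact (ENNReal.add_le_add_iff_right ENNReal.ofReal_ne_top).1 hfinal
end

section
/- There exists a real Banach space B, a cone X ⊂ B with a gauge [·]_X, and a Bochner measurable function f : (0,π) → X such that the function t ↦ [f(t)]_X is not Lebesgue measurable. Concretely: take B = ℂ as a real Banach space, X the closed upper half-plane cone, ψ : (0,π) → (0,1) a non-measurable function, [t·e^{iθ}]_X = t·ψ(θ) for t ≥ 0, θ ∈ (0,π), and f(θ) = e^{iθ}. -/
open MeasureTheory Set
open scoped ENNReal NNReal Real

noncomputable section VitaliAux

/-- The set of rational reals. -/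
def QS : Set ℝ := Set.range ((↑) : ℚ → ℝ)

lemma QS_add {x y : ℝ} (hx : x ∈ QS) (hy : y ∈ QS) : x + y ∈ QS := by
  obtain ⟨a, rfl⟩ := hx; obtain ⟨b, rfl⟩ := hy; exact ⟨a + b, by push_cast; ring⟩

lemma QS_neg {x : ℝ} (hx : x ∈ QS) : -x ∈ QS := by
  obtain ⟨a, rfl⟩ := hx; exact ⟨-a, by push_cast; ring⟩

lemma QS_sub {x y : ℝ} (hx : x ∈ QS) (hy : y ∈ QS) : x - y ∈ QS := by
  simpa [sub_eq_add_neg] using QS_add hx (QS_neg hy)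

def vSetoid : Setoid ℝ where
  r x y := x - y ∈ QS
  iseqv := by
    refine ⟨fun x => ⟨0, by simp⟩, fun {x y} h => ?_, fun {x y z} h1 h2 => ?_⟩
    · simpa using QS_neg h
    · simpa using QS_add h1 h2

lemma vSetoid_r {x y : ℝ} : vSetoid.r x y ↔ x - y ∈ QS := Iff.rfl

/-- Choice of representative + fractional part, shifted into `[1, 2)`. -/
def vfun (x : ℝ) : ℝ := Int.fract (Quotient.out (Quotient.mk vSetoid x)) + 1

/-- A Vitali set inside `[1, 2)`. -/
def V : Set ℝ := Set.range vfun

lemma vfun_mem_Ico (x : ℝ) : vfun x ∈ Ico (1:ℝ) 2 := by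
  constructor
  · have := Int.fract_nonneg (Quotient.out (Quotient.mk vSetoid x)); unfold vfun; linarith
  · have := Int.fract_lt_one (Quotient.out (Quotient.mk vSetoid x)); unfold vfun; linarith

lemma V_subset_Ico : V ⊆ Ico (1:ℝ) 2 := by
  rintro _ ⟨x, rfl⟩; exact vfun_mem_Ico x

lemma vfun_sub_mem (x : ℝ) : vfun x - x ∈ QS := by
  have h1 : Quotient.out (Quotient.mk vSetoid x) - x ∈ QS := by
    have h := Quotient.mk_out (s := vSetoid) x
    exact h
  have h2 : vfun x - Quotient.out (Quotient.mk vSetoid x) ∈ QS := by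
    unfold vfun
    rw [Int.fract]
    refine ⟨1 - ⌊Quotient.out (Quotient.mk vSetoid x)⌋, ?_⟩
    push_cast; ring
  have := QS_add h2 h1
  simpa using this

lemma vfun_eq_of_rat {x y : ℝ} (h : x - y ∈ QS) : vfun x = vfun y := by
  unfold vfun
  rw [Quotient.sound (s := vSetoid) (vSetoid_r.2 h)]

lemma V_unique {a b : ℝ} (ha : a ∈ V) (hb : b ∈ V) (h : a - b ∈ QS) : a = b := by
  obtain ⟨x, rfl⟩ := ha; obtain ⟨y, rfl⟩ := hb
  have hx := vfun_sub_mem x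
  have hy := vfun_sub_mem y
  have hxy : x - y ∈ QS := by
    have := QS_add (QS_sub h hx) hy
    have h2 : vfun x - vfun y - (vfun x - x) + (vfun y - y) = x - y := by ring
    rwa [h2] at this
  exact vfun_eq_of_rat hxy

/-- Index type: rationals in `[-1, 1]`. -/
def QI : Type := {q : ℚ // |q| ≤ 1}

instance : Countable QI := by unfold QI; infer_instance

instance : Infinite QI := by
  refine Infinite.of_injective (fun n : ℕ => (⟨1 / (n + 1), ?_⟩ : QI)) ?_
  · rw [abs_le]
    have h0 : (0:ℚ) ≤ 1 / (n + 1) := by positivity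
    have h1 : (1:ℚ) / (n + 1) ≤ 1 := by
      rw [div_le_one (by positivity)]
      linarith [Nat.cast_nonneg (α := ℚ) n]
    exact ⟨by linarith, h1⟩
  · intro a b hab
    have h : (1 : ℚ) / (a + 1) = 1 / (b + 1) := congrArg Subtype.val hab
    have ha : (a : ℚ) + 1 ≠ 0 := by positivity
    have hb : (b : ℚ) + 1 ≠ 0 := by positivity
    field_simp at h
    exact_mod_cast (by linarith : (a:ℚ) = b)

/-- Translate of a set. -/
def tr (q : ℝ) (A : Set ℝ) : Set ℝ := (fun x => x - q) ⁻¹' A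

lemma mem_tr {q x : ℝ} {A : Set ℝ} : x ∈ tr q A ↔ x - q ∈ A := Iff.rfl

lemma volume_tr (q : ℝ) (A : Set ℝ) : volume (tr q A) = volume A :=
  (measurePreserving_sub_right volume q).measure_preimage_emb
    (MeasurableEquiv.subRight q).measurableEmbedding A

lemma tr_measurableSet {q : ℝ} {A : Set ℝ} (hA : MeasurableSet A) :
    MeasurableSet (tr q A) := (measurable_sub_const q) hA

lemma tr_disjoint {q1 q2 : ℚ} (h : q1 ≠ q2) : Disjoint (tr (q1:ℝ) V) (tr (q2:ℝ) V) := by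
  rw [Set.disjoint_left]
  rintro x hx1 hx2
  rw [mem_tr] at hx1 hx2
  have hq : (x - q1) - (x - q2) ∈ QS := ⟨q2 - q1, by push_cast; ring⟩
  have heq : x - (q1:ℝ) = x - (q2:ℝ) := V_unique hx1 hx2 hq
  have : (q1 : ℝ) = q2 := by linarith
  exact h (by exact_mod_cast this)

lemma tr_subset {q : ℚ} (hq : |q| ≤ 1) : tr (q:ℝ) V ⊆ Icc (0:ℝ) 3 := by
  intro x hx
  rw [mem_tr] at hx
  have h := V_subset_Ico hx
  have hq' : |(q:ℝ)| ≤ 1 := by exact_mod_cast hq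
  rw [abs_le] at hq'
  obtain ⟨h1, h2⟩ := h
  exact ⟨by linarith [hq'.1], by linarith [hq'.2]⟩

lemma cover : Ico (1:ℝ) 2 ⊆ ⋃ i : QI, tr (i.1 : ℝ) V := by
  intro x hx
  obtain ⟨q, hq⟩ := vfun_sub_mem x
  have hv := vfun_mem_Ico x
  have habs : |q| ≤ 1 := by
    have : |(q:ℝ)| ≤ 1 := by
      rw [abs_le]; obtain ⟨a1, a2⟩ := hx; obtain ⟨b1, b2⟩ := hv
      constructor <;> linarith
    exact_mod_cast this
  refine mem_iUnion.2 ⟨⟨-q, by simpa using habs⟩, ?_⟩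
  rw [mem_tr]
  have : x - (((-q : ℚ) : ℝ)) = vfun x := by push_cast; linarith
  rw [this]
  exact ⟨x, rfl⟩

theorem V_not_nullMeasurable : ¬ NullMeasurableSet V (volume : Measure ℝ) := by
  intro hV
  obtain ⟨W, hWV, hWm, hWae⟩ := hV.exists_measurable_subset_ae_eq
  set m := volume W with hm
  have h0 : volume {a : ℝ | ¬ (a ∈ W ↔ a ∈ V)} = 0 :=
    ae_iff.1 (Filter.eventuallyEq_set.1 hWae)
  have key : ∀ q : ℝ, tr q W =ᵐ[volume] tr q V := by
    intro q
    rw [Filter.eventuallyEq_set (s := tr q W)]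
    rw [ae_iff]
    have htr : volume (tr q {a : ℝ | ¬ (a ∈ W ↔ a ∈ V)}) = 0 := by
      rw [volume_tr]; exact h0
    refine measure_mono_null (fun x hx => ?_) htr
    rw [mem_tr]
    simpa [mem_tr] using hx
  have hdisj : Pairwise (Function.onFun (AEDisjoint volume) fun i : QI => tr (i.1 : ℝ) W) := by
    intro i j hij
    have h1 : (tr (i.1:ℝ) W ∩ tr (j.1:ℝ) W : Set ℝ) =ᵐ[volume]
        (tr (i.1:ℝ) V ∩ tr (j.1:ℝ) V : Set ℝ) := (key _).inter (key _)
    have h2 : (tr (i.1:ℝ) V ∩ tr (j.1:ℝ) V : Set ℝ) = ∅ :=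
      Set.disjoint_iff_inter_eq_empty.1 (tr_disjoint (fun h => hij (Subtype.ext h)))
    calc volume (tr (i.1:ℝ) W ∩ tr (j.1:ℝ) W) = volume (tr (i.1:ℝ) V ∩ tr (j.1:ℝ) V) :=
          measure_congr h1
      _ = 0 := by rw [h2]; simp
  have hsum : volume (⋃ i : QI, tr (i.1 : ℝ) W) = ∑' _ : QI, m := by
    rw [measure_iUnion₀ hdisj (fun i => (tr_measurableSet hWm).nullMeasurableSet)]
    congr 1
    funext i
    exact volume_tr _ _
  have hUae : (⋃ i : QI, tr (i.1 : ℝ) W) =ᵐ[volume] (⋃ i : QI, tr (i.1 : ℝ) V) :=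
    EventuallyEq.countable_iUnion fun i => key _
  have hUeq : volume (⋃ i : QI, tr (i.1 : ℝ) W) = volume (⋃ i : QI, tr (i.1 : ℝ) V) :=
    measure_congr hUae
  have hupper : volume (⋃ i : QI, tr (i.1 : ℝ) V) ≤ 3 := by
    have hsub : (⋃ i : QI, tr (i.1 : ℝ) V) ⊆ Icc (0:ℝ) 3 := iUnion_subset fun i => tr_subset i.2
    calc volume (⋃ i : QI, tr (i.1 : ℝ) V) ≤ volume (Icc (0:ℝ) 3) := measure_mono hsub
      _ = 3 := by rw [Real.volume_Icc]; norm_num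
  have hlower : 1 ≤ volume (⋃ i : QI, tr (i.1 : ℝ) V) := by
    calc (1:ℝ≥0∞) = volume (Ico (1:ℝ) 2) := by rw [Real.volume_Ico]; norm_num
      _ ≤ volume (⋃ i : QI, tr (i.1 : ℝ) V) := measure_mono cover
  by_cases hm0 : m = 0
  · have hz : volume (⋃ i : QI, tr (i.1 : ℝ) V) = 0 := by
      rw [← hUeq, hsum, hm0, tsum_zero]
    rw [hz] at hlower
    simp at hlower
  · have ht : (∑' _ : QI, m) = ⊤ := ENNReal.tsum_const_eq_top_of_ne_zero hm0
    rw [← hUeq, hsum, ht] at hupper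
    exact (by norm_num : ¬ ((⊤:ℝ≥0∞) ≤ 3)) hupper

open Classical in
/-- The non-measurable "angular weight". -/
def ψfun (θ : ℝ) : ℝ := if θ ∈ V then 1 else 2

lemma ψfun_pos (θ : ℝ) : 0 < ψfun θ := by unfold ψfun; split <;> norm_num

end VitaliAux

/-- There is a gauge on the closed upper half-plane cone `X ⊂ ℂ` (ℂ viewed as a real
Banach space) such that the gauge composed with the Bochner measurable function
`θ ↦ e^{iθ}` on `(0, π)` is not Lebesgue measurable (not even a.e. measurable). -/
theorem gauge_of_bochner_measurable_not_measurable :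
    ∃ g : ℂ → ℝ,
      (∀ a : ℝ, 0 ≤ a → ∀ z ∈ {z : ℂ | 0 ≤ z.im}, a • z ∈ {z : ℂ | 0 ≤ z.im}) ∧
      (∀ z ∈ {z : ℂ | 0 ≤ z.im}, 0 ≤ g z) ∧
      (∀ a : ℝ, 0 ≤ a → ∀ z ∈ {z : ℂ | 0 ≤ z.im}, g (a • z) = a * g z) ∧
      (∀ z ∈ {z : ℂ | 0 ≤ z.im}, (g z = 0 ↔ z = 0)) ∧
      (∀ θ ∈ Ioo (0:ℝ) π, Complex.exp (θ * Complex.I) ∈ {z : ℂ | 0 ≤ z.im}) ∧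
      Measurable (fun θ : ℝ => Complex.exp (θ * Complex.I)) ∧
      ¬ AEMeasurable (fun θ : ℝ => g (Complex.exp (θ * Complex.I)))
          (volume.restrict (Ioo (0:ℝ) π)) := by
  classical
  refine ⟨fun z => ‖z‖ * ψfun (Complex.arg z), ?_, ?_, ?_, ?_, ?_, ?_, ?_⟩
  · intro a ha z hz
    simp only [mem_setOf_eq, Complex.smul_im] at *
    exact mul_nonneg ha hz
  · intro z hz
    have := ψfun_pos (Complex.arg z)
    positivity
  · intro a ha z hz
    show ‖a • z‖ * ψfun (Complex.arg (a • z)) = a * (‖z‖ * ψfun (Complex.arg z))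
    rcases eq_or_lt_of_le ha with h | h
    · subst h; simp
    · have h1 : ‖a • z‖ = a * ‖z‖ := by
        rw [norm_smul, Real.norm_eq_abs, abs_of_pos h]
      have h2 : Complex.arg (a • z) = Complex.arg z := by
        rw [Complex.real_smul]; exact Complex.arg_real_mul z h
      rw [h1, h2]; ring
  · intro z hz
    show ‖z‖ * ψfun (Complex.arg z) = 0 ↔ z = 0
    constructor
    · intro h
      have hp := ψfun_pos (Complex.arg z)
      have habs : ‖z‖ = 0 := by
        rcases mul_eq_zero.1 h with h' | h'
        · exact h'
        · exact absurd h' (ne_of_gt hp)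
      exact norm_eq_zero.1 habs
    · rintro rfl; simp
  · intro θ hθ
    simp only [mem_setOf_eq, Complex.exp_mul_I]
    rw [Complex.add_im, Complex.cos_ofReal_im, Complex.mul_im]
    simp [Complex.sin_ofReal_re, Complex.sin_ofReal_im]
    exact le_of_lt (Real.sin_pos_of_pos_of_lt_pi hθ.1 hθ.2)
  · exact Complex.measurable_exp.comp ((Complex.measurable_ofReal).mul measurable_const)
  · intro hAE
    have heq : ∀ θ ∈ Ioo (0:ℝ) π,
        ‖Complex.exp (θ * Complex.I)‖ *
          ψfun (Complex.arg (Complex.exp (θ * Complex.I))) = ψfun θ := by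
      intro θ hθ
      have habs : ‖Complex.exp (θ * Complex.I)‖ = 1 :=
        Complex.norm_exp_ofReal_mul_I θ
      have harg : Complex.arg (Complex.exp (θ * Complex.I)) = θ := by
        rw [Complex.exp_mul_I]
        exact Complex.arg_cos_add_sin_mul_I ⟨by linarith [hθ.1, Real.pi_pos], hθ.2.le⟩
      rw [habs, harg, one_mul]
    obtain ⟨h', h'm, h'ae⟩ := hAE
    have hIoo : MeasurableSet (Ioo (0:ℝ) π) := measurableSet_Ioo
    rw [Filter.EventuallyEq, ae_restrict_iff' hIoo] at h'ae
    have hVsub : V ⊆ Ioo (0:ℝ) π := by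
      intro x hx
      have h := V_subset_Ico hx
      have : (2:ℝ) < π := by linarith [Real.pi_gt_three]
      exact ⟨by linarith [h.1], by linarith [h.2.le]⟩
    have hVeq : V = {θ | θ ∈ Ioo (0:ℝ) π ∧
        ‖Complex.exp (θ * Complex.I)‖ *
          ψfun (Complex.arg (Complex.exp (θ * Complex.I))) = 1} := by
      ext θ
      constructor
      · intro hθ
        refine ⟨hVsub hθ, ?_⟩
        rw [heq θ (hVsub hθ)]
        simp [ψfun, hθ]
      · rintro ⟨hθ1, hθ2⟩
        rw [heq θ hθ1] at hθ2
        by_contra hc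
        simp [ψfun, hc] at hθ2
    have hWm : MeasurableSet {θ | θ ∈ Ioo (0:ℝ) π ∧ h' θ = 1} :=
      hIoo.inter (h'm (measurableSet_singleton 1))
    have hae : V =ᵐ[volume] {θ | θ ∈ Ioo (0:ℝ) π ∧ h' θ = 1} := by
      rw [Filter.eventuallyEq_set]
      filter_upwards [h'ae] with θ hθ
      rw [hVeq]
      simp only [mem_setOf_eq]
      constructor
      · rintro ⟨h1, h2⟩; exact ⟨h1, by rw [← hθ h1]; exact h2⟩
      · rintro ⟨h1, h2⟩; exact ⟨h1, by rw [hθ h1]; exact h2⟩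
    exact V_not_nullMeasurable (hWm.nullMeasurableSet.congr hae.symm)
end
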